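/- arXiv:math/0309032 — 5 statements merged into one kernel-verified Lean document; each statement's English description precedes it below -/
import Mathlib

section
/- Let u, b be nonnegative continuous functions on [α, β], k(t,s) nonnegative continuous for α ≤ s ≤ t ≤ β, h(t,s,σ) nonnegative continuous for α ≤ σ ≤ s ≤ t ≤ β, and a ≥ 0 a constant. If u(t) ≤ a + ∫_α^t b(s)u(s) ds + ∫_α^t ∫_α^s k(s,τ)u(τ) dτ ds + ∫_α^t ∫_α^s ∫_α^τ h(s,τ,σ)u(σ) dσ dτ ds for all t ∈ [α, β], then u(t) ≤ a·exp(∫_α^t b(s) ds + ∫_α^t ∫_α^s k(s,τ) dτ ds + ∫_α^t ∫_α^s ∫_α^τ h(s,τ,σ) dσ dτ ds) for all t ∈ [α, β]. -/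
open Real Set intervalIntegral
set_option maxHeartbeats 1000000

/-- Auxiliary global version of Bykov's inequality. -/
theorem bykov_aux
    (α β a : ℝ) (hαβ : α ≤ β) (ha : 0 ≤ a)
    (u b : ℝ → ℝ) (k : ℝ → ℝ → ℝ) (h : ℝ → ℝ → ℝ → ℝ)
    (hu : Continuous u) (hb : Continuous b)
    (hk : Continuous (fun p : ℝ × ℝ => k p.1 p.2))
    (hh : Continuous (fun p : ℝ × ℝ × ℝ => h p.1 p.2.1 p.2.2))
    (hunn : ∀ t, 0 ≤ u t) (hbnn : ∀ t, 0 ≤ b t)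
    (hknn : ∀ t s, 0 ≤ k t s) (hhnn : ∀ t s σ, 0 ≤ h t s σ)
    (hbound : ∀ t ∈ Icc α β,
      u t ≤ a + (∫ s in α..t, b s * u s)
        + (∫ s in α..t, ∫ τ in α..s, k s τ * u τ)
        + (∫ s in α..t, ∫ τ in α..s, ∫ σ in α..τ, h s τ σ * u σ)) :
    ∀ t ∈ Icc α β,
      u t ≤ a * Real.exp ((∫ s in α..t, b s)
        + (∫ s in α..t, ∫ τ in α..s, k s τ)
        + (∫ s in α..t, ∫ τ in α..s, ∫ σ in α..τ, h s τ σ)) := by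
  -- continuity of the iterated integrals
  have hKu : Continuous (fun s => ∫ τ in α..s, k s τ * u τ) := by
    apply intervalIntegral.continuous_parametric_intervalIntegral_of_continuous
      (f := fun s τ => k s τ * u τ) _ continuous_id
    exact hk.mul (hu.comp continuous_snd)
  have hHinu : Continuous (fun p : ℝ × ℝ => ∫ σ in α..p.2, h p.1 p.2 σ * u σ) := by
    apply intervalIntegral.continuous_parametric_intervalIntegral_of_continuous
      (f := fun p : ℝ × ℝ => fun σ => h p.1 p.2 σ * u σ) _ continuous_snd
    have : Continuous (fun q : (ℝ × ℝ) × ℝ => h q.1.1 q.1.2 q.2 * u q.2) := by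
      have := hh.comp (f := fun q : (ℝ × ℝ) × ℝ => (q.1.1, q.1.2, q.2)) (by fun_prop)
      exact this.mul (hu.comp continuous_snd)
    exact this
  have hHu : Continuous (fun s => ∫ τ in α..s, ∫ σ in α..τ, h s τ σ * u σ) := by
    apply intervalIntegral.continuous_parametric_intervalIntegral_of_continuous
      (f := fun s τ => ∫ σ in α..τ, h s τ σ * u σ) _ continuous_id
    exact hHinu
  have hK1 : Continuous (fun s => ∫ τ in α..s, k s τ) := by
    apply intervalIntegral.continuous_parametric_intervalIntegral_of_continuous
      (f := fun s τ => k s τ) _ continuous_id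
    exact hk
  have hHin1 : Continuous (fun p : ℝ × ℝ => ∫ σ in α..p.2, h p.1 p.2 σ) := by
    apply intervalIntegral.continuous_parametric_intervalIntegral_of_continuous
      (f := fun p : ℝ × ℝ => fun σ => h p.1 p.2 σ) _ continuous_snd
    exact hh.comp (f := fun q : (ℝ × ℝ) × ℝ => (q.1.1, q.1.2, q.2)) (by fun_prop)
  have hH1 : Continuous (fun s => ∫ τ in α..s, ∫ σ in α..τ, h s τ σ) := by
    apply intervalIntegral.continuous_parametric_intervalIntegral_of_continuous
      (f := fun s τ => ∫ σ in α..τ, h s τ σ) _ continuous_id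
    exact hHin1
  set g : ℝ → ℝ := fun s => b s * u s + (∫ τ in α..s, k s τ * u τ)
      + (∫ τ in α..s, ∫ σ in α..τ, h s τ σ * u σ) with hg_def
  set B : ℝ → ℝ := fun s => b s + (∫ τ in α..s, k s τ)
      + (∫ τ in α..s, ∫ σ in α..τ, h s τ σ) with hB_def
  have hg : Continuous g := ((hb.mul hu).add hKu).add hHu
  have hB : Continuous B := (hb.add hK1).add hH1
  set v : ℝ → ℝ := fun t => a + ∫ s in α..t, g s with hv_def
  set E : ℝ → ℝ := fun t => ∫ s in α..t, B s with hE_def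
  have hv' : ∀ t, HasDerivAt v (g t) t := fun t =>
    ((hg.integral_hasStrictDerivAt α t).hasDerivAt).const_add a
  have hE' : ∀ t, HasDerivAt E (B t) t := fun t =>
    (hB.integral_hasStrictDerivAt α t).hasDerivAt
  have hvc : Continuous v := by
    rw [continuous_iff_continuousAt]; exact fun t => (hv' t).continuousAt
  have hEc : Continuous E := by
    rw [continuous_iff_continuousAt]; exact fun t => (hE' t).continuousAt
  -- v equals the RHS of hbound
  have hv_eq : ∀ t, v t = a + (∫ s in α..t, b s * u s)
      + (∫ s in α..t, ∫ τ in α..s, k s τ * u τ)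
      + (∫ s in α..t, ∫ τ in α..s, ∫ σ in α..τ, h s τ σ * u σ) := by
    intro t
    have h1 : IntervalIntegrable (fun s => b s * u s) MeasureTheory.volume α t :=
      (hb.mul hu).intervalIntegrable _ _
    have h2 : IntervalIntegrable (fun s => ∫ τ in α..s, k s τ * u τ)
        MeasureTheory.volume α t := hKu.intervalIntegrable _ _
    have h3 : IntervalIntegrable (fun s => ∫ τ in α..s, ∫ σ in α..τ, h s τ σ * u σ)
        MeasureTheory.volume α t := hHu.intervalIntegrable _ _
    simp only [hv_def, hg_def]
    rw [intervalIntegral.integral_add (h1.add h2) h3, intervalIntegral.integral_add h1 h2]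
    ring
  have hE_eq : ∀ t, E t = (∫ s in α..t, b s)
      + (∫ s in α..t, ∫ τ in α..s, k s τ)
      + (∫ s in α..t, ∫ τ in α..s, ∫ σ in α..τ, h s τ σ) := by
    intro t
    have h1 : IntervalIntegrable b MeasureTheory.volume α t := hb.intervalIntegrable _ _
    have h2 : IntervalIntegrable (fun s => ∫ τ in α..s, k s τ)
        MeasureTheory.volume α t := hK1.intervalIntegrable _ _
    have h3 : IntervalIntegrable (fun s => ∫ τ in α..s, ∫ σ in α..τ, h s τ σ)
        MeasureTheory.volume α t := hH1.intervalIntegrable _ _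
    simp only [hE_def, hB_def]
    rw [intervalIntegral.integral_add (h1.add h2) h3, intervalIntegral.integral_add h1 h2]
  have huv : ∀ t ∈ Icc α β, u t ≤ v t := by
    intro t ht; rw [hv_eq t]; exact hbound t ht
  -- g is nonneg for s ≥ α
  have hgnn : ∀ s, α ≤ s → 0 ≤ g s := by
    intro s hs
    have l1 : 0 ≤ b s * u s := mul_nonneg (hbnn s) (hunn s)
    have l2 : (0:ℝ) ≤ ∫ τ in α..s, k s τ * u τ :=
      intervalIntegral.integral_nonneg hs (fun τ _ => mul_nonneg (hknn s τ) (hunn τ))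
    have l3 : (0:ℝ) ≤ ∫ τ in α..s, ∫ σ in α..τ, h s τ σ * u σ := by
      apply intervalIntegral.integral_nonneg hs
      intro τ hτ
      exact intervalIntegral.integral_nonneg hτ.1
        (fun σ _ => mul_nonneg (hhnn s τ σ) (hunn σ))
    simp only [hg_def]; linarith
  -- v is monotone on [α, β]
  have hvmono : MonotoneOn v (Icc α β) := by
    apply monotoneOn_of_deriv_nonneg (convex_Icc α β) hvc.continuousOn
      (fun x _ => (hv' x).differentiableAt.differentiableWithinAt)
    intro x hx
    rw [interior_Icc] at hx
    rw [(hv' x).deriv]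
    exact hgnn x hx.1.le
  have hva : v α = a := by simp [hv_def]
  have hvnn : ∀ t ∈ Icc α β, 0 ≤ v t := by
    intro t ht
    have := hvmono (left_mem_Icc.2 hαβ) ht ht.1
    rw [hva] at this; linarith
  -- key inequality g t ≤ B t * v t on [α, β]
  have hkey : ∀ t ∈ Icc α β, g t ≤ B t * v t := by
    intro t ht
    have hvt : 0 ≤ v t := hvnn t ht
    have huvt : ∀ τ ∈ Icc α t, u τ ≤ v t := by
      intro τ hτ
      have hτm : τ ∈ Icc α β := ⟨hτ.1, hτ.2.trans ht.2⟩
      exact (huv τ hτm).trans (hvmono hτm ht hτ.2)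
    have l1 : b t * u t ≤ b t * v t :=
      mul_le_mul_of_nonneg_left (huvt t ⟨ht.1, le_rfl⟩) (hbnn t)
    have hkt : Continuous fun τ : ℝ => k t τ :=
      show Continuous ((fun p : ℝ × ℝ => k p.1 p.2) ∘ (fun τ => (t, τ))) from
        hk.comp (continuous_const.prodMk continuous_id)
    have l2 : (∫ τ in α..t, k t τ * u τ) ≤ (∫ τ in α..t, k t τ) * v t := by
      rw [← intervalIntegral.integral_mul_const]
      apply intervalIntegral.integral_mono_on ht.1
        ((hkt.mul hu).intervalIntegrable _ _)
        ((hkt.mul continuous_const).intervalIntegrable _ _)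
      intro τ hτ
      exact mul_le_mul_of_nonneg_left (huvt τ hτ) (hknn t τ)
    have l3 : (∫ τ in α..t, ∫ σ in α..τ, h t τ σ * u σ)
        ≤ (∫ τ in α..t, ∫ σ in α..τ, h t τ σ) * v t := by
      rw [← intervalIntegral.integral_mul_const]
      have c1 : Continuous (fun τ => ∫ σ in α..τ, h t τ σ * u σ) :=
        show Continuous ((fun p : ℝ × ℝ => ∫ σ in α..p.2, h p.1 p.2 σ * u σ) ∘
            (fun τ => (t, τ))) from
          hHinu.comp (continuous_const.prodMk continuous_id)
      have c2' : Continuous (fun τ => ∫ σ in α..τ, h t τ σ) :=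
        show Continuous ((fun p : ℝ × ℝ => ∫ σ in α..p.2, h p.1 p.2 σ) ∘
            (fun τ => (t, τ))) from
          hHin1.comp (continuous_const.prodMk continuous_id)
      have c2 : Continuous (fun τ => (∫ σ in α..τ, h t τ σ) * v t) :=
        c2'.mul continuous_const
      apply intervalIntegral.integral_mono_on ht.1 (c1.intervalIntegrable _ _)
        (c2.intervalIntegrable _ _)
      intro τ hτ
      rw [← intervalIntegral.integral_mul_const]
      have hht : Continuous fun σ : ℝ => h t τ σ :=
        show Continuous ((fun p : ℝ × ℝ × ℝ => h p.1 p.2.1 p.2.2) ∘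
            (fun σ => (t, τ, σ))) from
          hh.comp (continuous_const.prodMk (continuous_const.prodMk continuous_id))
      apply intervalIntegral.integral_mono_on hτ.1
        ((hht.mul hu).intervalIntegrable _ _)
        ((hht.mul continuous_const).intervalIntegrable _ _)
      intro σ hσ
      exact mul_le_mul_of_nonneg_left (huvt σ ⟨hσ.1, hσ.2.trans hτ.2⟩) (hhnn t τ σ)
    simp only [hg_def, hB_def]
    calc b t * u t + (∫ τ in α..t, k t τ * u τ)
          + (∫ τ in α..t, ∫ σ in α..τ, h t τ σ * u σ)
        ≤ b t * v t + (∫ τ in α..t, k t τ) * v t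
          + (∫ τ in α..t, ∫ σ in α..τ, h t τ σ) * v t := by linarith
      _ = (b t + (∫ τ in α..t, k t τ) + (∫ τ in α..t, ∫ σ in α..τ, h t τ σ)) * v t := by ring
  -- w = v * exp(-E) is antitone on [α, β]
  set w : ℝ → ℝ := fun t => v t * Real.exp (-E t) with hw_def
  have hw' : ∀ t, HasDerivAt w ((g t - B t * v t) * Real.exp (-E t)) t := by
    intro t
    have he : HasDerivAt (fun t => Real.exp (-E t)) (-B t * Real.exp (-E t)) t := by
      have := (Real.hasDerivAt_exp (-E t)).comp t ((hE' t).neg)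
      exact this.congr_deriv (by ring)
    have := (hv' t).mul he
    exact this.congr_deriv (by ring)
  have hwanti : AntitoneOn w (Icc α β) := by
    apply antitoneOn_of_deriv_nonpos (convex_Icc α β)
      (hvc.mul (hEc.neg.rexp)).continuousOn
      (fun x _ => (hw' x).differentiableAt.differentiableWithinAt)
    intro x hx
    rw [interior_Icc] at hx
    show deriv w x ≤ 0
    rw [(hw' x).deriv]
    have h1 := hkey x ⟨hx.1.le, hx.2.le⟩
    have h2 := Real.exp_nonneg (-E x)
    nlinarith
  -- conclude
  intro t ht
  have hwa : w α = a := by simp [hw_def, hva, hE_def]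
  have hle : w t ≤ a := by
    rw [← hwa]; exact hwanti (left_mem_Icc.2 hαβ) ht ht.1
  have : v t ≤ a * Real.exp (E t) := by
    have h2 := mul_le_mul_of_nonneg_right hle (Real.exp_nonneg (E t))
    rw [hw_def] at h2
    simp only [mul_assoc, ← Real.exp_add, neg_add_cancel, Real.exp_zero, mul_one] at h2
    exact h2
  rw [← hE_eq t]
  exact (huv t ht).trans this

theorem bykov_inequality
    (α β a : ℝ) (hαβ : α ≤ β) (ha : 0 ≤ a)
    (u b : ℝ → ℝ) (k : ℝ → ℝ → ℝ) (h : ℝ → ℝ → ℝ → ℝ)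
    (hu : ContinuousOn u (Icc α β)) (hb : ContinuousOn b (Icc α β))
    (hk : ContinuousOn (fun p : ℝ × ℝ => k p.1 p.2)
      {p : ℝ × ℝ | α ≤ p.2 ∧ p.2 ≤ p.1 ∧ p.1 ≤ β})
    (hh : ContinuousOn (fun p : ℝ × ℝ × ℝ => h p.1 p.2.1 p.2.2)
      {p : ℝ × ℝ × ℝ | α ≤ p.2.2 ∧ p.2.2 ≤ p.2.1 ∧ p.2.1 ≤ p.1 ∧ p.1 ≤ β})
    (hunn : ∀ t ∈ Icc α β, 0 ≤ u t) (hbnn : ∀ t ∈ Icc α β, 0 ≤ b t)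
    (hknn : ∀ t s, α ≤ s → s ≤ t → t ≤ β → 0 ≤ k t s)
    (hhnn : ∀ t s σ, α ≤ σ → σ ≤ s → s ≤ t → t ≤ β → 0 ≤ h t s σ)
    (hbound : ∀ t ∈ Icc α β,
      u t ≤ a + (∫ s in α..t, b s * u s)
        + (∫ s in α..t, ∫ τ in α..s, k s τ * u τ)
        + (∫ s in α..t, ∫ τ in α..s, ∫ σ in α..τ, h s τ σ * u σ)) :
    ∀ t ∈ Icc α β,
      u t ≤ a * Real.exp ((∫ s in α..t, b s)
        + (∫ s in α..t, ∫ τ in α..s, k s τ)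
        + (∫ s in α..t, ∫ τ in α..s, ∫ σ in α..τ, h s τ σ)) := by
  set pr : ℝ → ℝ := fun t => min (max t α) β with hpr_def
  have hprc : Continuous pr := (continuous_id.max continuous_const).min continuous_const
  have hprm : ∀ t, pr t ∈ Icc α β :=
    fun t => ⟨le_min (le_max_right _ _) hαβ, min_le_right _ _⟩
  have hpr_eq : ∀ t ∈ Icc α β, pr t = t := by
    intro t ht
    simp only [hpr_def, max_eq_left ht.1, min_eq_left ht.2]
  have hclamp_mem : ∀ c s : ℝ, α ≤ c → min (max s α) c ∈ Icc α c :=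
    fun c s hc => ⟨le_min (le_max_right _ _) hc, min_le_right _ _⟩
  have hclamp_eq : ∀ c s : ℝ, α ≤ s → s ≤ c → min (max s α) c = s := by
    intro c s hs1 hs2; rw [max_eq_left hs1, min_eq_left hs2]
  set u' : ℝ → ℝ := fun t => u (pr t) with hu'_def
  set b' : ℝ → ℝ := fun t => b (pr t) with hb'_def
  set k' : ℝ → ℝ → ℝ := fun t s => k (pr t) (min (max s α) (pr t)) with hk'_def
  set h' : ℝ → ℝ → ℝ → ℝ := fun t s σ =>
    h (pr t) (min (max s α) (pr t)) (min (max σ α) (min (max s α) (pr t))) with hh'_def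
  -- continuity
  have hu'c : Continuous u' :=
    show Continuous (u ∘ pr) from hu.comp_continuous hprc hprm
  have hb'c : Continuous b' :=
    show Continuous (b ∘ pr) from hb.comp_continuous hprc hprm
  have hk'c : Continuous (fun p : ℝ × ℝ => k' p.1 p.2) := by
    show Continuous ((fun q : ℝ × ℝ => k q.1 q.2) ∘
      (fun p : ℝ × ℝ => (pr p.1, min (max p.2 α) (pr p.1))))
    apply hk.comp_continuous (by fun_prop)
    intro p
    exact ⟨(hclamp_mem _ _ (hprm p.1).1).1, (hclamp_mem _ _ (hprm p.1).1).2, (hprm p.1).2⟩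
  have hh'c : Continuous (fun p : ℝ × ℝ × ℝ => h' p.1 p.2.1 p.2.2) := by
    show Continuous ((fun q : ℝ × ℝ × ℝ => h q.1 q.2.1 q.2.2) ∘
      (fun p : ℝ × ℝ × ℝ => (pr p.1, min (max p.2.1 α) (pr p.1),
        min (max p.2.2 α) (min (max p.2.1 α) (pr p.1)))))
    apply hh.comp_continuous (by fun_prop)
    intro p
    refine ⟨(hclamp_mem _ _ (hclamp_mem _ _ (hprm p.1).1).1).1,
      (hclamp_mem _ _ (hclamp_mem _ _ (hprm p.1).1).1).2,
      (hclamp_mem _ _ (hprm p.1).1).2, (hprm p.1).2⟩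
  -- nonnegativity
  have hu'nn : ∀ t, 0 ≤ u' t := fun t => hunn _ (hprm t)
  have hb'nn : ∀ t, 0 ≤ b' t := fun t => hbnn _ (hprm t)
  have hk'nn : ∀ t s, 0 ≤ k' t s := fun t s =>
    hknn _ _ (hclamp_mem _ _ (hprm t).1).1 (hclamp_mem _ _ (hprm t).1).2 (hprm t).2
  have hh'nn : ∀ t s σ, 0 ≤ h' t s σ := fun t s σ =>
    hhnn _ _ _ (hclamp_mem _ _ (hclamp_mem _ _ (hprm t).1).1).1
      (hclamp_mem _ _ (hclamp_mem _ _ (hprm t).1).1).2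
      (hclamp_mem _ _ (hprm t).1).2 (hprm t).2
  -- pointwise equalities on the simplex
  have hu'_eq : ∀ t ∈ Icc α β, u' t = u t := fun t ht => by
    simp only [hu'_def, hpr_eq t ht]
  have hb'_eq : ∀ t ∈ Icc α β, b' t = b t := fun t ht => by
    simp only [hb'_def, hpr_eq t ht]
  have hk'_eq : ∀ t s, α ≤ s → s ≤ t → t ≤ β → k' t s = k t s := by
    intro t s hs1 hs2 ht
    simp only [hk'_def, hpr_eq t ⟨hs1.trans hs2, ht⟩, hclamp_eq t s hs1 hs2]
  have hh'_eq : ∀ t s σ, α ≤ σ → σ ≤ s → s ≤ t → t ≤ β → h' t s σ = h t s σ := by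
    intro t s σ hσ1 hσ2 hs2 ht
    simp only [hh'_def, hpr_eq t ⟨hσ1.trans (hσ2.trans hs2), ht⟩,
      hclamp_eq t s (hσ1.trans hσ2) hs2, hclamp_eq s σ hσ1 hσ2]
  -- integral equalities
  have I1 : ∀ t ∈ Icc α β, (∫ s in α..t, b' s * u' s) = ∫ s in α..t, b s * u s := by
    intro t ht
    apply intervalIntegral.integral_congr
    intro s hs
    rw [uIcc_of_le ht.1] at hs
    have hsm : s ∈ Icc α β := ⟨hs.1, hs.2.trans ht.2⟩
    show b' s * u' s = b s * u s
    rw [hb'_eq s hsm, hu'_eq s hsm]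
  have I2u : ∀ t ∈ Icc α β,
      (∫ s in α..t, ∫ τ in α..s, k' s τ * u' τ)
        = ∫ s in α..t, ∫ τ in α..s, k s τ * u τ := by
    intro t ht
    apply intervalIntegral.integral_congr
    intro s hs
    rw [uIcc_of_le ht.1] at hs
    have hsβ : s ≤ β := hs.2.trans ht.2
    apply intervalIntegral.integral_congr
    intro τ hτ
    rw [uIcc_of_le hs.1] at hτ
    show k' s τ * u' τ = k s τ * u τ
    rw [hk'_eq s τ hτ.1 hτ.2 hsβ, hu'_eq τ ⟨hτ.1, hτ.2.trans hsβ⟩]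
  have I3u : ∀ t ∈ Icc α β,
      (∫ s in α..t, ∫ τ in α..s, ∫ σ in α..τ, h' s τ σ * u' σ)
        = ∫ s in α..t, ∫ τ in α..s, ∫ σ in α..τ, h s τ σ * u σ := by
    intro t ht
    apply intervalIntegral.integral_congr
    intro s hs
    rw [uIcc_of_le ht.1] at hs
    have hsβ : s ≤ β := hs.2.trans ht.2
    apply intervalIntegral.integral_congr
    intro τ hτ
    rw [uIcc_of_le hs.1] at hτ
    apply intervalIntegral.integral_congr
    intro σ hσ
    rw [uIcc_of_le hτ.1] at hσ
    show h' s τ σ * u' σ = h s τ σ * u σ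
    rw [hh'_eq s τ σ hσ.1 hσ.2 hτ.2 hsβ,
      hu'_eq σ ⟨hσ.1, (hσ.2.trans hτ.2).trans hsβ⟩]
  have J1 : ∀ t ∈ Icc α β, (∫ s in α..t, b' s) = ∫ s in α..t, b s := by
    intro t ht
    apply intervalIntegral.integral_congr
    intro s hs
    rw [uIcc_of_le ht.1] at hs
    exact hb'_eq s ⟨hs.1, hs.2.trans ht.2⟩
  have J2 : ∀ t ∈ Icc α β,
      (∫ s in α..t, ∫ τ in α..s, k' s τ) = ∫ s in α..t, ∫ τ in α..s, k s τ := by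
    intro t ht
    apply intervalIntegral.integral_congr
    intro s hs
    rw [uIcc_of_le ht.1] at hs
    have hsβ : s ≤ β := hs.2.trans ht.2
    apply intervalIntegral.integral_congr
    intro τ hτ
    rw [uIcc_of_le hs.1] at hτ
    exact hk'_eq s τ hτ.1 hτ.2 hsβ
  have J3 : ∀ t ∈ Icc α β,
      (∫ s in α..t, ∫ τ in α..s, ∫ σ in α..τ, h' s τ σ)
        = ∫ s in α..t, ∫ τ in α..s, ∫ σ in α..τ, h s τ σ := by
    intro t ht
    apply intervalIntegral.integral_congr
    intro s hs
    rw [uIcc_of_le ht.1] at hs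
    have hsβ : s ≤ β := hs.2.trans ht.2
    apply intervalIntegral.integral_congr
    intro τ hτ
    rw [uIcc_of_le hs.1] at hτ
    apply intervalIntegral.integral_congr
    intro σ hσ
    rw [uIcc_of_le hτ.1] at hσ
    exact hh'_eq s τ σ hσ.1 hσ.2 hτ.2 hsβ
  have hbound' : ∀ t ∈ Icc α β,
      u' t ≤ a + (∫ s in α..t, b' s * u' s)
        + (∫ s in α..t, ∫ τ in α..s, k' s τ * u' τ)
        + (∫ s in α..t, ∫ τ in α..s, ∫ σ in α..τ, h' s τ σ * u' σ) := by
    intro t ht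
    rw [hu'_eq t ht, I1 t ht, I2u t ht, I3u t ht]
    exact hbound t ht
  intro t ht
  have := bykov_aux α β a hαβ ha u' b' k' h' hu'c hb'c hk'c hh'c
    hu'nn hb'nn hk'nn hh'nn hbound' t ht
  rw [hu'_eq t ht, J1 t ht, J2 t ht, J3 t ht] at this
  exact this
end

section
/- Let u, b be nonnegative continuous on J = [α, β], k(t,s) nonnegative continuous for α ≤ s ≤ t ≤ β, h(t,s,τ) nonnegative continuous for α ≤ τ ≤ s ≤ t ≤ β, p > 1 a constant, and a : J → ℝ nonnegative and nondecreasing. Define B(t) = b(t) + ∫_α^t k(t,s) ds + ∫_α^t ∫_α^s h(t,s,τ) dτ ds and β_p = sup{t ∈ J : (p−1)∫_α^t B(s)·a(s)^{p−1} ds < 1}. If u(t) ≤ a(t) + ∫_α^t b(s)u(s)^p ds + ∫_α^t ∫_α^s k(s,τ)u(τ)^p dτ ds + ∫_α^t ∫_α^s ∫_α^τ h(s,τ,σ)u(σ)^p dσ dτ ds for all t ∈ J, then u(t) ≤ a(t)·[1 − (p−1)∫_α^t B(s)·a(s)^{p−1} ds]^{1/(1−p)} for all t ∈ [α, β_p).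 -/
open Real Set intervalIntegral MeasureTheory Filter Topology

open Real Set intervalIntegral MeasureTheory Filter Topology

private lemma integral_mono_Ico {f g : ℝ → ℝ} {a b : ℝ} (hab : a ≤ b)
    (hf : IntervalIntegrable f volume a b) (hg : IntervalIntegrable g volume a b)
    (hle : ∀ x ∈ Ico a b, f x ≤ g x) :
    ∫ x in a..b, f x ≤ ∫ x in a..b, g x := by
  refine intervalIntegral.integral_mono_ae_restrict hab hf hg ?_
  have h0 : ∀ᵐ x ∂(volume.restrict (Icc a b)), x ∈ Icc a b :=
    ae_restrict_mem measurableSet_Icc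
  have h1 : ∀ᵐ (x : ℝ) ∂(volume.restrict (Icc a b)), x ≠ b := by
    refine ae_restrict_of_ae ?_
    rw [ae_iff]
    simp only [ne_eq, not_not, setOf_eq_eq_singleton]
    exact Real.volume_singleton
  filter_upwards [h0, h1] with x hx hxb
  exact hle x ⟨hx.1, lt_of_le_of_ne hx.2 hxb⟩

private lemma crossing {a T ε : ℝ} {u v : ℝ → ℝ} (haT : a ≤ T) (hε : 0 < ε)
    (hu : ContinuousOn u (Icc a T)) (hv : MonotoneOn v (Icc a T))
    (step : ∀ t ∈ Icc a T, (∀ s ∈ Ico a t, u s ≤ v s) → u t ≤ v t - ε) :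
    ∀ t ∈ Icc a T, u t ≤ v t := by
  set S : Set ℝ := {t | t ∈ Icc a T ∧ ∀ s ∈ Ico a t, u s ≤ v s} with hS
  have haS : a ∈ S := ⟨⟨le_rfl, haT⟩, fun s hs => absurd hs.2 (not_lt.2 hs.1)⟩
  have hne : S.Nonempty := ⟨a, haS⟩
  have hbdd : BddAbove S := ⟨T, fun x hx => hx.1.2⟩
  set t₀ := sSup S with ht₀
  have ht₀a : a ≤ t₀ := le_csSup hbdd haS
  have ht₀T : t₀ ≤ T := csSup_le hne (fun x hx => hx.1.2)
  have ht₀S : ∀ s ∈ Ico a t₀, u s ≤ v s := by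
    intro s hs
    obtain ⟨x, hxS, hsx⟩ := exists_lt_of_lt_csSup hne hs.2
    exact hxS.2 s ⟨hs.1, hsx⟩
  have hstep₀ : u t₀ ≤ v t₀ - ε := step t₀ ⟨ht₀a, ht₀T⟩ ht₀S
  have ht₀eq : t₀ = T := by
    by_contra hne'
    have hlt : t₀ < T := lt_of_le_of_ne ht₀T hne'
    have hcw : ContinuousWithinAt u (Icc a T) t₀ := hu t₀ ⟨ht₀a, ht₀T⟩
    rw [Metric.continuousWithinAt_iff] at hcw
    obtain ⟨δ, hδ, hδ'⟩ := hcw ε hε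
    set t₁ := min (t₀ + δ/2) T with ht₁
    have ht₁gt : t₀ < t₁ := lt_min (by linarith) hlt
    have ht₁le : t₁ ≤ T := min_le_right _ _
    have ht₁S : t₁ ∈ S := by
      refine ⟨⟨le_trans ht₀a ht₁gt.le, ht₁le⟩, ?_⟩
      intro s hs
      rcases lt_or_ge s t₀ with h1 | h1
      · exact ht₀S s ⟨hs.1, h1⟩
      · have hsIcc : s ∈ Icc a T := ⟨hs.1, le_trans hs.2.le ht₁le⟩
        have hdist : dist s t₀ < δ := by
          rw [Real.dist_eq, abs_sub_lt_iff]
          have hs2 : s < t₀ + δ/2 := lt_of_lt_of_le hs.2 (min_le_left _ _)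
          constructor <;> linarith
        have h2 := hδ' hsIcc hdist
        rw [Real.dist_eq, abs_sub_lt_iff] at h2
        have huv : u s < u t₀ + ε := by linarith [h2.1]
        have hvv : v t₀ ≤ v s := hv ⟨ht₀a, ht₀T⟩ hsIcc h1
        linarith
    exact absurd (le_csSup hbdd ht₁S) (not_le.2 ht₁gt)
  intro t ht
  rcases lt_or_eq_of_le ht.2 with h1 | h1
  · rw [← ht₀eq] at h1; exact ht₀S t ⟨ht.1, h1⟩
  · subst h1
    have := hstep₀; rw [ht₀eq] at this; linarith


set_option maxHeartbeats 1000000 in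
private lemma key_lemma (α T p e : ℝ) (hαT : α ≤ T) (hp : 1 < p) (he : 0 < e)
    (ut bt av ce Bt : ℝ → ℝ) (kt : ℝ → ℝ → ℝ) (ht' : ℝ → ℝ → ℝ → ℝ)
    (hutc : Continuous ut) (hutnn : ∀ x, 0 ≤ ut x)
    (hbtc : Continuous bt) (hbtnn : ∀ x, 0 ≤ bt x)
    (hktc : Continuous (fun q : ℝ × ℝ => kt q.1 q.2)) (hktnn : ∀ s τ, 0 ≤ kt s τ)
    (hhtc : Continuous (fun q : ℝ × ℝ × ℝ => ht' q.1 q.2.1 q.2.2))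
    (hhtnn : ∀ s τ σ, 0 ≤ ht' s τ σ)
    (hatm : Monotone av) (hatnn : ∀ x, 0 ≤ av x)
    (hcec : Continuous ce) (hcem : Monotone ce) (hcenn : ∀ s, 0 ≤ ce s)
    (hclb : ∀ s, (av s + e) ^ (p-1) ≤ ce s)
    (hBt : ∀ s, Bt s = bt s + (∫ τ in α..s, kt s τ)
      + ∫ τ in α..s, ∫ σ in α..τ, ht' s τ σ)
    (hKlt : (p-1) * (∫ s in α..T, Bt s * ce s) < (1+e) ^ (1-p))
    (hbound : ∀ t ∈ Icc α T, ut t ≤ av t + (∫ s in α..t, bt s * ut s ^ p)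
        + (∫ s in α..t, ∫ τ in α..s, kt s τ * ut τ ^ p)
        + (∫ s in α..t, ∫ τ in α..s, ∫ σ in α..τ, ht' s τ σ * ut σ ^ p)) :
    ut T ≤ (av T + e) * ((1+e) ^ (1-p) - (p-1) * ∫ s in α..T, Bt s * ce s) ^ (1/(1-p)) := by
  have hp1 : (0:ℝ) < p - 1 := by linarith
  have hppos : (0:ℝ) < p := by linarith
  have hupc : Continuous (fun x => ut x ^ p) := hutc.rpow_const (fun x => Or.inr hppos.le)
  have hre : Continuous (fun x : (ℝ × ℝ) × ℝ => (x.1.1, x.1.2, x.2)) :=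
    (continuous_fst.comp continuous_fst).prodMk
      ((continuous_snd.comp continuous_fst).prodMk continuous_snd)
  set Kt : ℝ → ℝ := fun s => ∫ τ in α..s, kt s τ with hKt
  have hKtc : Continuous Kt := by
    apply intervalIntegral.continuous_parametric_intervalIntegral_of_continuous
      (f := kt) (hf := hktc) continuous_id
  set Ht2 : ℝ → ℝ → ℝ := fun s τ => ∫ σ in α..τ, ht' s τ σ with hHt2
  have hHt2c : Continuous (fun q : ℝ × ℝ => Ht2 q.1 q.2) := by
    apply intervalIntegral.continuous_parametric_intervalIntegral_of_continuous
      (f := fun (q : ℝ × ℝ) σ => ht' q.1 q.2 σ) (hf := hhtc.comp hre) continuous_snd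
  set Ht3 : ℝ → ℝ := fun s => ∫ τ in α..s, Ht2 s τ with hHt3
  have hHt3c : Continuous Ht3 := by
    apply intervalIntegral.continuous_parametric_intervalIntegral_of_continuous
      (f := Ht2) (hf := hHt2c) continuous_id
  have hKtnn : ∀ s, α ≤ s → 0 ≤ Kt s := fun s hs =>
    intervalIntegral.integral_nonneg hs (fun τ _ => hktnn s τ)
  have hHt2nn : ∀ s τ, α ≤ τ → 0 ≤ Ht2 s τ := fun s τ hτ =>
    intervalIntegral.integral_nonneg hτ (fun σ _ => hhtnn s τ σ)
  have hHt3nn : ∀ s, α ≤ s → 0 ≤ Ht3 s := fun s hs =>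
    intervalIntegral.integral_nonneg hs (fun τ hτ => hHt2nn s τ hτ.1)
  have hBts : ∀ s, Bt s = bt s + Kt s + Ht3 s := hBt
  have hBteq : Bt = fun s => bt s + Kt s + Ht3 s := funext hBts
  have hBtc : Continuous Bt := by
    rw [hBteq]; exact (hbtc.add hKtc).add hHt3c
  have hBtnn : ∀ s, α ≤ s → 0 ≤ Bt s := fun s hs => by
    rw [hBts s]
    have := hbtnn s; have := hKtnn s hs; have := hHt3nn s hs
    linarith
  have cont1 : Continuous (fun s => ∫ τ in α..s, kt s τ * ut τ ^ p) := by
    apply intervalIntegral.continuous_parametric_intervalIntegral_of_continuous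
      (f := fun s τ => kt s τ * ut τ ^ p)
      (hf := hktc.mul (hupc.comp continuous_snd)) continuous_id
  have cont2 : Continuous (fun q : ℝ × ℝ => ∫ σ in α..q.2, ht' q.1 q.2 σ * ut σ ^ p) := by
    apply intervalIntegral.continuous_parametric_intervalIntegral_of_continuous
      (f := fun (q : ℝ × ℝ) σ => ht' q.1 q.2 σ * ut σ ^ p)
      (hf := (hhtc.comp hre).mul (hupc.comp continuous_snd)) continuous_snd
  have cont3 : Continuous (fun s => ∫ τ in α..s, ∫ σ in α..τ, ht' s τ σ * ut σ ^ p) := by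
    apply intervalIntegral.continuous_parametric_intervalIntegral_of_continuous
      (f := fun s τ => ∫ σ in α..τ, ht' s τ σ * ut σ ^ p) (hf := cont2) continuous_id
  -- the comparison solution
  have hlamp : (0:ℝ) < 1 + e := by linarith
  have hne1p : (1:ℝ) - p ≠ 0 := by linarith
  have hexp : 1/(1-p) ≤ 0 := by
    apply div_nonpos_of_nonneg_of_nonpos <;> linarith
  set Ce : ℝ → ℝ := fun s => Bt s * ce s with hCe
  have hCc : Continuous Ce := hBtc.mul hcec
  have hCnn : ∀ s, α ≤ s → 0 ≤ Ce s := fun s hs => mul_nonneg (hBtnn s hs) (hcenn s)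
  set FF : ℝ → ℝ := fun x => ∫ s in α..x, Ce s with hFF
  have hFd : ∀ x, HasDerivAt FF (Ce x) x := fun x =>
    (hCc.integral_hasStrictDerivAt α x).hasDerivAt
  have hFmono : ∀ x y, α ≤ x → x ≤ y → FF x ≤ FF y := by
    intro x y hx hxy
    have hadd := intervalIntegral.integral_add_adjacent_intervals
      (hCc.intervalIntegrable (μ := volume) α x) (hCc.intervalIntegrable (μ := volume) x y)
    have hnn : 0 ≤ ∫ s in x..y, Ce s :=
      intervalIntegral.integral_nonneg hxy (fun s hs => hCnn s (le_trans hx hs.1))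
    show (∫ s in α..x, Ce s) ≤ ∫ s in α..y, Ce s
    linarith
  set GG : ℝ → ℝ := fun x => (1+e) ^ (1-p) - (p-1) * FF x with hGG
  have hGd : ∀ x, HasDerivAt GG (-((p-1) * Ce x)) x := fun x =>
    ((hFd x).const_mul (p-1)).const_sub ((1+e) ^ (1-p))
  have hGT : 0 < GG T := by
    show 0 < (1+e) ^ (1-p) - (p-1) * FF T
    have hFT : FF T = ∫ s in α..T, Bt s * ce s := rfl
    linarith [hKlt]
  have hGpos : ∀ x ∈ Icc α T, 0 < GG x := by
    intro x hx
    have h1 : FF x ≤ FF T := hFmono x T hx.1 hx.2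
    have h2 : (p-1) * FF x ≤ (p-1) * FF T := mul_le_mul_of_nonneg_left h1 hp1.le
    have h3 : 0 < (1+e) ^ (1-p) - (p-1) * FF T := hGT
    show 0 < (1+e) ^ (1-p) - (p-1) * FF x
    linarith
  set ps : ℝ → ℝ := fun x => GG x ^ (1/(1-p)) with hps
  have hGcont : Continuous GG := continuous_iff_continuousAt.2 (fun x => (hGd x).continuousAt)
  have hpscont : ContinuousOn ps (Icc α T) :=
    ContinuousOn.rpow_const hGcont.continuousOn (fun x hx => Or.inl (hGpos x hx).ne')
  have hpsnn : ∀ x ∈ Icc α T, 0 ≤ ps x := fun x hx => Real.rpow_nonneg (hGpos x hx).le _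
  have hFα : FF α = 0 := intervalIntegral.integral_same
  have hpsα : ps α = 1 + e := by
    show GG α ^ (1/(1-p)) = 1 + e
    have hGα : GG α = (1+e) ^ (1-p) := by
      show (1+e) ^ (1-p) - (p-1) * FF α = _
      rw [hFα]; ring
    rw [hGα, ← Real.rpow_mul hlamp.le, mul_one_div, div_self hne1p, Real.rpow_one]
  have hpsd : ∀ x ∈ Icc α T, HasDerivAt ps (Ce x * ps x ^ p) x := by
    intro x hx
    have hG := hGpos x hx
    have hd := (hGd x).rpow_const (p := 1/(1-p)) (Or.inl hG.ne')
    have heq : -((p-1) * Ce x) * (1/(1-p)) * GG x ^ (1/(1-p) - 1) = Ce x * ps x ^ p := by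
      have h1 : ps x ^ p = GG x ^ ((1/(1-p)) * p) := by
        show (GG x ^ (1/(1-p))) ^ p = _
        rw [← Real.rpow_mul hG.le]
      have h2 : (1:ℝ)/(1-p) - 1 = (1/(1-p)) * p := by
        field_simp
        ring
      have h3 : -(p-1) * (1/(1-p)) = 1 := by
        field_simp
        ring
      rw [h1, h2]
      calc -((p-1) * Ce x) * (1/(1-p)) * GG x ^ ((1/(1-p)) * p)
          = (-(p-1) * (1/(1-p))) * (Ce x * GG x ^ ((1/(1-p)) * p)) := by ring
        _ = Ce x * GG x ^ ((1/(1-p)) * p) := by rw [h3, one_mul]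
    rw [heq] at hd
    exact hd
  have hpsint : ∀ t ∈ Icc α T, (∫ s in α..t, Ce s * ps s ^ p) = ps t - (1+e) := by
    intro t ht
    have hsub : uIcc α t ⊆ Icc α T := by
      rw [uIcc_of_le ht.1]; exact Icc_subset_Icc le_rfl ht.2
    have hint : IntervalIntegrable (fun s => Ce s * ps s ^ p) volume α t := by
      apply ContinuousOn.intervalIntegrable
      exact (hCc.continuousOn).mul
        (((hpscont.mono hsub).rpow_const (fun x hx => Or.inr hppos.le)))
    have hid := intervalIntegral.integral_eq_sub_of_hasDerivAt
      (fun x hx => hpsd x (hsub hx)) hint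
    rw [hid, hpsα]
  have hpsm : MonotoneOn ps (Icc α T) := by
    intro x hx y hy hxy
    have hF := hFmono x y hx.1 hxy
    have h2 : (p-1) * FF x ≤ (p-1) * FF y := mul_le_mul_of_nonneg_left hF hp1.le
    have hGle : GG y ≤ GG x := by
      show (1+e) ^ (1-p) - (p-1) * FF y ≤ (1+e) ^ (1-p) - (p-1) * FF x
      linarith
    exact Real.rpow_le_rpow_of_nonpos (hGpos y hy) hGle hexp
  set vv : ℝ → ℝ := fun s => (av s + e) * ps s with hvv
  have hvmono : MonotoneOn vv (Icc α T) := by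
    intro x hx y hy hxy
    have h1 : av x + e ≤ av y + e := add_le_add_left (hatm hxy) e
    exact mul_le_mul h1 (hpsm hx hy hxy) (hpsnn x hx) (add_nonneg (hatnn y) he.le)
  have step : ∀ t ∈ Icc α T, (∀ s ∈ Ico α t, ut s ≤ vv s) → ut t ≤ vv t - e := by
    intro t ht hH
    have hIccT : Icc α t ⊆ Icc α T := Icc_subset_Icc le_rfl ht.2
    have huIcc : uIcc α t = Icc α t := uIcc_of_le ht.1
    set m : ℝ → ℝ := fun s => ce s * ps s ^ p with hm
    have hmcont : ContinuousOn m (Icc α T) :=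
      (hcec.continuousOn).mul (hpscont.rpow_const (fun x hx => Or.inr hppos.le))
    have hmnn : ∀ x ∈ Icc α T, 0 ≤ m x := fun x hx =>
      mul_nonneg (hcenn x) (Real.rpow_nonneg (hpsnn x hx) p)
    have hmm : MonotoneOn m (Icc α T) := by
      intro x hx y hy hxy
      exact mul_le_mul (hcem hxy)
        (Real.rpow_le_rpow (hpsnn x hx) (hpsm hx hy hxy) hppos.le)
        (Real.rpow_nonneg (hpsnn x hx) p) (hcenn y)
    have haepos : 0 < av t + e := lt_of_lt_of_le he (le_add_of_nonneg_left (hatnn t))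
    have hkey : ∀ σ ∈ Ico α t, ut σ ^ p ≤ (av t + e) * m σ := by
      intro σ hσ
      have hσT : σ ∈ Icc α T := ⟨hσ.1, le_trans hσ.2.le ht.2⟩
      have h1 : ut σ ≤ (av σ + e) * ps σ := hH σ hσ
      have haσ : 0 < av σ + e := lt_of_lt_of_le he (le_add_of_nonneg_left (hatnn σ))
      have h2 : ut σ ^ p ≤ ((av σ + e) * ps σ) ^ p :=
        Real.rpow_le_rpow (hutnn σ) h1 hppos.le
      have h3 : ((av σ + e) * ps σ) ^ p = (av σ + e) ^ p * ps σ ^ p :=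
        Real.mul_rpow haσ.le (hpsnn σ hσT)
      have h4 : (av σ + e) ^ p = (av σ + e) ^ (p-1) * (av σ + e) := by
        have hadd := Real.rpow_add haσ (p-1) 1
        rw [Real.rpow_one] at hadd
        have hpe : p - 1 + 1 = p := by ring
        rw [hpe] at hadd
        exact hadd
      have h5 : (av σ + e) ^ (p-1) ≤ ce σ := hclb σ
      have h6 : av σ + e ≤ av t + e := add_le_add_left (hatm hσ.2.le) e
      calc ut σ ^ p ≤ ((av σ + e) * ps σ) ^ p := h2
        _ = ((av σ + e) ^ (p-1) * (av σ + e)) * ps σ ^ p := by rw [h3, h4]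
        _ ≤ (ce σ * (av t + e)) * ps σ ^ p := by
            apply mul_le_mul_of_nonneg_right _ (Real.rpow_nonneg (hpsnn σ hσT) p)
            exact mul_le_mul h5 h6 (add_nonneg (hatnn σ) he.le) (hcenn σ)
        _ = (av t + e) * m σ := by
            show (ce σ * (av t + e)) * ps σ ^ p = (av t + e) * (ce σ * ps σ ^ p)
            ring
    -- term 1
    have hI1 : (∫ s in α..t, bt s * ut s ^ p)
        ≤ ∫ s in α..t, (av t + e) * (bt s * m s) := by
      apply integral_mono_Ico ht.1
      · exact (hbtc.mul hupc).intervalIntegrable α t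
      · apply ContinuousOn.intervalIntegrable
        rw [huIcc]
        exact continuousOn_const.mul (hbtc.continuousOn.mul (hmcont.mono hIccT))
      · intro s hs
        calc bt s * ut s ^ p ≤ bt s * ((av t + e) * m s) :=
              mul_le_mul_of_nonneg_left (hkey s hs) (hbtnn s)
          _ = (av t + e) * (bt s * m s) := by ring
    -- term 2
    have hI2 : (∫ s in α..t, ∫ τ in α..s, kt s τ * ut τ ^ p)
        ≤ ∫ s in α..t, (av t + e) * (m s * Kt s) := by
      apply intervalIntegral.integral_mono_on ht.1
      · exact cont1.intervalIntegrable α t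
      · apply ContinuousOn.intervalIntegrable
        rw [huIcc]
        exact continuousOn_const.mul ((hmcont.mono hIccT).mul hKtc.continuousOn)
      · intro s hs
        have hsT : s ∈ Icc α T := hIccT hs
        have hIcos : Ico α s ⊆ Ico α t := Ico_subset_Ico le_rfl hs.2
        have hIccs : Icc α s ⊆ Icc α T := Icc_subset_Icc le_rfl hsT.2
        have hktcs : Continuous (fun τ => kt s τ) :=
          hktc.comp (continuous_const.prodMk continuous_id)
        have hint2 : IntervalIntegrable (fun τ => kt s τ * ((av t + e) * m τ)) volume α s := by
          apply ContinuousOn.intervalIntegrable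
          rw [uIcc_of_le hs.1]
          exact hktcs.continuousOn.mul (continuousOn_const.mul (hmcont.mono hIccs))
        have ha : (∫ τ in α..s, kt s τ * ut τ ^ p)
            ≤ ∫ τ in α..s, kt s τ * ((av t + e) * m τ) := by
          apply integral_mono_Ico hs.1
          · exact (hktcs.mul hupc).intervalIntegrable α s
          · exact hint2
          · intro τ hτ
            exact mul_le_mul_of_nonneg_left (hkey τ (hIcos hτ)) (hktnn s τ)
        have hb : (∫ τ in α..s, kt s τ * ((av t + e) * m τ))
            ≤ ∫ τ in α..s, kt s τ * ((av t + e) * m s) := by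
          apply intervalIntegral.integral_mono_on hs.1 hint2
          · exact (hktcs.mul continuous_const).intervalIntegrable α s
          · intro τ hτ
            exact mul_le_mul_of_nonneg_left
              (mul_le_mul_of_nonneg_left (hmm (hIccs hτ) hsT hτ.2) haepos.le) (hktnn s τ)
        have hcconst : (∫ τ in α..s, kt s τ * ((av t + e) * m s))
            = (av t + e) * (m s * Kt s) := by
          have hcg : ∀ τ ∈ uIcc α s, kt s τ * ((av t + e) * m s)
              = ((av t + e) * m s) * kt s τ := fun τ _ => by ring
          rw [intervalIntegral.integral_congr hcg, intervalIntegral.integral_const_mul]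
          show ((av t + e) * m s) * Kt s = _
          ring
        show (∫ τ in α..s, kt s τ * ut τ ^ p) ≤ (av t + e) * (m s * Kt s)
        calc (∫ τ in α..s, kt s τ * ut τ ^ p)
            ≤ ∫ τ in α..s, kt s τ * ((av t + e) * m τ) := ha
          _ ≤ ∫ τ in α..s, kt s τ * ((av t + e) * m s) := hb
          _ = (av t + e) * (m s * Kt s) := hcconst
    -- term 3
    have hI3 : (∫ s in α..t, ∫ τ in α..s, ∫ σ in α..τ, ht' s τ σ * ut σ ^ p)
        ≤ ∫ s in α..t, (av t + e) * (m s * Ht3 s) := by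
      apply intervalIntegral.integral_mono_on ht.1
      · exact cont3.intervalIntegrable α t
      · apply ContinuousOn.intervalIntegrable
        rw [huIcc]
        exact continuousOn_const.mul ((hmcont.mono hIccT).mul hHt3c.continuousOn)
      · intro s hs
        have hsT : s ∈ Icc α T := hIccT hs
        have hIccs : Icc α s ⊆ Icc α T := Icc_subset_Icc le_rfl hsT.2
        have hin2c : Continuous (fun τ => ∫ σ in α..τ, ht' s τ σ * ut σ ^ p) := by
          apply intervalIntegral.continuous_parametric_intervalIntegral_of_continuous
            (f := fun τ σ => ht' s τ σ * ut σ ^ p)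
            (hf := ((hhtc.comp (continuous_const.prodMk
              (continuous_fst.prodMk continuous_snd))).mul
              (hupc.comp continuous_snd))) continuous_id
        have hHt2cs : Continuous (fun τ => Ht2 s τ) := by
          apply intervalIntegral.continuous_parametric_intervalIntegral_of_continuous
            (f := fun τ σ => ht' s τ σ)
            (hf := (hhtc.comp (continuous_const.prodMk
              (continuous_fst.prodMk continuous_snd)))) continuous_id
        have hmid : ∀ τ ∈ Icc α s, (∫ σ in α..τ, ht' s τ σ * ut σ ^ p)
            ≤ ((av t + e) * m τ) * Ht2 s τ := by
          intro τ hτ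
          have hτT : τ ∈ Icc α T := hIccs hτ
          have hIcoτ : Ico α τ ⊆ Ico α t := Ico_subset_Ico le_rfl (le_trans hτ.2 hs.2)
          have hIccτ : Icc α τ ⊆ Icc α T := Icc_subset_Icc le_rfl hτT.2
          have hhtcs : Continuous (fun σ => ht' s τ σ) :=
            hhtc.comp (continuous_const.prodMk (continuous_const.prodMk continuous_id))
          have hint3 : IntervalIntegrable (fun σ => ht' s τ σ * ((av t + e) * m σ))
              volume α τ := by
            apply ContinuousOn.intervalIntegrable
            rw [uIcc_of_le hτ.1]
            exact hhtcs.continuousOn.mul (continuousOn_const.mul (hmcont.mono hIccτ))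
          have ha : (∫ σ in α..τ, ht' s τ σ * ut σ ^ p)
              ≤ ∫ σ in α..τ, ht' s τ σ * ((av t + e) * m σ) := by
            apply integral_mono_Ico hτ.1
            · exact (hhtcs.mul hupc).intervalIntegrable α τ
            · exact hint3
            · intro σ hσ
              exact mul_le_mul_of_nonneg_left (hkey σ (hIcoτ hσ)) (hhtnn s τ σ)
          have hb : (∫ σ in α..τ, ht' s τ σ * ((av t + e) * m σ))
              ≤ ∫ σ in α..τ, ht' s τ σ * ((av t + e) * m τ) := by
            apply intervalIntegral.integral_mono_on hτ.1 hint3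
            · exact (hhtcs.mul continuous_const).intervalIntegrable α τ
            · intro σ hσ
              exact mul_le_mul_of_nonneg_left
                (mul_le_mul_of_nonneg_left (hmm (hIccτ hσ) hτT hσ.2) haepos.le)
                (hhtnn s τ σ)
          have hcconst : (∫ σ in α..τ, ht' s τ σ * ((av t + e) * m τ))
              = ((av t + e) * m τ) * Ht2 s τ := by
            have hcg : ∀ σ ∈ uIcc α τ, ht' s τ σ * ((av t + e) * m τ)
                = ((av t + e) * m τ) * ht' s τ σ := fun σ _ => by ring
            rw [intervalIntegral.integral_congr hcg, intervalIntegral.integral_const_mul]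
          calc (∫ σ in α..τ, ht' s τ σ * ut σ ^ p)
              ≤ ∫ σ in α..τ, ht' s τ σ * ((av t + e) * m σ) := ha
            _ ≤ ∫ σ in α..τ, ht' s τ σ * ((av t + e) * m τ) := hb
            _ = ((av t + e) * m τ) * Ht2 s τ := hcconst
        have hintm : IntervalIntegrable (fun τ => ((av t + e) * m τ) * Ht2 s τ) volume α s := by
          apply ContinuousOn.intervalIntegrable
          rw [uIcc_of_le hs.1]
          exact (continuousOn_const.mul (hmcont.mono hIccs)).mul hHt2cs.continuousOn
        have hmid2 : (∫ τ in α..s, ∫ σ in α..τ, ht' s τ σ * ut σ ^ p)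
            ≤ ∫ τ in α..s, ((av t + e) * m τ) * Ht2 s τ :=
          intervalIntegral.integral_mono_on hs.1 (hin2c.intervalIntegrable α s) hintm hmid
        have hmid3 : (∫ τ in α..s, ((av t + e) * m τ) * Ht2 s τ)
            ≤ ∫ τ in α..s, ((av t + e) * m s) * Ht2 s τ := by
          apply intervalIntegral.integral_mono_on hs.1 hintm
          · exact (continuous_const.mul hHt2cs).intervalIntegrable α s
          · intro τ hτ
            exact mul_le_mul_of_nonneg_right
              (mul_le_mul_of_nonneg_left (hmm (hIccs hτ) hsT hτ.2) haepos.le)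
              (hHt2nn s τ hτ.1)
        have hmid4 : (∫ τ in α..s, ((av t + e) * m s) * Ht2 s τ)
            = (av t + e) * (m s * Ht3 s) := by
          rw [intervalIntegral.integral_const_mul]
          show ((av t + e) * m s) * Ht3 s = _
          ring
        show (∫ τ in α..s, ∫ σ in α..τ, ht' s τ σ * ut σ ^ p) ≤ (av t + e) * (m s * Ht3 s)
        calc (∫ τ in α..s, ∫ σ in α..τ, ht' s τ σ * ut σ ^ p)
            ≤ ∫ τ in α..s, ((av t + e) * m τ) * Ht2 s τ := hmid2
          _ ≤ ∫ τ in α..s, ((av t + e) * m s) * Ht2 s τ := hmid3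
          _ = (av t + e) * (m s * Ht3 s) := hmid4
    -- combine
    have hint1' : IntervalIntegrable (fun s => (av t + e) * (bt s * m s)) volume α t := by
      apply ContinuousOn.intervalIntegrable
      rw [huIcc]
      exact continuousOn_const.mul (hbtc.continuousOn.mul (hmcont.mono hIccT))
    have hint2' : IntervalIntegrable (fun s => (av t + e) * (m s * Kt s)) volume α t := by
      apply ContinuousOn.intervalIntegrable
      rw [huIcc]
      exact continuousOn_const.mul ((hmcont.mono hIccT).mul hKtc.continuousOn)
    have hint3' : IntervalIntegrable (fun s => (av t + e) * (m s * Ht3 s)) volume α t := by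
      apply ContinuousOn.intervalIntegrable
      rw [huIcc]
      exact continuousOn_const.mul ((hmcont.mono hIccT).mul hHt3c.continuousOn)
    have hsum : (∫ s in α..t, (av t + e) * (bt s * m s))
        + (∫ s in α..t, (av t + e) * (m s * Kt s))
        + (∫ s in α..t, (av t + e) * (m s * Ht3 s))
        = (av t + e) * (ps t - (1+e)) := by
      rw [← intervalIntegral.integral_add hint1' hint2',
          ← intervalIntegral.integral_add (hint1'.add hint2') hint3']
      have hcg : ∀ s ∈ uIcc α t, ((av t + e) * (bt s * m s) + (av t + e) * (m s * Kt s))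
          + (av t + e) * (m s * Ht3 s) = (av t + e) * (Ce s * ps s ^ p) := by
        intro s _
        show _ = (av t + e) * ((Bt s * ce s) * ps s ^ p)
        have hms : m s = ce s * ps s ^ p := rfl
        rw [hBts s, hms]
        ring
      rw [intervalIntegral.integral_congr hcg, intervalIntegral.integral_const_mul,
        hpsint t ht]
    have hfin : ut t ≤ av t + (av t + e) * (ps t - (1+e)) := by
      have hb1 := hbound t ht
      linarith [hI1, hI2, hI3, hsum, hb1]
    show ut t ≤ (av t + e) * ps t - e
    nlinarith [hfin, mul_nonneg he.le (add_nonneg (hatnn t) he.le), hatnn t]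
  have hcross := crossing hαT he hutc.continuousOn hvmono step
  have hclose := hcross T ⟨hαT, le_rfl⟩
  show ut T ≤ (av T + e) * ((1+e) ^ (1-p) - (p-1) * FF T) ^ (1/(1-p))
  exact hclose

set_option maxHeartbeats 2000000 in
theorem thm_2_2
    (α β p : ℝ) (hαβ : α ≤ β) (hp : 1 < p)
    (u b a : ℝ → ℝ) (k : ℝ → ℝ → ℝ) (h : ℝ → ℝ → ℝ → ℝ)
    (hu : ContinuousOn u (Icc α β)) (hb : ContinuousOn b (Icc α β))
    (hk : ContinuousOn (fun q : ℝ × ℝ => k q.1 q.2)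
      {q : ℝ × ℝ | α ≤ q.2 ∧ q.2 ≤ q.1 ∧ q.1 ≤ β})
    (hh : ContinuousOn (fun q : ℝ × ℝ × ℝ => h q.1 q.2.1 q.2.2)
      {q : ℝ × ℝ × ℝ | α ≤ q.2.2 ∧ q.2.2 ≤ q.2.1 ∧ q.2.1 ≤ q.1 ∧ q.1 ≤ β})
    (hunn : ∀ t ∈ Icc α β, 0 ≤ u t) (hbnn : ∀ t ∈ Icc α β, 0 ≤ b t)
    (hknn : ∀ t s, α ≤ s → s ≤ t → t ≤ β → 0 ≤ k t s)
    (hhnn : ∀ t s τ, α ≤ τ → τ ≤ s → s ≤ t → t ≤ β → 0 ≤ h t s τ)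
    (hann : ∀ t ∈ Icc α β, 0 ≤ a t)
    (hamono : MonotoneOn a (Icc α β))
    (B : ℝ → ℝ)
    (hB : ∀ t, B t = b t + (∫ s in α..t, k t s)
        + (∫ s in α..t, ∫ τ in α..s, h t s τ))
    (βp : ℝ)
    (hβp : βp = sSup {t ∈ Icc α β |
      (p - 1) * ∫ s in α..t, B s * a s ^ (p - 1) < 1})
    (hbound : ∀ t ∈ Icc α β,
      u t ≤ a t + (∫ s in α..t, b s * u s ^ p)
        + (∫ s in α..t, ∫ τ in α..s, k s τ * u τ ^ p)
        + (∫ s in α..t, ∫ τ in α..s, ∫ σ in α..τ, h s τ σ * u σ ^ p)) :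
    ∀ t ∈ Ico α βp,
      u t ≤ a t *
        (1 - (p - 1) * ∫ s in α..t, B s * a s ^ (p - 1)) ^ (1 / (1 - p)) := by
  -- clamp
  set cl : ℝ → ℝ := fun x => max α (min x β) with hcl
  have hclc : Continuous cl := continuous_const.max (continuous_id.min continuous_const)
  have hclmem : ∀ x, cl x ∈ Icc α β := fun x => ⟨le_max_left _ _, max_le hαβ (min_le_right _ _)⟩
  have hclmono : Monotone cl := fun x y hxy => max_le_max le_rfl (min_le_min hxy le_rfl)
  have hclid : ∀ x ∈ Icc α β, cl x = x := by
    intro x hx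
    simp only [hcl, min_eq_left hx.2, max_eq_right hx.1]
  set cl2 : ℝ → ℝ → ℝ := fun s τ => max α (min τ (cl s)) with hcl2
  have hcl2mem : ∀ s τ, α ≤ cl2 s τ ∧ cl2 s τ ≤ cl s :=
    fun s τ => ⟨le_max_left _ _, max_le (hclmem s).1 (min_le_right _ _)⟩
  have hcl2id : ∀ s ∈ Icc α β, ∀ τ ∈ Icc α s, cl2 s τ = τ := by
    intro s hs τ hτ
    simp only [hcl2, hclid s hs, min_eq_left hτ.2, max_eq_right hτ.1]
  set cl3 : ℝ → ℝ → ℝ → ℝ := fun s τ σ => max α (min σ (cl2 s τ)) with hcl3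
  have hcl3mem : ∀ s τ σ, α ≤ cl3 s τ σ ∧ cl3 s τ σ ≤ cl2 s τ :=
    fun s τ σ => ⟨le_max_left _ _, max_le (hcl2mem s τ).1 (min_le_right _ _)⟩
  have hcl3id : ∀ s ∈ Icc α β, ∀ τ ∈ Icc α s, ∀ σ ∈ Icc α τ, cl3 s τ σ = σ := by
    intro s hs τ hτ σ hσ
    simp only [hcl3, hcl2id s hs τ hτ, min_eq_left hσ.2, max_eq_right hσ.1]
  -- tilde functions
  set ut : ℝ → ℝ := fun x => u (cl x) with hut
  set bt : ℝ → ℝ := fun x => b (cl x) with hbt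
  set av : ℝ → ℝ := fun x => a (cl x) with hav
  set kt : ℝ → ℝ → ℝ := fun s τ => k (cl s) (cl2 s τ) with hkt
  set ht' : ℝ → ℝ → ℝ → ℝ := fun s τ σ => h (cl s) (cl2 s τ) (cl3 s τ σ) with hht
  have hutc : Continuous ut := hu.comp_continuous hclc hclmem
  have hbtc : Continuous bt := hb.comp_continuous hclc hclmem
  have hktc : Continuous (fun q : ℝ × ℝ => kt q.1 q.2) := by
    have : Continuous (fun q : ℝ × ℝ => (cl q.1, cl2 q.1 q.2)) := by
      apply Continuous.prodMk (hclc.comp continuous_fst)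
      exact continuous_const.max ((continuous_snd).min (hclc.comp continuous_fst))
    exact hk.comp_continuous this
      (fun q => ⟨(hcl2mem q.1 q.2).1, (hcl2mem q.1 q.2).2, (hclmem q.1).2⟩)
  have hhtc : Continuous (fun q : ℝ × ℝ × ℝ => ht' q.1 q.2.1 q.2.2) := by
    have hc2 : Continuous (fun q : ℝ × ℝ × ℝ => cl2 q.1 q.2.1) :=
      continuous_const.max ((continuous_fst.comp continuous_snd).min (hclc.comp continuous_fst))
    have hc3 : Continuous (fun q : ℝ × ℝ × ℝ => cl3 q.1 q.2.1 q.2.2) :=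
      continuous_const.max ((continuous_snd.comp continuous_snd).min hc2)
    have hmap : Continuous (fun q : ℝ × ℝ × ℝ => (cl q.1, cl2 q.1 q.2.1, cl3 q.1 q.2.1 q.2.2)) :=
      (hclc.comp continuous_fst).prodMk (hc2.prodMk hc3)
    exact hh.comp_continuous hmap (fun q =>
      ⟨(hcl3mem q.1 q.2.1 q.2.2).1, (hcl3mem q.1 q.2.1 q.2.2).2,
       (hcl2mem q.1 q.2.1).2, (hclmem q.1).2⟩)
  -- nonnegativity
  have hutnn : ∀ x, 0 ≤ ut x := fun x => hunn _ (hclmem x)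
  have hbtnn : ∀ x, 0 ≤ bt x := fun x => hbnn _ (hclmem x)
  have hktnn : ∀ s τ, 0 ≤ kt s τ := fun s τ =>
    hknn _ _ (hcl2mem s τ).1 (hcl2mem s τ).2 (hclmem s).2
  have hhtnn : ∀ s τ σ, 0 ≤ ht' s τ σ := fun s τ σ =>
    hhnn _ _ _ (hcl3mem s τ σ).1 (hcl3mem s τ σ).2 (hcl2mem s τ).2 (hclmem s).2
  -- equalities on domain
  have hute : ∀ x ∈ Icc α β, ut x = u x := fun x hx => by rw [hut]; simp [hclid x hx]
  have hbte : ∀ x ∈ Icc α β, bt x = b x := fun x hx => by rw [hbt]; simp [hclid x hx]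
  have hate : ∀ x ∈ Icc α β, av x = a x := fun x hx => by rw [hav]; simp [hclid x hx]
  have hkte : ∀ s ∈ Icc α β, ∀ τ ∈ Icc α s, kt s τ = k s τ := fun s hs τ hτ => by
    rw [hkt]; simp only [hclid s hs, hcl2id s hs τ hτ]
  have hhte : ∀ s ∈ Icc α β, ∀ τ ∈ Icc α s, ∀ σ ∈ Icc α τ, ht' s τ σ = h s τ σ :=
    fun s hs τ hτ σ hσ => by
      rw [hht]; simp only [hclid s hs, hcl2id s hs τ hτ, hcl3id s hs τ hτ σ hσ]
  have hatmono : Monotone av := fun x y hxy => hamono (hclmem x) (hclmem y) (hclmono hxy)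
  have hatnn : ∀ x, 0 ≤ av x := fun x => hann _ (hclmem x)
  have hatub : ∀ x, av x ≤ a β := fun x => hamono (hclmem x) ⟨hαβ, le_rfl⟩ (hclmem x).2
  -- reassociation continuity helpers
  have hre : Continuous (fun x : (ℝ × ℝ) × ℝ => (x.1.1, x.1.2, x.2)) :=
    (continuous_fst.comp continuous_fst).prodMk
      ((continuous_snd.comp continuous_fst).prodMk continuous_snd)
  -- kernels integrated
  set Kt : ℝ → ℝ := fun s => ∫ τ in α..s, kt s τ with hKt
  have hKtc : Continuous Kt := by
    apply intervalIntegral.continuous_parametric_intervalIntegral_of_continuous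
      (f := kt) (hf := hktc) continuous_id
  set Ht2 : ℝ → ℝ → ℝ := fun s τ => ∫ σ in α..τ, ht' s τ σ with hHt2
  have hHt2c : Continuous (fun q : ℝ × ℝ => Ht2 q.1 q.2) := by
    apply intervalIntegral.continuous_parametric_intervalIntegral_of_continuous
      (f := fun (q : ℝ × ℝ) σ => ht' q.1 q.2 σ) (hf := hhtc.comp hre) continuous_snd
  set Ht3 : ℝ → ℝ := fun s => ∫ τ in α..s, Ht2 s τ with hHt3
  have hHt3c : Continuous Ht3 := by
    apply intervalIntegral.continuous_parametric_intervalIntegral_of_continuous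
      (f := Ht2) (hf := hHt2c) continuous_id
  set Bt : ℝ → ℝ := fun s => bt s + Kt s + Ht3 s with hBt
  have hBtc : Continuous Bt := (hbtc.add hKtc).add hHt3c
  have hKtnn : ∀ s, α ≤ s → 0 ≤ Kt s := fun s hs =>
    intervalIntegral.integral_nonneg hs (fun τ _ => hktnn s τ)
  have hHt2nn : ∀ s τ, α ≤ τ → 0 ≤ Ht2 s τ := fun s τ hτ =>
    intervalIntegral.integral_nonneg hτ (fun σ _ => hhtnn s τ σ)
  have hHt3nn : ∀ s, α ≤ s → 0 ≤ Ht3 s := fun s hs =>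
    intervalIntegral.integral_nonneg hs (fun τ hτ => hHt2nn s τ hτ.1)
  have hBtnn : ∀ s, α ≤ s → 0 ≤ Bt s := fun s hs => by
    have := hbtnn s; have := hKtnn s hs; have := hHt3nn s hs
    simp only [hBt]; linarith
  have hBte : ∀ s ∈ Icc α β, Bt s = B s := by
    intro s hs
    have ek : Kt s = ∫ τ in α..s, k s τ := by
      refine intervalIntegral.integral_congr ?_
      intro τ hτ
      rw [uIcc_of_le hs.1] at hτ
      exact hkte s hs τ hτ
    have eh : Ht3 s = ∫ τ in α..s, ∫ σ in α..τ, h s τ σ := by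
      refine intervalIntegral.integral_congr ?_
      intro τ hτ
      rw [uIcc_of_le hs.1] at hτ
      show Ht2 s τ = _
      refine intervalIntegral.integral_congr ?_
      intro σ hσ
      rw [uIcc_of_le hτ.1] at hσ
      exact hhte s hs τ hτ σ hσ
    rw [hB s]
    show bt s + Kt s + Ht3 s = _
    rw [hbte s hs, ek, eh]
  -- u-laden parametric integrals
  have hppos : (0:ℝ) < p := lt_trans one_pos hp
  have hupc : Continuous (fun x => ut x ^ p) :=
    hutc.rpow_const (fun x => Or.inr hppos.le)
  have cont1 : Continuous (fun s => ∫ τ in α..s, kt s τ * ut τ ^ p) := by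
    apply intervalIntegral.continuous_parametric_intervalIntegral_of_continuous
      (f := fun s τ => kt s τ * ut τ ^ p)
      (hf := hktc.mul (hupc.comp continuous_snd)) continuous_id
  have cont2 : Continuous (fun q : ℝ × ℝ => ∫ σ in α..q.2, ht' q.1 q.2 σ * ut σ ^ p) := by
    apply intervalIntegral.continuous_parametric_intervalIntegral_of_continuous
      (f := fun (q : ℝ × ℝ) σ => ht' q.1 q.2 σ * ut σ ^ p)
      (hf := (hhtc.comp hre).mul (hupc.comp continuous_snd)) continuous_snd
  have cont3 : Continuous (fun s => ∫ τ in α..s, ∫ σ in α..τ, ht' s τ σ * ut σ ^ p) := by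
    apply intervalIntegral.continuous_parametric_intervalIntegral_of_continuous
      (f := fun s τ => ∫ σ in α..τ, ht' s τ σ * ut σ ^ p) (hf := cont2) continuous_id
  -- tilde form of hbound
  have hboundT : ∀ t ∈ Icc α β,
      u t ≤ av t + (∫ s in α..t, bt s * ut s ^ p)
        + (∫ s in α..t, ∫ τ in α..s, kt s τ * ut τ ^ p)
        + (∫ s in α..t, ∫ τ in α..s, ∫ σ in α..τ, ht' s τ σ * ut σ ^ p) := by
    intro t ht
    have hsub : Icc α t ⊆ Icc α β := Icc_subset_Icc le_rfl ht.2
    have e1 : (∫ s in α..t, b s * u s ^ p) = ∫ s in α..t, bt s * ut s ^ p := by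
      refine intervalIntegral.integral_congr ?_
      intro s hs
      rw [uIcc_of_le ht.1] at hs
      show b s * u s ^ p = bt s * ut s ^ p
      rw [hbte s (hsub hs), hute s (hsub hs)]
    have e2 : (∫ s in α..t, ∫ τ in α..s, k s τ * u τ ^ p)
        = ∫ s in α..t, ∫ τ in α..s, kt s τ * ut τ ^ p := by
      refine intervalIntegral.integral_congr ?_
      intro s hs
      rw [uIcc_of_le ht.1] at hs
      refine intervalIntegral.integral_congr ?_
      intro τ hτ
      rw [uIcc_of_le hs.1] at hτ
      have hτβ : τ ∈ Icc α β := ⟨hτ.1, le_trans hτ.2 (hsub hs).2⟩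
      show k s τ * u τ ^ p = kt s τ * ut τ ^ p
      rw [hkte s (hsub hs) τ hτ, hute τ hτβ]
    have e3 : (∫ s in α..t, ∫ τ in α..s, ∫ σ in α..τ, h s τ σ * u σ ^ p)
        = ∫ s in α..t, ∫ τ in α..s, ∫ σ in α..τ, ht' s τ σ * ut σ ^ p := by
      refine intervalIntegral.integral_congr ?_
      intro s hs
      rw [uIcc_of_le ht.1] at hs
      refine intervalIntegral.integral_congr ?_
      intro τ hτ
      rw [uIcc_of_le hs.1] at hτ
      refine intervalIntegral.integral_congr ?_
      intro σ hσ
      rw [uIcc_of_le hτ.1] at hσ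
      have hσβ : σ ∈ Icc α β := ⟨hσ.1, le_trans hσ.2 (le_trans hτ.2 (hsub hs).2)⟩
      show h s τ σ * u σ ^ p = ht' s τ σ * ut σ ^ p
      rw [hhte s (hsub hs) τ hτ σ hσ, hute σ hσβ]
    have := hbound t ht
    rw [e1, e2, e3, ← hate t ht] at this
    exact this
  intro T hT
  have hp1 : (0:ℝ) < p - 1 := by linarith
  have hapm : Monotone (fun x => av x ^ (p-1)) := fun x y hxy =>
    Real.rpow_le_rpow (hatnn x) (hatmono hxy) hp1.le
  have hapnn : ∀ x, 0 ≤ av x ^ (p-1) := fun x => Real.rpow_nonneg (hatnn x) _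
  have hqint : ∀ c d : ℝ, IntervalIntegrable (fun s => Bt s * av s ^ (p-1)) volume c d :=
    fun c d => (hapm.intervalIntegrable).continuousOn_mul hBtc.continuousOn
  have hqe : ∀ x ∈ Icc α β, (∫ s in α..x, B s * a s ^ (p-1))
      = ∫ s in α..x, Bt s * av s ^ (p-1) := by
    intro x hx
    refine intervalIntegral.integral_congr ?_
    intro s hs
    rw [uIcc_of_le hx.1] at hs
    have hsβ : s ∈ Icc α β := ⟨hs.1, le_trans hs.2 hx.2⟩
    show B s * a s ^ (p-1) = Bt s * av s ^ (p-1)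
    rw [hBte s hsβ, hate s hsβ]
  have hαS : α ∈ {t | t ∈ Icc α β ∧ (p - 1) * ∫ s in α..t, B s * a s ^ (p - 1) < 1} := by
    refine ⟨⟨le_rfl, hαβ⟩, ?_⟩
    rw [intervalIntegral.integral_same, mul_zero]
    exact one_pos
  obtain ⟨x, hxS, hTx⟩ : ∃ x ∈ {t | t ∈ Icc α β ∧
      (p - 1) * ∫ s in α..t, B s * a s ^ (p - 1) < 1}, T < x := by
    apply exists_lt_of_lt_csSup ⟨α, hαS⟩
    rw [← hβp]; exact hT.2
  have hTβ : T ≤ β := le_trans hTx.le hxS.1.2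
  have hTIcc : T ∈ Icc α β := ⟨hT.1, hTβ⟩
  have hIlt : (p - 1) * ∫ s in α..T, Bt s * av s ^ (p - 1) < 1 := by
    have hmono : (∫ s in α..T, Bt s * av s ^ (p-1)) ≤ ∫ s in α..x, Bt s * av s ^ (p-1) := by
      have hadd := intervalIntegral.integral_add_adjacent_intervals (hqint α T) (hqint T x)
      have hnn : 0 ≤ ∫ s in T..x, Bt s * av s ^ (p-1) :=
        intervalIntegral.integral_nonneg hTx.le
          (fun s hs => mul_nonneg (hBtnn s (le_trans hT.1 hs.1)) (hapnn s))
      linarith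
    have hx1 := hxS.2
    rw [hqe x hxS.1] at hx1
    calc (p-1) * ∫ s in α..T, Bt s * av s ^ (p-1)
        ≤ (p-1) * ∫ s in α..x, Bt s * av s ^ (p-1) :=
          mul_le_mul_of_nonneg_left hmono hp1.le
      _ < 1 := hx1
  rw [hqe T hTIcc]
  -- moving average regularization
  set g : ℝ → ℝ → ℝ := fun e x => (av x + e) ^ (p-1) with hg
  set c : ℝ → ℝ → ℝ := fun e s => e⁻¹ * ∫ x in (0:ℝ)..e, g e (x + s) with hc
  have hgm : ∀ e, 0 ≤ e → Monotone (g e) := fun e he x y hxy =>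
    Real.rpow_le_rpow (add_nonneg (hatnn x) he) (add_le_add_left (hatmono hxy) e) hp1.le
  have hgnn : ∀ e x, 0 ≤ e → 0 ≤ g e x := fun e x he => Real.rpow_nonneg (add_nonneg (hatnn x) he) _
  have hgsint : ∀ e s, 0 ≤ e → ∀ c' d' : ℝ, IntervalIntegrable (fun x => g e (x + s)) volume c' d' :=
    fun e s he c' d' => ((hgm e he).comp (fun x y hxy => by simpa using add_le_add_right hxy s)).intervalIntegrable
  have hclb : ∀ e, 0 < e → ∀ s, g e s ≤ c e s := by
    intro e he s
    have h1 : (∫ x in (0:ℝ)..e, g e s) ≤ ∫ x in (0:ℝ)..e, g e (x + s) := by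
      refine intervalIntegral.integral_mono_on he.le
        intervalIntegrable_const (hgsint e s he.le 0 e) ?_
      intro x hx
      exact hgm e he.le (by linarith [hx.1])
    rw [intervalIntegral.integral_const, sub_zero, smul_eq_mul] at h1
    calc g e s = e⁻¹ * (e * g e s) := by field_simp
      _ ≤ e⁻¹ * ∫ x in (0:ℝ)..e, g e (x + s) :=
          mul_le_mul_of_nonneg_left h1 (inv_nonneg.2 he.le)
  have hcub : ∀ e, 0 < e → ∀ s, c e s ≤ g e (e + s) := by
    intro e he s
    have h1 : (∫ x in (0:ℝ)..e, g e (x + s)) ≤ ∫ x in (0:ℝ)..e, g e (e + s) := by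
      refine intervalIntegral.integral_mono_on he.le (hgsint e s he.le 0 e)
        intervalIntegrable_const ?_
      intro x hx
      exact hgm e he.le (by linarith [hx.2])
    rw [intervalIntegral.integral_const, sub_zero, smul_eq_mul] at h1
    calc c e s ≤ e⁻¹ * (e * g e (e + s)) := mul_le_mul_of_nonneg_left h1 (inv_nonneg.2 he.le)
      _ = g e (e + s) := by field_simp
  have hcnn : ∀ e, 0 < e → ∀ s, 0 ≤ c e s := fun e he s =>
    le_trans (hgnn e s he.le) (hclb e he s)
  have hcmono : ∀ e, 0 < e → Monotone (c e) := by
    intro e he s s' hss'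
    refine mul_le_mul_of_nonneg_left ?_ (inv_nonneg.2 he.le)
    refine intervalIntegral.integral_mono_on he.le (hgsint e s he.le 0 e)
      (hgsint e s' he.le 0 e) ?_
    intro x _
    exact hgm e he.le (by linarith)
  have hccont : ∀ e, 0 < e → Continuous (c e) := by
    intro e he
    have hA : Continuous (fun y => ∫ x in (0:ℝ)..y, g e x) :=
      intervalIntegral.continuous_primitive (fun c' d' => (hgm e he.le).intervalIntegrable) 0
    have hce : c e = fun s => e⁻¹ *
        ((∫ x in (0:ℝ)..(e + s), g e x) - ∫ x in (0:ℝ)..(0 + s), g e x) := by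
      funext s
      have h1 : (∫ x in (0:ℝ)..e, g e (x + s)) = ∫ x in (0+s)..(e+s), g e x :=
        intervalIntegral.integral_comp_add_right _ s
      have h2 : (∫ x in (0:ℝ)..(e+s), g e x) - (∫ x in (0:ℝ)..(0+s), g e x)
          = ∫ x in (0+s)..(e+s), g e x :=
        intervalIntegral.integral_interval_sub_left
          ((hgm e he.le).intervalIntegrable) ((hgm e he.le).intervalIntegrable)
      rw [hc]
      show e⁻¹ * ∫ x in (0:ℝ)..e, g e (x + s) = _
      rw [h1, h2]
    rw [hce]
    exact continuous_const.mul
      ((hA.comp (continuous_const.add continuous_id)).sub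
        (hA.comp (continuous_const.add continuous_id)))
  have key : ∀ e : ℝ, 0 < e →
      (p - 1) * (∫ s in α..T, Bt s * c e s) < (1+e) ^ (1-p) →
      u T ≤ (av T + e) *
        ((1+e) ^ (1-p) - (p-1) * ∫ s in α..T, Bt s * c e s) ^ (1/(1-p)) := by
    intro e he hKlt
    have hres := key_lemma α T p e hT.1 hp he ut bt av (c e) Bt kt ht'
      hutc hutnn hbtc hbtnn hktc hktnn hhtc hhtnn hatmono hatnn
      (hccont e he) (hcmono e he) (hcnn e he)
      (fun s => by simpa only [hg] using hclb e he s) (fun s => rfl) hKlt ?_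
    · rw [← hute T hTIcc]
      exact hres
    · intro t ht
      have htβ : t ∈ Icc α β := ⟨ht.1, le_trans ht.2 hTβ⟩
      rw [hute t htβ]
      exact hboundT t htβ
  -- limit passing
  set seq : ℕ → ℝ := fun j => 1 / ((j:ℝ) + 1) with hseq
  have hseqpos : ∀ j, 0 < seq j := fun j => by positivity
  have hseqle1 : ∀ j, seq j ≤ 1 := fun j => by
    rw [hseq]; show 1 / ((j:ℝ) + 1) ≤ 1
    rw [div_le_one (by positivity)]
    simp
  have hseq0 : Tendsto seq atTop (𝓝 0) := tendsto_one_div_add_atTop_nhds_zero_nat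
  set Ij : ℕ → ℝ := fun j => ∫ s in α..T, Bt s * c (seq j) s with hIj
  set Iinf : ℝ := ∫ s in α..T, Bt s * av s ^ (p-1) with hIinf
  have hcball : ∀ e, 0 < e → e ≤ 1 → ∀ s, c e s ≤ (a β + 1) ^ (p-1) := by
    intro e he he1 s
    refine le_trans (hcub e he s) ?_
    exact Real.rpow_le_rpow (add_nonneg (hatnn _) he.le)
      (add_le_add (hatub _) he1) hp1.le
  have hItend : Tendsto Ij atTop (𝓝 Iinf) := by
    apply intervalIntegral.tendsto_integral_filter_of_dominated_convergence
      (fun s => Bt s * (a β + 1) ^ (p-1))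
    · exact Eventually.of_forall (fun j =>
        ((hBtc.mul (hccont (seq j) (hseqpos j))).aestronglyMeasurable).restrict)
    · refine Eventually.of_forall (fun j => Eventually.of_forall (fun s hs => ?_))
      rw [uIoc_of_le hT.1] at hs
      have hBnn : 0 ≤ Bt s := hBtnn s hs.1.le
      have hcnn' : 0 ≤ c (seq j) s := hcnn _ (hseqpos j) s
      rw [Real.norm_eq_abs, abs_of_nonneg (mul_nonneg hBnn hcnn')]
      exact mul_le_mul_of_nonneg_left (hcball _ (hseqpos j) (hseqle1 j) s) hBnn
    · exact (hBtc.mul continuous_const).intervalIntegrable _ _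
    · have hN : (volume {x : ℝ | ¬ContinuousAt av x}) = 0 :=
        Set.Countable.measure_zero (hatmono.countable_not_continuousAt) _
      have hae : ∀ᵐ (x : ℝ), x ∉ {x : ℝ | ¬ContinuousAt av x} :=
        measure_eq_zero_iff_ae_notMem.1 hN
      filter_upwards [hae] with s hs _
      have hconts : ContinuousAt av s := by simpa using hs
      -- squeeze
      have hL : Tendsto (fun j => (av s + seq j) ^ (p-1)) atTop (𝓝 (av s ^ (p-1))) := by
        have h1 : Tendsto (fun j => av s + seq j) atTop (𝓝 (av s)) := by
          simpa using tendsto_const_nhds.add hseq0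
        exact ((Real.continuousAt_rpow_const _ _ (Or.inr hp1.le)).tendsto).comp h1
      have hU : Tendsto (fun j => (av (seq j + s) + seq j) ^ (p-1)) atTop (𝓝 (av s ^ (p-1))) := by
        have h0 : Tendsto (fun j => seq j + s) atTop (𝓝 s) := by
          simpa using hseq0.add (tendsto_const_nhds (x := s))
        have h1 : Tendsto (fun j => av (seq j + s) + seq j) atTop (𝓝 (av s)) := by
          simpa using (hconts.tendsto.comp h0).add hseq0
        exact ((Real.continuousAt_rpow_const _ _ (Or.inr hp1.le)).tendsto).comp h1
      have hsq : Tendsto (fun j => c (seq j) s) atTop (𝓝 (av s ^ (p-1))) := by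
        refine tendsto_of_tendsto_of_tendsto_of_le_of_le hL hU ?_ ?_
        · exact fun j => hclb _ (hseqpos j) s
        · exact fun j => hcub _ (hseqpos j) s
      exact (hsq.const_mul (Bt s))
  have hbasetend : Tendsto (fun j => (1 + seq j) ^ (1-p) - (p-1) * Ij j) atTop
      (𝓝 (1 - (p-1) * Iinf)) := by
    have h1 : Tendsto (fun j => (1 + seq j) ^ (1-p)) atTop (𝓝 1) := by
      have h0 : Tendsto (fun j => 1 + seq j) atTop (𝓝 1) := by
        simpa using tendsto_const_nhds.add hseq0
      have := ((Real.continuousAt_rpow_const (1:ℝ) (1-p) (Or.inl one_ne_zero)).tendsto).comp h0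
      rw [Real.one_rpow] at this; exact this
    exact h1.sub ((hItend.const_mul _))
  have hbasepos : 0 < 1 - (p-1) * Iinf := by
    rw [hIinf]; linarith [hIlt]
  have hfinal : Tendsto (fun j => (av T + seq j) *
      ((1 + seq j) ^ (1-p) - (p-1) * Ij j) ^ (1/(1-p))) atTop
      (𝓝 (av T * (1 - (p-1) * Iinf) ^ (1/(1-p)))) := by
    have h1 : Tendsto (fun j => av T + seq j) atTop (𝓝 (av T)) := by
      simpa using tendsto_const_nhds.add hseq0
    have h2 : Tendsto (fun j => ((1 + seq j) ^ (1-p) - (p-1) * Ij j) ^ (1/(1-p))) atTop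
        (𝓝 ((1 - (p-1) * Iinf) ^ (1/(1-p)))) :=
      ((Real.continuousAt_rpow_const _ _ (Or.inl hbasepos.ne')).tendsto).comp hbasetend
    exact h1.mul h2
  have hev : ∀ᶠ j in atTop, (p-1) * Ij j < (1 + seq j) ^ (1-p) := by
    have h1 : Tendsto (fun j => (p-1) * Ij j) atTop (𝓝 ((p-1) * Iinf)) := hItend.const_mul _
    have h2 : Tendsto (fun j => (1 + seq j) ^ (1-p)) atTop (𝓝 1) := by
      have h0 : Tendsto (fun j => 1 + seq j) atTop (𝓝 1) := by
        simpa using tendsto_const_nhds.add hseq0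
      have := ((Real.continuousAt_rpow_const (1:ℝ) (1-p) (Or.inl one_ne_zero)).tendsto).comp h0
      rw [Real.one_rpow] at this; exact this
    exact h1.eventually_lt h2 (by rw [hIinf]; linarith [hIlt])
  have hev2 : ∀ᶠ j in atTop, u T ≤ (av T + seq j) *
      ((1 + seq j) ^ (1-p) - (p-1) * Ij j) ^ (1/(1-p)) :=
    hev.mono (fun j hj => key (seq j) (hseqpos j) hj)
  have hconc : u T ≤ av T * (1 - (p-1) * Iinf) ^ (1/(1-p)) := ge_of_tendsto hfinal hev2
  rw [hate T hTIcc] at hconc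
  exact hconc
end

section
/- Let u, b be nonnegative continuous on J = [α, β], k(t,s) nonnegative continuous for α ≤ s ≤ t ≤ β, σ : J → ℝ nonnegative continuous and nondecreasing, p > 1 a constant, and a₁ ≥ 0 a constant. Define B₁(t) = b(t) + ∫_α^t k(t,τ) dτ and β_p = sup{t ∈ J : (p−1)·a₁^{p−1}·∫_α^t B₁(s)·σ(s)^{p−1}·exp(σ(s)) ds < 1}. If u(t) ≤ σ(t)·[a₁ + ∫_α^t b(s)u(s)^p ds + ∫_α^t ∫_α^s k(s,τ)u(τ)^p dτ ds] for all t ∈ J, then u(t) ≤ a₁·σ(t)·exp(σ(t))·[1 − (p−1)·a₁^{p−1}·∫_α^t B₁(s)·σ(s)^{p−1}·exp(σ(s)) ds]^{1/(1−p)} for all t ∈ [α, β_p). -/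
open Real Set intervalIntegral

theorem thm_2_3
    (α β p a₁ : ℝ) (hαβ : α ≤ β) (hp : 1 < p) (ha₁ : 0 ≤ a₁)
    (u b σ : ℝ → ℝ) (k : ℝ → ℝ → ℝ)
    (hu : ContinuousOn u (Icc α β)) (hb : ContinuousOn b (Icc α β))
    (hσ : ContinuousOn σ (Icc α β))
    (hk : ContinuousOn (fun q : ℝ × ℝ => k q.1 q.2)
      {q : ℝ × ℝ | α ≤ q.2 ∧ q.2 ≤ q.1 ∧ q.1 ≤ β})
    (hunn : ∀ t ∈ Icc α β, 0 ≤ u t) (hbnn : ∀ t ∈ Icc α β, 0 ≤ b t)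
    (hσnn : ∀ t ∈ Icc α β, 0 ≤ σ t)
    (hσmono : MonotoneOn σ (Icc α β))
    (hknn : ∀ t s, α ≤ s → s ≤ t → t ≤ β → 0 ≤ k t s)
    (B₁ : ℝ → ℝ)
    (hB₁ : ∀ t, B₁ t = b t + ∫ τ in α..t, k t τ)
    (βp : ℝ)
    (hβp : βp = sSup {t ∈ Icc α β |
      (p - 1) * a₁ ^ (p - 1) *
        (∫ s in α..t, B₁ s * σ s ^ (p - 1) * Real.exp (σ s)) < 1})
    (hbound : ∀ t ∈ Icc α β,
      u t ≤ σ t * (a₁ + (∫ s in α..t, b s * u s ^ p)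
        + (∫ s in α..t, ∫ τ in α..s, k s τ * u τ ^ p))) :
    ∀ t ∈ Ico α βp,
      u t ≤ a₁ * σ t * Real.exp (σ t) *
        (1 - (p - 1) * a₁ ^ (p - 1) *
          (∫ s in α..t, B₁ s * σ s ^ (p - 1) * Real.exp (σ s)))
            ^ (1 / (1 - p)) := by
  have hp0 : (0:ℝ) < p := by linarith
  have hp1 : (0:ℝ) < p - 1 := by linarith
  -- clamping map into [α, β]
  set cl : ℝ → ℝ := fun t => max α (min t β) with hcldef
  have hclmem : ∀ t, cl t ∈ Icc α β := fun t =>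
    ⟨le_max_left _ _, max_le hαβ (min_le_right _ _)⟩
  have hcleq : ∀ t ∈ Icc α β, cl t = t := by
    intro t ht
    simp only [hcldef]
    rw [min_eq_left ht.2, max_eq_right ht.1]
  have hclcont : Continuous cl := continuous_const.max (continuous_id.min continuous_const)
  -- extended functions
  set U : ℝ → ℝ := fun t => u (cl t) with hUdef
  set Bb : ℝ → ℝ := fun t => b (cl t) with hBbdef
  set S : ℝ → ℝ := fun t => σ (cl t) with hSdef
  set K : ℝ × ℝ → ℝ := fun q =>
    (fun q : ℝ × ℝ => k q.1 q.2) ((fun q : ℝ × ℝ => (cl q.1, max α (min q.2 (cl q.1)))) q)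
    with hKdef
  have hUcont : Continuous U := hu.comp_continuous hclcont hclmem
  have hBbcont : Continuous Bb := hb.comp_continuous hclcont hclmem
  have hScont : Continuous S := hσ.comp_continuous hclcont hclmem
  have hproj_cont : Continuous (fun q : ℝ × ℝ => (cl q.1, max α (min q.2 (cl q.1)))) := by
    exact ((hclcont.comp continuous_fst)).prodMk
      (continuous_const.max (continuous_snd.min (hclcont.comp continuous_fst)))
  have hproj_mem : ∀ q : ℝ × ℝ, (fun q : ℝ × ℝ => (cl q.1, max α (min q.2 (cl q.1)))) q ∈
      {q : ℝ × ℝ | α ≤ q.2 ∧ q.2 ≤ q.1 ∧ q.1 ≤ β} := by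
    intro q
    refine ⟨le_max_left _ _, max_le (hclmem q.1).1 (min_le_right _ _), (hclmem q.1).2⟩
  have hKcont : Continuous K := hk.comp_continuous hproj_cont hproj_mem
  have hKnn : ∀ q : ℝ × ℝ, 0 ≤ K q := by
    intro q
    exact hknn _ _ (le_max_left _ _) (max_le (hclmem q.1).1 (min_le_right _ _)) (hclmem q.1).2
  have hKeq : ∀ s τ, α ≤ τ → τ ≤ s → s ≤ β → K (s, τ) = k s τ := by
    intro s τ hτ hτs hsβ
    have hs' : cl s = s := hcleq s ⟨hτ.trans hτs, hsβ⟩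
    simp only [hKdef, hs']
    rw [min_eq_left hτs, max_eq_right hτ]
  have hUnn : ∀ t, 0 ≤ U t := fun t => hunn _ (hclmem t)
  have hBbnn : ∀ t, 0 ≤ Bb t := fun t => hbnn _ (hclmem t)
  have hSnn : ∀ t, 0 ≤ S t := fun t => hσnn _ (hclmem t)
  have hUeq : ∀ t ∈ Icc α β, U t = u t := fun t ht => by simp only [hUdef, hcleq t ht]
  have hBbeq : ∀ t ∈ Icc α β, Bb t = b t := fun t ht => by simp only [hBbdef, hcleq t ht]
  have hSeq : ∀ t ∈ Icc α β, S t = σ t := fun t ht => by simp only [hSdef, hcleq t ht]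
  -- the integrand functions
  have hUp_cont : Continuous (fun t => U t ^ p) :=
    hUcont.rpow_const (fun t => Or.inr hp0.le)
  have hg_cont : Continuous (Function.uncurry fun s τ => K (s, τ) * U τ ^ p) := by
    apply Continuous.mul
    · exact hKcont.comp (continuous_fst.prodMk continuous_snd)
    · exact hUp_cont.comp continuous_snd
  set G : ℝ → ℝ := fun s => ∫ τ in α..s, K (s, τ) * U τ ^ p with hGdef
  have hGcont : Continuous G := by
    have := intervalIntegral.continuous_parametric_intervalIntegral_of_continuous
      (μ := MeasureTheory.volume) (a₀ := α) (f := fun s τ => K (s, τ) * U τ ^ p)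
      hg_cont continuous_id
    exact this
  set h : ℝ → ℝ := fun t => Bb t * U t ^ p + G t with hhdef
  have hhcont : Continuous h := (hBbcont.mul hUp_cont).add hGcont
  set v : ℝ → ℝ := fun t => a₁ + ∫ s in α..t, h s with hvdef
  have hvd : ∀ t, HasDerivAt v (h t) t := by
    intro t
    exact HasDerivAt.const_add _ ((hhcont.integral_hasStrictDerivAt α t).hasDerivAt)
  have hvcont : Continuous v := by
    have : Differentiable ℝ v := fun t => (hvd t).differentiableAt
    exact this.continuous
  have hvα : v α = a₁ := by simp [hvdef]
  -- KI and BB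
  set KI : ℝ → ℝ := fun t => ∫ τ in α..t, K (t, τ) with hKIdef
  have hKIcont : Continuous KI := by
    have := intervalIntegral.continuous_parametric_intervalIntegral_of_continuous
      (μ := MeasureTheory.volume) (a₀ := α) (f := fun s τ => K (s, τ))
      (by exact hKcont.comp (continuous_fst.prodMk continuous_snd)) continuous_id
    exact this
  set BB : ℝ → ℝ := fun t => Bb t + KI t with hBBdef
  have hBBcont : Continuous BB := hBbcont.add hKIcont
  have hBBeq : ∀ t ∈ Icc α β, BB t = B₁ t := by
    intro t ht
    rw [hB₁ t]
    simp only [hBBdef, hKIdef, hBbeq t ht]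
    congr 1
    apply intervalIntegral.integral_congr
    intro τ hτ
    rw [uIcc_of_le ht.1] at hτ
    show K (t, τ) = k t τ
    exact hKeq t τ hτ.1 hτ.2 ht.2
  have hBBnn : ∀ t, α ≤ t → 0 ≤ BB t := by
    intro t ht
    exact add_nonneg (hBbnn t) (intervalIntegral.integral_nonneg ht (fun τ _ => hKnn _))
  -- G nonneg on [α, ∞)
  have hGnn : ∀ t, α ≤ t → 0 ≤ G t := by
    intro t ht
    exact intervalIntegral.integral_nonneg ht
      (fun τ _ => mul_nonneg (hKnn _) (Real.rpow_nonneg (hUnn τ) p))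
  have hhnn : ∀ t, α ≤ t → 0 ≤ h t := by
    intro t ht
    exact add_nonneg (mul_nonneg (hBbnn t) (Real.rpow_nonneg (hUnn t) p)) (hGnn t ht)
  -- v equals the statement's expression on [α, β]
  have hveq : ∀ t ∈ Icc α β,
      v t = a₁ + (∫ s in α..t, b s * u s ^ p)
        + (∫ s in α..t, ∫ τ in α..s, k s τ * u τ ^ p) := by
    intro t ht
    have h1 : (∫ s in α..t, h s)
        = (∫ s in α..t, Bb s * U s ^ p) + ∫ s in α..t, G s := by
      rw [← intervalIntegral.integral_add (f := fun s => Bb s * U s ^ p)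
        ((hBbcont.mul hUp_cont).intervalIntegrable _ _) (hGcont.intervalIntegrable _ _)]
    have h2 : (∫ s in α..t, Bb s * U s ^ p) = ∫ s in α..t, b s * u s ^ p := by
      apply intervalIntegral.integral_congr
      intro s hs
      rw [uIcc_of_le ht.1] at hs
      have hs' : s ∈ Icc α β := ⟨hs.1, hs.2.trans ht.2⟩
      show Bb s * U s ^ p = b s * u s ^ p
      rw [hBbeq s hs', hUeq s hs']
    have h3 : (∫ s in α..t, G s) = ∫ s in α..t, ∫ τ in α..s, k s τ * u τ ^ p := by
      apply intervalIntegral.integral_congr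
      intro s hs
      rw [uIcc_of_le ht.1] at hs
      have hs' : s ∈ Icc α β := ⟨hs.1, hs.2.trans ht.2⟩
      show G s = ∫ τ in α..s, k s τ * u τ ^ p
      apply intervalIntegral.integral_congr
      intro τ hτ
      rw [uIcc_of_le hs.1] at hτ
      have hτ' : τ ∈ Icc α β := ⟨hτ.1, (hτ.2.trans hs'.2)⟩
      show K (s, τ) * U τ ^ p = k s τ * u τ ^ p
      rw [hKeq s τ hτ.1 hτ.2 hs'.2, hUeq τ hτ']
    simp only [hvdef]
    rw [h1, h2, h3, add_assoc]
  have huv : ∀ t ∈ Icc α β, u t ≤ σ t * v t := by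
    intro t ht
    rw [hveq t ht]
    exact hbound t ht
  -- v is monotone on [α, β], and v ≥ a₁ there
  have hvmono : MonotoneOn v (Icc α β) := by
    apply monotoneOn_of_deriv_nonneg (convex_Icc α β) hvcont.continuousOn
    · exact fun x _ => (hvd x).differentiableAt.differentiableWithinAt
    · intro x hx
      rw [interior_Icc] at hx
      rw [(hvd x).deriv]
      exact hhnn x hx.1.le
  have hva₁ : ∀ t ∈ Icc α β, a₁ ≤ v t := by
    intro t ht
    have := hvmono (left_mem_Icc.2 hαβ) ht ht.1
    rwa [hvα] at this
  have hvnn : ∀ t ∈ Icc α β, 0 ≤ v t := fun t ht => ha₁.trans (hva₁ t ht)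
  -- key derivative bound
  have hkey : ∀ t ∈ Icc α β, h t ≤ BB t * (S t ^ p * v t ^ p) := by
    intro t ht
    have hσv_mono : ∀ τ ∈ Icc α t, S τ * v τ ≤ S t * v t := by
      intro τ hτ
      have hτ' : τ ∈ Icc α β := ⟨hτ.1, hτ.2.trans ht.2⟩
      have h1 : S τ ≤ S t := by
        rw [hSeq τ hτ', hSeq t ht]; exact hσmono hτ' ht hτ.2
      have h2 : v τ ≤ v t := hvmono hτ' ht hτ.2
      exact mul_le_mul h1 h2 (hvnn τ hτ') (hSnn t)
    have huSv : ∀ τ ∈ Icc α t, U τ ^ p ≤ (S t * v t) ^ p := by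
      intro τ hτ
      have hτ' : τ ∈ Icc α β := ⟨hτ.1, hτ.2.trans ht.2⟩
      apply Real.rpow_le_rpow (hUnn τ) _ hp0.le
      calc U τ = u τ := hUeq τ hτ'
        _ ≤ σ τ * v τ := huv τ hτ'
        _ = S τ * v τ := by rw [hSeq τ hτ']
        _ ≤ S t * v t := hσv_mono τ hτ
    have hterm1 : Bb t * U t ^ p ≤ Bb t * (S t * v t) ^ p :=
      mul_le_mul_of_nonneg_left (huSv t ⟨ht.1, le_refl t⟩) (hBbnn t)
    have hterm2 : G t ≤ KI t * (S t * v t) ^ p := by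
      have : G t ≤ ∫ τ in α..t, K (t, τ) * (S t * v t) ^ p := by
        apply intervalIntegral.integral_mono_on ht.1
        · exact (((hKcont.comp (continuous_const.prodMk continuous_id)).mul
            hUp_cont)).intervalIntegrable _ _
        · exact ((hKcont.comp (continuous_const.prodMk continuous_id)).mul
            continuous_const).intervalIntegrable _ _
        · intro τ hτ
          exact mul_le_mul_of_nonneg_left (huSv τ hτ) (hKnn _)
      calc G t ≤ ∫ τ in α..t, K (t, τ) * (S t * v t) ^ p := this
        _ = (∫ τ in α..t, K (t, τ)) * (S t * v t) ^ p := by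
            rw [intervalIntegral.integral_mul_const]
        _ = KI t * (S t * v t) ^ p := rfl
    have hmul : (S t * v t) ^ p = S t ^ p * v t ^ p :=
      Real.mul_rpow (hSnn t) (hvnn t ht)
    calc h t = Bb t * U t ^ p + G t := rfl
      _ ≤ Bb t * (S t * v t) ^ p + KI t * (S t * v t) ^ p := add_le_add hterm1 hterm2
      _ = BB t * (S t * v t) ^ p := by rw [hBBdef]; ring
      _ = BB t * (S t ^ p * v t ^ p) := by rw [hmul]
  -- the set defining βp
  set Sset : Set ℝ := {t ∈ Icc α β |
      (p - 1) * a₁ ^ (p - 1) *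
        (∫ s in α..t, B₁ s * σ s ^ (p - 1) * Real.exp (σ s)) < 1} with hSset
  have hSsetne : Sset.Nonempty := by
    refine ⟨α, ⟨left_mem_Icc.2 hαβ, ?_⟩⟩
    simp
  have hSsetbdd : BddAbove Sset := ⟨β, fun x hx => hx.1.2⟩
  have hβpβ : βp ≤ β := by
    rw [hβp]; exact csSup_le hSsetne (fun x hx => hx.1.2)
  -- continuity of the statement integrand on [α, β]
  have hJint_cont : ContinuousOn (fun s => B₁ s * σ s ^ (p - 1) * Real.exp (σ s)) (Icc α β) := by
    have hB₁cont : ContinuousOn B₁ (Icc α β) := by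
      apply hBBcont.continuousOn.congr
      intro x hx
      exact (hBBeq x hx).symm
    exact (hB₁cont.mul (hσ.rpow_const (fun x _ => Or.inr hp1.le))).mul (Real.continuous_exp.comp_continuousOn hσ)
  have hJint_nn : ∀ s ∈ Icc α β, 0 ≤ B₁ s * σ s ^ (p - 1) * Real.exp (σ s) := by
    intro s hs
    apply mul_nonneg (mul_nonneg _ (Real.rpow_nonneg (hσnn s hs) _)) (Real.exp_pos _).le
    rw [← hBBeq s hs]
    exact hBBnn s hs.1
  -- main goal
  intro t htmem
  obtain ⟨htα, htβp⟩ := htmem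
  have htβ : t ≤ β := le_trans (le_of_lt htβp) hβpβ
  have ht : t ∈ Icc α β := ⟨htα, htβ⟩
  -- 1 - F t > 0
  have hFt : (p - 1) * a₁ ^ (p - 1) *
      (∫ s in α..t, B₁ s * σ s ^ (p - 1) * Real.exp (σ s)) < 1 := by
    rw [hβp] at htβp
    obtain ⟨s, hsS, hts⟩ := exists_lt_of_lt_csSup hSsetne htβp
    have hs : s ∈ Icc α β := hsS.1
    have hmono : (∫ r in α..t, B₁ r * σ r ^ (p - 1) * Real.exp (σ r))
        ≤ ∫ r in α..s, B₁ r * σ r ^ (p - 1) * Real.exp (σ r) := by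
      have hi1 : IntervalIntegrable (fun r => B₁ r * σ r ^ (p - 1) * Real.exp (σ r))
          MeasureTheory.volume α t := by
        apply ContinuousOn.intervalIntegrable
        apply hJint_cont.mono
        rw [uIcc_of_le htα]
        exact Icc_subset_Icc le_rfl htβ
      have hi2 : IntervalIntegrable (fun r => B₁ r * σ r ^ (p - 1) * Real.exp (σ r))
          MeasureTheory.volume t s := by
        apply ContinuousOn.intervalIntegrable
        apply hJint_cont.mono
        rw [uIcc_of_le hts.le]
        exact Icc_subset_Icc htα hs.2
      rw [← intervalIntegral.integral_add_adjacent_intervals hi1 hi2]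
      have : 0 ≤ ∫ r in t..s, B₁ r * σ r ^ (p - 1) * Real.exp (σ r) := by
        apply intervalIntegral.integral_nonneg hts.le
        intro r hr
        exact hJint_nn r ⟨htα.trans hr.1, hr.2.trans hs.2⟩
      linarith
    have h1 : (p - 1) * a₁ ^ (p - 1) * (∫ r in α..t, B₁ r * σ r ^ (p - 1) * Real.exp (σ r))
        ≤ (p - 1) * a₁ ^ (p - 1) * (∫ r in α..s, B₁ r * σ r ^ (p - 1) * Real.exp (σ r)) := by
      apply mul_le_mul_of_nonneg_left hmono
      exact mul_nonneg hp1.le (Real.rpow_nonneg ha₁ _)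
    exact lt_of_le_of_lt h1 hsS.2
  set J : ℝ := ∫ s in α..t, B₁ s * σ s ^ (p - 1) * Real.exp (σ s) with hJdef
  set F : ℝ := (p - 1) * a₁ ^ (p - 1) * J with hFdef
  have hJnn : 0 ≤ J := intervalIntegral.integral_nonneg htα
    (fun s hs => hJint_nn s ⟨hs.1, hs.2.trans htβ⟩)
  -- split on a₁ = 0
  rcases eq_or_lt_of_le ha₁ with ha₀ | ha₁pos
  · -- a₁ = 0 : Gronwall forces v = 0
    have ha₀' : a₁ = 0 := ha₀.symm
    -- bound h ≤ M * v on [α, β]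
    obtain ⟨M₀, hM₀⟩ := (isCompact_Icc (a := α) (b := β)).exists_bound_of_continuousOn
      ((hBBcont.mul (hScont.rpow_const (fun x => Or.inr hp0.le))).mul
        (hvcont.rpow_const (fun x => Or.inr hp1.le))).continuousOn
    set M : ℝ := max M₀ 0 with hMdef
    have hbound' : ∀ x ∈ Ico α β, ‖h x‖ ≤ M * ‖v x‖ + 0 := by
      intro x hx
      have hx' : x ∈ Icc α β := ⟨hx.1, hx.2.le⟩
      have hvp : v x ^ p = v x ^ (p - 1) * v x := by
        have hpe : p - 1 + 1 = p := by ring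
        calc v x ^ p = v x ^ (p - 1 + 1) := by rw [hpe]
          _ = v x ^ (p - 1) * v x := Real.rpow_add_one' (hvnn x hx') (by rw [hpe]; exact hp0.ne')
      have h1 : h x ≤ (BB x * S x ^ p * v x ^ (p-1)) * v x := by
        calc h x ≤ BB x * (S x ^ p * v x ^ p) := hkey x hx'
          _ = (BB x * S x ^ p * v x ^ (p-1)) * v x := by rw [hvp]; ring
      have h2 : BB x * S x ^ p * v x ^ (p-1) ≤ M := by
        calc BB x * S x ^ p * v x ^ (p-1)
            ≤ ‖BB x * S x ^ p * v x ^ (p-1)‖ := le_norm_self _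
          _ ≤ M₀ := hM₀ x hx'
          _ ≤ M := le_max_left _ _
      rw [Real.norm_of_nonneg (hhnn x hx.1), Real.norm_of_nonneg (hvnn x hx'), add_zero]
      calc h x ≤ (BB x * S x ^ p * v x ^ (p-1)) * v x := h1
        _ ≤ M * v x := mul_le_mul_of_nonneg_right h2 (hvnn x hx')
    have hgr := norm_le_gronwallBound_of_norm_deriv_right_le (f := v) (f' := h)
      (δ := 0) (K := M) (ε := 0) hvcont.continuousOn
      (fun x hx => (hvd x).hasDerivWithinAt) (by rw [hvα, ha₀']; simp) hbound'
    have hv0 : v t = 0 := by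
      have := hgr t ht
      rw [gronwallBound_ε0_δ0] at this
      have h1 : ‖v t‖ ≤ 0 := this
      have := norm_nonneg (v t)
      have : ‖v t‖ = 0 := le_antisymm h1 this
      exact norm_eq_zero.1 this
    have : u t ≤ 0 := by
      have := huv t ht
      rw [hv0, mul_zero] at this
      exact this
    have hz : a₁ * σ t * Real.exp (σ t) * (1 - F) ^ (1 / (1 - p)) = 0 := by
      rw [ha₀']; ring
    linarith [this, hz.ge]
  · -- a₁ > 0 : nonlinear comparison
    have hvpos : ∀ x ∈ Icc α β, 0 < v x := fun x hx => lt_of_lt_of_le ha₁pos (hva₁ x hx)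
    -- Θ is monotone
    set Θ : ℝ → ℝ := fun r => v r ^ (1 - p) - (1 - p) * ∫ s in α..r, BB s * S s ^ p with hΘdef
    have hBBSp_cont : Continuous (fun s => BB s * S s ^ p) :=
      hBBcont.mul (hScont.rpow_const (fun x => Or.inr hp0.le))
    have hΘd : ∀ x ∈ Ioo α β, HasDerivAt Θ
        (h x * (1 - p) * v x ^ (1 - p - 1) - (1 - p) * (BB x * S x ^ p)) x := by
      intro x hx
      have hx' : x ∈ Icc α β := ⟨hx.1.le, hx.2.le⟩
      have h1 : HasDerivAt (fun r => v r ^ (1 - p)) (h x * (1 - p) * v x ^ (1 - p - 1)) x :=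
        (hvd x).rpow_const (Or.inl (hvpos x hx').ne')
      have h2 : HasDerivAt (fun r => (1 - p) * ∫ s in α..r, BB s * S s ^ p)
          ((1 - p) * (BB x * S x ^ p)) x :=
        ((hBBSp_cont.integral_hasStrictDerivAt α x).hasDerivAt).const_mul _
      exact h1.sub h2
    have hΘcont : ContinuousOn Θ (Icc α β) := by
      apply ContinuousOn.sub
      · exact hvcont.continuousOn.rpow_const (fun x hx => Or.inl (hvpos x hx).ne')
      · apply Continuous.continuousOn
        apply Continuous.mul continuous_const
        exact intervalIntegral.continuous_primitive
          (fun a b => hBBSp_cont.intervalIntegrable a b) α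
    have hΘmono : MonotoneOn Θ (Icc α β) := by
      apply monotoneOn_of_deriv_nonneg (convex_Icc α β) hΘcont
      · intro x hx
        rw [interior_Icc] at hx
        exact (hΘd x hx).differentiableAt.differentiableWithinAt
      · intro x hx
        rw [interior_Icc] at hx
        have hx' : x ∈ Icc α β := ⟨hx.1.le, hx.2.le⟩
        rw [(hΘd x hx).deriv]
        have hvx := hvpos x hx'
        have hexp : (1 : ℝ) - p - 1 = -p := by ring
        have hinv : v x ^ (1 - p - 1) * v x ^ p = 1 := by
          rw [hexp, ← Real.rpow_add hvx]
          simp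
        have hnn : v x ^ (1 - p - 1) * h x ≤ BB x * S x ^ p := by
          calc v x ^ (1 - p - 1) * h x
              ≤ v x ^ (1 - p - 1) * (BB x * (S x ^ p * v x ^ p)) := by
                apply mul_le_mul_of_nonneg_left (hkey x hx')
                exact Real.rpow_nonneg hvx.le _
            _ = (BB x * S x ^ p) * (v x ^ (1 - p - 1) * v x ^ p) := by ring
            _ = BB x * S x ^ p := by rw [hinv, mul_one]
        have hrw : h x * (1 - p) * v x ^ (1 - p - 1) - (1 - p) * (BB x * S x ^ p)
            = (p - 1) * (BB x * S x ^ p - v x ^ (1 - p - 1) * h x) := by ring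
        rw [hrw]
        exact mul_nonneg hp1.le (by linarith [hnn])
    -- from Θ α ≤ Θ t
    have hΘα : Θ α = a₁ ^ (1 - p) := by
      simp [hΘdef, hvα]
    have hΘt : a₁ ^ (1 - p) ≤ Θ t := by
      rw [← hΘα]
      exact hΘmono (left_mem_Icc.2 hαβ) ht htα
    set I₂ : ℝ := ∫ s in α..t, BB s * S s ^ p with hI₂def
    have hφ : a₁ ^ (1 - p) + (1 - p) * I₂ ≤ v t ^ (1 - p) := by
      have : Θ t = v t ^ (1 - p) - (1 - p) * I₂ := rfl
      linarith [hΘt, this ▸ hΘt]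
    -- I₂ ≤ J
    have hI₂J : I₂ ≤ J := by
      apply intervalIntegral.integral_mono_on htα
      · exact hBBSp_cont.intervalIntegrable _ _
      · apply ContinuousOn.intervalIntegrable
        apply hJint_cont.mono
        rw [uIcc_of_le htα]
        exact Icc_subset_Icc le_rfl htβ
      · intro s hs
        have hs' : s ∈ Icc α β := ⟨hs.1, hs.2.trans htβ⟩
        rw [hBBeq s hs', hSeq s hs']
        rcases eq_or_lt_of_le (hσnn s hs') with hσ0 | hσpos
        · rw [← hσ0, Real.zero_rpow hp0.ne', Real.zero_rpow (by linarith : p - 1 ≠ 0)]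
          simp
        · have hpe : p - 1 + 1 = p := by ring
          have h1 : σ s ^ p = σ s ^ (p - 1) * σ s := by
            calc σ s ^ p = σ s ^ (p - 1 + 1) := by rw [hpe]
              _ = σ s ^ (p - 1) * σ s := Real.rpow_add_one hσpos.ne' _
          rw [h1]
          have h2 : σ s ≤ Real.exp (σ s) := by
            have := Real.add_one_le_exp (σ s)
            linarith
          have hBnn : 0 ≤ B₁ s := by rw [← hBBeq s hs']; exact hBBnn s hs'.1
          calc B₁ s * (σ s ^ (p - 1) * σ s)
              ≤ B₁ s * (σ s ^ (p - 1) * Real.exp (σ s)) := by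
                apply mul_le_mul_of_nonneg_left _ hBnn
                exact mul_le_mul_of_nonneg_left h2 (Real.rpow_nonneg hσpos.le _)
            _ = B₁ s * σ s ^ (p - 1) * Real.exp (σ s) := by ring
    -- the bracket
    have hW : a₁ ^ (1 - p) * (1 - F) ≤ v t ^ (1 - p) := by
      have hcoef : a₁ ^ (1 - p) * (p - 1) * a₁ ^ (p - 1) = p - 1 := by
        rw [mul_comm (a₁ ^ (1 - p)) (p - 1), mul_assoc, ← Real.rpow_add ha₁pos]
        simp
      have : a₁ ^ (1 - p) * (1 - F) = a₁ ^ (1 - p) - (p - 1) * J := by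
        rw [hFdef]
        have := hcoef
        nlinarith [hcoef]
      rw [this]
      have h1 : (p - 1) * I₂ ≤ (p - 1) * J := mul_le_mul_of_nonneg_left hI₂J hp1.le
      linarith [hφ]
    have hbracket_pos : 0 < 1 - F := by linarith [hFt]
    have hWpos : 0 < a₁ ^ (1 - p) * (1 - F) :=
      mul_pos (Real.rpow_pos_of_pos ha₁pos _) hbracket_pos
    -- invert
    have h1p_ne : (1 : ℝ) - p ≠ 0 := by linarith
    have hinv_le : v t ≤ (a₁ ^ (1 - p) * (1 - F)) ^ (1 / (1 - p)) := by
      have hdp : (1:ℝ) / (1 - p) ≤ 0 :=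
        le_of_lt (div_neg_of_pos_of_neg one_pos (by linarith))
      have := Real.rpow_le_rpow_of_nonpos hWpos hW hdp
      have hvt : (v t ^ (1 - p)) ^ (1 / (1 - p)) = v t := by
        rw [← Real.rpow_mul (hvnn t ht), mul_one_div, div_self h1p_ne, Real.rpow_one]
      rw [← hvt]
      exact this
    have hsplit : (a₁ ^ (1 - p) * (1 - F)) ^ (1 / (1 - p))
        = a₁ * (1 - F) ^ (1 / (1 - p)) := by
      rw [Real.mul_rpow (Real.rpow_nonneg ha₁ _) hbracket_pos.le]
      congr 1
      rw [← Real.rpow_mul ha₁]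
      rw [mul_one_div, div_self h1p_ne, Real.rpow_one]
    have hvt_le : v t ≤ a₁ * (1 - F) ^ (1 / (1 - p)) := by
      rw [← hsplit]; exact hinv_le
    -- conclude
    have hσt := hσnn t ht
    have hexp1 : (1 : ℝ) ≤ Real.exp (σ t) := Real.one_le_exp hσt
    have hrnn : 0 ≤ (1 - F) ^ (1 / (1 - p)) := Real.rpow_nonneg hbracket_pos.le _
    calc u t ≤ σ t * v t := huv t ht
      _ ≤ σ t * (a₁ * (1 - F) ^ (1 / (1 - p))) := by
          apply mul_le_mul_of_nonneg_left hvt_le hσt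
      _ = a₁ * σ t * 1 * (1 - F) ^ (1 / (1 - p)) := by ring
      _ ≤ a₁ * σ t * Real.exp (σ t) * (1 - F) ^ (1 / (1 - p)) := by
          apply mul_le_mul_of_nonneg_right _ hrnn
          apply mul_le_mul_of_nonneg_left hexp1 (mul_nonneg ha₁ hσt)
end

section
/- Let u, a, b be nonnegative continuous on J = [α, β] with b(t) > 0, p > 1 a constant, and suppose a(t)/b(t) is nondecreasing on J. Let k(t,s) be nonnegative continuous for α ≤ s ≤ t ≤ β with nonnegative continuous partial derivative ∂k/∂t. Define R(t) = k(t,t)·b(t)^p and Q(t) = ∫_α^t ∂k/∂t(t,s)·b(s)^p ds. If u(t) ≤ a(t) + b(t)·∫_α^t k(t,s)·u(s)^p ds for all t ∈ J, then u(t) ≤ a(t)·[1 − (p−1)·∫_α^t (a(s)/b(s))^{p−1}·(R(s) + Q(s)) ds]^{1/(1−p)} for all t ∈ [α, β̃_p), where β̃_p = sup{t ∈ J : (p−1)·∫_α^t (a(s)/b(s))^{p−1}·(R(s)+Q(s)) ds < 1}. -/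
open Real Set intervalIntegral
open MeasureTheory

lemma aux_ind (f : ℝ → ℝ) (a b : ℝ) (h : a ≤ b) :
    ∫ y, (Icc a b).indicator f y = ∫ y in a..b, f y := by
  rw [MeasureTheory.integral_indicator measurableSet_Icc,
    MeasureTheory.integral_Icc_eq_integral_Ioc, intervalIntegral.integral_of_le h]

lemma aux_chain (Φ : ℝ → ℝ) (τ T : ℝ) (hτT : τ ≤ T)
    (key : ∀ ε > (0:ℝ), ∃ δ > (0:ℝ), ∀ t1 t2, τ ≤ t1 → t1 ≤ t2 → t2 ≤ T →
      t2 - t1 ≤ δ → Φ t1 - Φ t2 ≤ ε * (t2 - t1)) : Φ τ ≤ Φ T := by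
  have main : ∀ ε > (0:ℝ), Φ τ - Φ T ≤ ε * (T - τ) := by
    intro ε hε
    obtain ⟨δ, hδ, hkey⟩ := key ε hε
    obtain ⟨N, hN⟩ := exists_nat_ge ((T - τ) / δ)
    have hn0 : (0:ℝ) < (N:ℝ) + 1 := by positivity
    set h : ℝ := (T - τ) / ((N:ℝ) + 1) with hh
    have hTτ : 0 ≤ T - τ := by linarith
    have hh0 : 0 ≤ h := div_nonneg hTτ hn0.le
    have hNδ : T - τ ≤ (N:ℝ) * δ := by
      have := (div_le_iff₀ hδ).1 hN; linarith
    have hhδ : h ≤ δ := by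
      rw [hh, div_le_iff₀ hn0]
      nlinarith [hδ.le]
    have hnh : ((N:ℝ) + 1) * h = T - τ := by
      rw [hh]; field_simp
    have claim : ∀ i : ℕ, (i:ℝ) ≤ (N:ℝ) + 1 → Φ τ - Φ (τ + i * h) ≤ ε * (i * h) := by
      intro i
      induction i with
      | zero => intro _; simp
      | succ i ih =>
        intro hin
        have hcast : ((i+1 : ℕ):ℝ) = (i:ℝ) + 1 := by push_cast; ring
        rw [hcast] at hin ⊢
        have hi : (i:ℝ) ≤ (N:ℝ) + 1 := by linarith
        have hInn : (0:ℝ) ≤ (i:ℝ) := Nat.cast_nonneg i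
        have h1 : τ ≤ τ + i * h := by nlinarith
        have h2 : τ + (i:ℝ) * h ≤ τ + ((i:ℝ)+1) * h := by nlinarith
        have h3 : τ + ((i:ℝ)+1) * h ≤ T := by nlinarith
        have h4 : (τ + ((i:ℝ)+1) * h) - (τ + (i:ℝ) * h) ≤ δ := by
          have : (τ + ((i:ℝ)+1) * h) - (τ + (i:ℝ) * h) = h := by ring
          linarith
        have hk := hkey (τ + (i:ℝ)*h) (τ + ((i:ℝ)+1)*h) h1 h2 h3 h4
        have hih := ih hi
        have : (τ + ((i:ℝ)+1) * h) - (τ + (i:ℝ) * h) = h := by ring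
        rw [this] at hk
        nlinarith
    have hfin := claim (N+1) (by push_cast; exact le_refl _)
    push_cast at hfin
    have hTeq : τ + ((N:ℝ)+1) * h = T := by linarith [hnh]
    rw [hTeq] at hfin
    nlinarith
  by_contra hc
  push_neg at hc
  have hd : 0 < Φ τ - Φ T := by linarith
  have hT : 0 ≤ T - τ := by linarith
  have hε : 0 < (Φ τ - Φ T) / (2*(T - τ) + 1) := by positivity
  have h1 := main _ hε
  rw [div_mul_eq_mul_div] at h1
  rw [le_div_iff₀ (by positivity : (0:ℝ) < 2*(T-τ)+1)] at h1
  nlinarith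

lemma aux_zero (u : ℝ → ℝ) (α τ0 C U : ℝ) (hτ : α ≤ τ0) (hC : 0 ≤ C) (hU : 0 ≤ U)
    (hcont : ContinuousOn u (Icc α τ0))
    (hub : ∀ t ∈ Icc α τ0, u t ≤ U)
    (h : ∀ t ∈ Icc α τ0, u t ≤ C * ∫ s in α..t, u s) :
    ∀ t ∈ Icc α τ0, u t ≤ 0 := by
  have hint : ∀ t ∈ Icc α τ0, IntervalIntegrable u volume α t := by
    intro t ht
    exact (hcont.mono (by rw [uIcc_of_le ht.1]; exact Icc_subset_Icc le_rfl ht.2)).intervalIntegrable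
  have claim : ∀ n : ℕ, ∀ t ∈ Icc α τ0, u t ≤ U * (C * (t - α))^n / n.factorial := by
    intro n
    induction n with
    | zero => intro t ht; simpa using hub t ht
    | succ n ih =>
      intro t ht
      have h1 : u t ≤ C * ∫ s in α..t, u s := h t ht
      have h2 : (∫ s in α..t, u s) ≤ ∫ s in α..t, U * (C * (s - α))^n / n.factorial := by
        apply intervalIntegral.integral_mono_on ht.1 (hint t ht)
          ((by continuity : Continuous fun s:ℝ => U * (C * (s - α))^n / n.factorial).intervalIntegrable _ _)
        intro s hs
        exact ih s ⟨hs.1, hs.2.trans ht.2⟩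
      have h3 : (∫ s in α..t, U * (C * (s - α))^n / n.factorial)
          = U * C^n / n.factorial * ((t - α)^(n+1)/((n:ℝ)+1)) := by
        have he : ∀ s : ℝ, U * (C * (s - α))^n / n.factorial
            = U * C^n / n.factorial * (s - α)^n := by intro s; rw [mul_pow]; ring
        simp_rw [he]
        rw [intervalIntegral.integral_const_mul]
        rw [intervalIntegral.integral_comp_sub_right (fun x => x^n) α]
        simp [integral_pow]
      have hfact : (0:ℝ) < n.factorial := by positivity
      calc u t ≤ C * ∫ s in α..t, u s := h1
        _ ≤ C * (U * C^n / n.factorial * ((t-α)^(n+1)/((n:ℝ)+1))) := by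
            apply mul_le_mul_of_nonneg_left _ hC
            rw [← h3]; exact h2
        _ = U * (C * (t-α))^(n+1) / (n+1).factorial := by
            rw [Nat.factorial_succ, mul_pow]
            push_cast
            field_simp
            ring
  intro t ht
  have htend : Filter.Tendsto (fun n : ℕ => U * (C * (t - α))^n / n.factorial)
      Filter.atTop (nhds 0) := by
    simp_rw [mul_div_assoc]
    have := (FloorSemiring.tendsto_pow_div_factorial_atTop (C * (t - α))).const_mul U
    simpa using this
  exact ge_of_tendsto' htend (fun n => claim n t ht)

lemma aux_convex (p γ w1 w2 : ℝ) (hp : 1 < p) (hγ : 0 < γ) (hw1 : 0 ≤ w1) (hw : w1 ≤ w2) :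
    (γ/(γ+w1))^(p-1) - (γ/(γ+w2))^(p-1) ≤ (p-1) * γ^(p-1) / (γ+w1)^p * (w2 - w1) := by
  have hx1 : 0 < γ + w1 := by linarith
  have hx2 : 0 < γ + w2 := by linarith
  have core : (γ+w1)^(1-p) - (γ+w2)^(1-p) ≤ (p-1) * (γ+w1)^(-p) * (w2 - w1) := by
    have hderiv : ∀ x ∈ uIcc w1 w2, HasDerivAt (fun w => (γ + w)^(1-p))
        ((1-p) * (γ + x)^(-p)) x := by
      intro x hx
      rw [uIcc_of_le hw] at hx
      have hgx : 0 < γ + x := by linarith [hx.1]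
      have h1 : HasDerivAt (fun y : ℝ => y ^ (1-p)) ((1-p) * (γ+x)^(1-p-1)) (γ + x) :=
        Real.hasDerivAt_rpow_const (Or.inl hgx.ne')
      have h2 : HasDerivAt (fun w : ℝ => γ + w) 1 x := (hasDerivAt_id x).const_add γ
      have := h1.comp x h2
      simp only [mul_one] at this
      rw [show (-p) = 1 - p - 1 by ring]
      exact this
    have hint : IntervalIntegrable (fun x => (1-p) * (γ + x)^(-p)) volume w1 w2 := by
      apply ContinuousOn.intervalIntegrable
      apply ContinuousOn.mul continuousOn_const
      apply ContinuousOn.rpow_const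
      · exact (continuousOn_const.add continuousOn_id)
      · intro x hx
        rw [uIcc_of_le hw] at hx
        exact Or.inl (by linarith [hx.1] : (0:ℝ) < γ + x).ne'
    have heq : (∫ x in w1..w2, (1-p) * (γ + x)^(-p)) = (γ+w2)^(1-p) - (γ+w1)^(1-p) := by
      simpa using intervalIntegral.integral_eq_sub_of_hasDerivAt hderiv hint
    have hmono : (∫ x in w1..w2, (1-p) * (γ + x)^(-p))
        ≥ ∫ x in w1..w2, (1-p) * (γ + w1)^(-p) := by
      apply intervalIntegral.integral_mono_on hw (intervalIntegrable_const) hint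
      intro x hx
      have hgx : 0 < γ + x := by linarith [hx.1]
      have hle : (γ + x)^(-p) ≤ (γ + w1)^(-p) :=
        Real.rpow_le_rpow_of_nonpos hx1 (by linarith [hx.1]) (by linarith)
      nlinarith [hle]
    rw [intervalIntegral.integral_const, smul_eq_mul] at hmono
    nlinarith [heq, hmono]
  have hrw : ∀ w : ℝ, 0 < γ + w → (γ/(γ+w))^(p-1) = γ^(p-1) * (γ+w)^(1-p) := by
    intro w hw'
    rw [Real.div_rpow hγ.le hw'.le]
    rw [show (1-p) = -(p-1) by ring, Real.rpow_neg hw'.le]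
    rw [div_eq_mul_inv]
  rw [hrw w1 hx1, hrw w2 hx2]
  have hγp : 0 ≤ γ^(p-1) := Real.rpow_nonneg hγ.le _
  have : γ^(p-1) * (γ+w1)^(1-p) - γ^(p-1) * (γ+w2)^(1-p)
      = γ^(p-1) * ((γ+w1)^(1-p) - (γ+w2)^(1-p)) := by ring
  rw [this]
  have h2 : γ^(p-1) * ((γ+w1)^(1-p) - (γ+w2)^(1-p)) ≤ γ^(p-1) * ((p-1) * (γ+w1)^(-p) * (w2-w1)) :=
    mul_le_mul_of_nonneg_left core hγp
  refine h2.trans (le_of_eq ?_)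
  have hpow : (0:ℝ) < (γ+w1)^p := Real.rpow_pos_of_pos hx1 p
  rw [show (γ+w1)^(-p) = ((γ+w1)^p)⁻¹ by rw [← Real.rpow_neg hx1.le]]
  field_simp

lemma aux_ind' (f : ℝ → ℝ) (a b : ℝ) (h : a ≤ b) :
    ∫ y, (Icc a b).indicator f y = ∫ y in a..b, f y := by
  rw [MeasureTheory.integral_indicator measurableSet_Icc,
    MeasureTheory.integral_Icc_eq_integral_Ioc, intervalIntegral.integral_of_le h]

lemma aux_fubini_rect (H : ℝ → ℝ → ℝ) (hH : Continuous (fun q : ℝ × ℝ => H q.1 q.2))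
    (a1 b1 a2 b2 : ℝ) (h1 : a1 ≤ b1) (h2 : a2 ≤ b2) :
    ∫ x in a1..b1, (∫ y in a2..b2, H x y) = ∫ y in a2..b2, (∫ x in a1..b1, H x y) := by
  set S : Set (ℝ × ℝ) := Icc a1 b1 ×ˢ Icc a2 b2 with hS
  have hSm : MeasurableSet S := measurableSet_Icc.prod measurableSet_Icc
  set F : ℝ → ℝ → ℝ := fun x y => S.indicator (fun q => H q.1 q.2) (x, y) with hF
  have hFunc : Function.uncurry F = S.indicator (fun q => H q.1 q.2) := by
    funext q; simp [Function.uncurry, hF]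
  have hFint : Integrable (Function.uncurry F) (volume.prod volume) := by
    rw [hFunc, integrable_indicator_iff hSm]
    exact hH.continuousOn.integrableOn_compact (isCompact_Icc.prod isCompact_Icc)
  have hswap := MeasureTheory.integral_integral_swap hFint
  have hL : (∫ x, ∫ y, F x y) = ∫ x in a1..b1, (∫ y in a2..b2, H x y) := by
    have hinner : (fun x => ∫ y, F x y)
        = (Icc a1 b1).indicator (fun x => ∫ y in a2..b2, H x y) := by
      funext x
      by_cases hx : x ∈ Icc a1 b1
      · have : (fun y => F x y) = (Icc a2 b2).indicator (fun y => H x y) := by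
          funext y
          simp only [hF, Set.indicator, hS, Set.mem_prod, hx, true_and]
        rw [this, aux_ind' _ _ _ h2, Set.indicator_of_mem hx]
      · have : (fun y => F x y) = fun _ => 0 := by
          funext y
          simp only [hF, Set.indicator, hS, Set.mem_prod]
          rw [if_neg (by tauto)]
        rw [this, Set.indicator_of_notMem hx, MeasureTheory.integral_zero]
    rw [hinner, aux_ind' _ _ _ h1]
  have hR : (∫ y, ∫ x, F x y) = ∫ y in a2..b2, (∫ x in a1..b1, H x y) := by
    have hinner : (fun y => ∫ x, F x y)
        = (Icc a2 b2).indicator (fun y => ∫ x in a1..b1, H x y) := by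
      funext y
      by_cases hy : y ∈ Icc a2 b2
      · have : (fun x => F x y) = (Icc a1 b1).indicator (fun x => H x y) := by
          funext x
          simp only [hF, Set.indicator, hS, Set.mem_prod, hy, and_true]
        rw [this, aux_ind' _ _ _ h1, Set.indicator_of_mem hy]
      · have : (fun x => F x y) = fun _ => 0 := by
          funext x
          simp only [hF, Set.indicator, hS, Set.mem_prod]
          rw [if_neg (by tauto)]
        rw [this, Set.indicator_of_notMem hy, MeasureTheory.integral_zero]
    rw [hinner, aux_ind' _ _ _ h2]
  rw [← hL, ← hR, hswap]

lemma aux_fubini_tri (H : ℝ → ℝ → ℝ) (hH : Continuous (fun q : ℝ × ℝ => H q.1 q.2))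
    (t1 t2 : ℝ) (h : t1 ≤ t2) :
    ∫ r in t1..t2, (∫ s in t1..r, H r s) = ∫ s in t1..t2, (∫ r in s..t2, H r s) := by
  set S : Set (ℝ × ℝ) := {q : ℝ × ℝ | t1 ≤ q.2 ∧ q.2 ≤ q.1 ∧ q.1 ≤ t2} with hS
  have hSclosed : IsClosed S := by
    apply IsClosed.inter (isClosed_le continuous_const continuous_snd)
    exact IsClosed.inter (isClosed_le continuous_snd continuous_fst)
      (isClosed_le continuous_fst continuous_const)
  have hSm : MeasurableSet S := hSclosed.measurableSet
  have hSsub : S ⊆ Icc t1 t2 ×ˢ Icc t1 t2 := by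
    rintro ⟨r, s⟩ ⟨hs1, hs2, hs3⟩
    exact ⟨⟨hs1.trans hs2, hs3⟩, ⟨hs1, hs2.trans hs3⟩⟩
  have hScomp : IsCompact S :=
    (isCompact_Icc.prod isCompact_Icc).of_isClosed_subset hSclosed hSsub
  set F : ℝ → ℝ → ℝ := fun r s => S.indicator (fun q => H q.1 q.2) (r, s) with hF
  have hFunc : Function.uncurry F = S.indicator (fun q => H q.1 q.2) := by
    funext q; simp [Function.uncurry, hF]
  have hFint : Integrable (Function.uncurry F) (volume.prod volume) := by
    rw [hFunc, integrable_indicator_iff hSm]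
    exact hH.continuousOn.integrableOn_compact hScomp
  have hswap := MeasureTheory.integral_integral_swap hFint
  have hL : (∫ r, ∫ s, F r s) = ∫ r in t1..t2, (∫ s in t1..r, H r s) := by
    have hinner : (fun r => ∫ s, F r s)
        = (Icc t1 t2).indicator (fun r => ∫ s in t1..r, H r s) := by
      funext r
      by_cases hr : r ∈ Icc t1 t2
      · have : (fun s => F r s) = (Icc t1 r).indicator (fun s => H r s) := by
          funext s
          simp only [hF, Set.indicator, hS, Set.mem_setOf_eq, Set.mem_Icc]
          by_cases hs : t1 ≤ s ∧ s ≤ r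
          · rw [if_pos ⟨hs.1, hs.2, hr.2⟩, if_pos hs]
          · rw [if_neg (by tauto), if_neg hs]
        rw [this, aux_ind' _ _ _ hr.1, Set.indicator_of_mem hr]
      · have : (fun s => F r s) = fun _ => 0 := by
          funext s
          simp only [hF, Set.indicator, hS, Set.mem_setOf_eq]
          rw [if_neg]
          rw [Set.mem_Icc] at hr
          rintro ⟨a1, a2, a3⟩; exact hr ⟨a1.trans a2, a3⟩
        rw [this, Set.indicator_of_notMem hr, MeasureTheory.integral_zero]
    rw [hinner, aux_ind' _ _ _ h]
  have hR : (∫ s, ∫ r, F r s) = ∫ s in t1..t2, (∫ r in s..t2, H r s) := by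
    have hinner : (fun s => ∫ r, F r s)
        = (Icc t1 t2).indicator (fun s => ∫ r in s..t2, H r s) := by
      funext s
      by_cases hs : s ∈ Icc t1 t2
      · have : (fun r => F r s) = (Icc s t2).indicator (fun r => H r s) := by
          funext r
          simp only [hF, Set.indicator, hS, Set.mem_setOf_eq, Set.mem_Icc]
          by_cases hr : s ≤ r ∧ r ≤ t2
          · rw [if_pos ⟨hs.1, hr.1, hr.2⟩, if_pos hr]
          · rw [if_neg (by tauto), if_neg hr]
        rw [this, aux_ind' _ _ _ hs.2, Set.indicator_of_mem hs]
      · have : (fun r => F r s) = fun _ => 0 := by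
          funext r
          simp only [hF, Set.indicator, hS, Set.mem_setOf_eq]
          rw [if_neg]
          rw [Set.mem_Icc] at hs
          rintro ⟨a1, a2, a3⟩; exact hs ⟨a1, a2.trans a3⟩
        rw [this, Set.indicator_of_notMem hs, MeasureTheory.integral_zero]
    rw [hinner, aux_ind' _ _ _ h]
  rw [← hL, ← hR, hswap]

set_option maxHeartbeats 1000000 in
theorem thm_2_4_n1
    (α β p : ℝ) (hαβ : α ≤ β) (hp : 1 < p)
    (u a b : ℝ → ℝ) (k k' : ℝ → ℝ → ℝ)
    (hu : ContinuousOn u (Icc α β)) (ha : ContinuousOn a (Icc α β))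
    (hb : ContinuousOn b (Icc α β))
    (hunn : ∀ t ∈ Icc α β, 0 ≤ u t) (hann : ∀ t ∈ Icc α β, 0 ≤ a t)
    (hbpos : ∀ t ∈ Icc α β, 0 < b t)
    (hratio : MonotoneOn (fun t => a t / b t) (Icc α β))
    (hk : ContinuousOn (fun q : ℝ × ℝ => k q.1 q.2)
      {q : ℝ × ℝ | α ≤ q.2 ∧ q.2 ≤ q.1 ∧ q.1 ≤ β})
    (hknn : ∀ t s, α ≤ s → s ≤ t → t ≤ β → 0 ≤ k t s)
    (hkderiv : ∀ t s, α ≤ s → s ≤ t → t ≤ β →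
      HasDerivAt (fun r => k r s) (k' t s) t)
    (hk' : ContinuousOn (fun q : ℝ × ℝ => k' q.1 q.2)
      {q : ℝ × ℝ | α ≤ q.2 ∧ q.2 ≤ q.1 ∧ q.1 ≤ β})
    (hk'nn : ∀ t s, α ≤ s → s ≤ t → t ≤ β → 0 ≤ k' t s)
    (R Q : ℝ → ℝ)
    (hR : ∀ t, R t = k t t * b t ^ p)
    (hQ : ∀ t, Q t = ∫ s in α..t, k' t s * b s ^ p)
    (hbound : ∀ t ∈ Icc α β,
      u t ≤ a t + b t * ∫ s in α..t, k t s * u s ^ p)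
    (βp : ℝ)
    (hβp : βp = sSup {t ∈ Icc α β |
      (p - 1) * (∫ s in α..t, (a s / b s) ^ (p - 1) * (R s + Q s)) < 1}) :
    ∀ t ∈ Ico α βp,
      u t ≤ a t *
        (1 - (p - 1) * ∫ s in α..t, (a s / b s) ^ (p - 1) * (R s + Q s))
          ^ (1 / (1 - p)) := by
  have hp0 : (0:ℝ) < p := by linarith
  have hp1 : (0:ℝ) ≤ p - 1 := by linarith
  -- clamping to [α, β]
  set cl : ℝ → ℝ := fun x => min (max x α) β with hcl
  have hcl_mem : ∀ x, cl x ∈ Icc α β := fun x => ⟨le_min (le_max_right x α) hαβ, min_le_right _ _⟩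
  have hcl_eq : ∀ x ∈ Icc α β, cl x = x := by
    intro x hx; simp only [hcl]; rw [max_eq_left hx.1, min_eq_left hx.2]
  have hcl_cont : Continuous cl := (continuous_id.max continuous_const).min continuous_const
  have hcl_mono : Monotone cl := fun x y hxy => min_le_min (max_le_max hxy le_rfl) le_rfl
  -- extended kernels
  set Kc : ℝ → ℝ → ℝ := fun t s => k (cl t) (min (max s α) (cl t)) with hKcd
  set K'c : ℝ → ℝ → ℝ := fun t s => k' (cl t) (min (max s α) (cl t)) with hK'cd
  have hTri : ∀ t s : ℝ, α ≤ min (max s α) (cl t) ∧ min (max s α) (cl t) ≤ cl t ∧ cl t ≤ β := by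
    intro t s
    exact ⟨le_min (le_max_right s α) (hcl_mem t).1, min_le_right _ _, (hcl_mem t).2⟩
  have hρ_cont : Continuous (fun q : ℝ × ℝ => ((cl q.1, min (max q.2 α) (cl q.1)) : ℝ × ℝ)) := by
    apply Continuous.prodMk (hcl_cont.comp continuous_fst)
    exact (continuous_snd.max continuous_const).min (hcl_cont.comp continuous_fst)
  have hKc_cont : Continuous (fun q : ℝ × ℝ => Kc q.1 q.2) := by
    apply hk.comp_continuous hρ_cont
    intro q; exact hTri q.1 q.2
  have hK'c_cont : Continuous (fun q : ℝ × ℝ => K'c q.1 q.2) := by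
    apply hk'.comp_continuous hρ_cont
    intro q; exact hTri q.1 q.2
  have hKc_eq : ∀ t s, α ≤ s → s ≤ t → t ≤ β → Kc t s = k t s := by
    intro t s h1 h2 h3
    have hct : cl t = t := hcl_eq t ⟨h1.trans h2, h3⟩
    simp only [hKcd, hct]; rw [max_eq_left h1, min_eq_left h2]
  have hK'c_eq : ∀ t s, α ≤ s → s ≤ t → t ≤ β → K'c t s = k' t s := by
    intro t s h1 h2 h3
    have hct : cl t = t := hcl_eq t ⟨h1.trans h2, h3⟩
    simp only [hK'cd, hct]; rw [max_eq_left h1, min_eq_left h2]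
  have hKc_nn : ∀ t s, 0 ≤ Kc t s := by
    intro t s
    obtain ⟨a1, a2, a3⟩ := hTri t s
    exact hknn _ _ a1 a2 a3
  have hK'c_nn : ∀ t s, 0 ≤ K'c t s := by
    intro t s
    obtain ⟨a1, a2, a3⟩ := hTri t s
    exact hk'nn _ _ a1 a2 a3
  -- extended data functions
  set uc : ℝ → ℝ := fun x => u (cl x) with hucd
  set ac : ℝ → ℝ := fun x => a (cl x) with hacd
  set bc : ℝ → ℝ := fun x => b (cl x) with hbcd
  set cc : ℝ → ℝ := fun x => ac x / bc x with hccd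
  have huc_cont : Continuous uc := hu.comp_continuous hcl_cont hcl_mem
  have hac_cont : Continuous ac := ha.comp_continuous hcl_cont hcl_mem
  have hbc_cont : Continuous bc := hb.comp_continuous hcl_cont hcl_mem
  have hbc_pos : ∀ x, 0 < bc x := fun x => hbpos _ (hcl_mem x)
  have huc_nn : ∀ x, 0 ≤ uc x := fun x => hunn _ (hcl_mem x)
  have hac_nn : ∀ x, 0 ≤ ac x := fun x => hann _ (hcl_mem x)
  have hcc_cont : Continuous cc := hac_cont.div hbc_cont (fun x => (hbc_pos x).ne')
  have hcc_mono : Monotone cc := fun x y hxy => hratio (hcl_mem x) (hcl_mem y) (hcl_mono hxy)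
  have hcc_nn : ∀ x, 0 ≤ cc x := fun x => div_nonneg (hac_nn x) (hbc_pos x).le
  have huc_eq : ∀ x ∈ Icc α β, uc x = u x := fun x hx => by rw [hucd]; simp only; rw [hcl_eq x hx]
  have hac_eq : ∀ x ∈ Icc α β, ac x = a x := fun x hx => by rw [hacd]; simp only; rw [hcl_eq x hx]
  have hbc_eq : ∀ x ∈ Icc α β, bc x = b x := fun x hx => by rw [hbcd]; simp only; rw [hcl_eq x hx]
  have hcc_eq : ∀ x ∈ Icc α β, cc x = a x / b x := by
    intro x hx
    rw [hccd]; simp only; rw [hac_eq x hx, hbc_eq x hx]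
  have hucp_cont : Continuous (fun s => uc s ^ p) :=
    huc_cont.rpow_const (fun x => Or.inr hp0.le)
  have hbcp_cont : Continuous (fun s => bc s ^ p) :=
    hbc_cont.rpow_const (fun x => Or.inr hp0.le)
  -- the integral function
  set vv : ℝ → ℝ := fun t => ∫ s in α..t, Kc t s * uc s ^ p with hvvd
  have hKcu_cont : Continuous (fun q : ℝ × ℝ => Kc q.1 q.2 * uc q.2 ^ p) :=
    hKc_cont.mul (hucp_cont.comp continuous_snd)
  have hvv_cont : Continuous vv := by
    have := continuous_parametric_intervalIntegral_of_continuous (μ := volume)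
      (f := fun t s => Kc t s * uc s ^ p) (a₀ := α) hKcu_cont continuous_id
    simpa using this
  have hKcu_int : ∀ t x y : ℝ, IntervalIntegrable (fun s => Kc t s * uc s ^ p) volume x y :=
    fun t x y => (hKcu_cont.comp (continuous_const.prodMk continuous_id :
      Continuous fun s : ℝ => ((t, s) : ℝ × ℝ))).intervalIntegrable x y
  have hvv0 : vv α = 0 := by simp [hvvd]
  -- RQ, EE, GG
  have hK'b_cont : Continuous (fun q : ℝ × ℝ => K'c q.1 q.2 * bc q.2 ^ p) :=
    hK'c_cont.mul (hbcp_cont.comp continuous_snd)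
  have hK'b_int1 : ∀ t x y : ℝ, IntervalIntegrable (fun s => K'c t s * bc s ^ p) volume x y :=
    fun t x y => (hK'b_cont.comp (continuous_const.prodMk continuous_id :
      Continuous fun s : ℝ => ((t, s) : ℝ × ℝ))).intervalIntegrable x y
  have hK'b_int2 : ∀ s x y : ℝ, IntervalIntegrable (fun r => K'c r s * bc s ^ p) volume x y :=
    fun s x y => (hK'b_cont.comp (continuous_id.prodMk continuous_const :
      Continuous fun r : ℝ => ((r, s) : ℝ × ℝ))).intervalIntegrable x y
  set RQ : ℝ → ℝ := fun r => Kc r r * bc r ^ p + ∫ s in α..r, K'c r s * bc s ^ p with hRQd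
  have hRQ_cont : Continuous RQ := by
    apply Continuous.add
    · exact (hKc_cont.comp (continuous_id.prodMk continuous_id)).mul hbcp_cont
    · have := continuous_parametric_intervalIntegral_of_continuous (μ := volume)
        (f := fun t s => K'c t s * bc s ^ p) (a₀ := α) hK'b_cont continuous_id
      simpa using this
  have hRQ_nn : ∀ r, α ≤ r → 0 ≤ RQ r := by
    intro r hr
    apply add_nonneg (mul_nonneg (hKc_nn r r) (Real.rpow_nonneg (hbc_pos r).le p))
    exact intervalIntegral.integral_nonneg hr
      (fun s _ => mul_nonneg (hK'c_nn r s) (Real.rpow_nonneg (hbc_pos s).le p))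
  have hRQ_int : ∀ x y : ℝ, IntervalIntegrable RQ volume x y :=
    fun x y => hRQ_cont.intervalIntegrable x y
  set EE : ℝ → ℝ := fun t => (p-1) * ∫ s in α..t, cc s ^ (p-1) * RQ s with hEEd
  set GG : ℝ → ℝ := fun t => ∫ s in α..t, RQ s with hGGd
  have hccp_cont : Continuous (fun s => cc s ^ (p-1)) :=
    hcc_cont.rpow_const (fun x => Or.inr hp1)
  have hccRQ_int : ∀ x y : ℝ, IntervalIntegrable (fun s => cc s ^ (p-1) * RQ s) volume x y :=
    fun x y => (hccp_cont.mul hRQ_cont).intervalIntegrable x y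
  have hEE_cont : Continuous EE := by
    apply continuous_const.mul
    exact intervalIntegral.continuous_primitive (fun x y => hccRQ_int x y) α
  have hGG_cont : Continuous GG :=
    intervalIntegral.continuous_primitive (fun x y => hRQ_int x y) α
  have hEE_nn : ∀ t, α ≤ t → 0 ≤ EE t := by
    intro t ht
    apply mul_nonneg hp1
    exact intervalIntegral.integral_nonneg ht (fun s hs => mul_nonneg
      (Real.rpow_nonneg (hcc_nn s) _) (hRQ_nn s hs.1))
  -- bridges to the original data
  have hRQ_eq : ∀ r ∈ Icc α β, RQ r = R r + Q r := by
    intro r hr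
    rw [hR, hQ, hRQd]
    simp only
    congr 1
    · rw [hKc_eq r r hr.1 le_rfl hr.2, hbc_eq r hr]
    · apply intervalIntegral.integral_congr
      intro s hs
      rw [uIcc_of_le hr.1] at hs
      show K'c r s * bc s ^ p = k' r s * b s ^ p
      rw [hK'c_eq r s hs.1 hs.2 hr.2, hbc_eq s ⟨hs.1, hs.2.trans hr.2⟩]
  have hE_eq : ∀ t ∈ Icc α β,
      (p - 1) * (∫ s in α..t, (a s / b s) ^ (p - 1) * (R s + Q s)) = EE t := by
    intro t ht
    rw [hEEd]
    simp only
    congr 1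
    apply intervalIntegral.integral_congr
    intro s hs
    rw [uIcc_of_le ht.1] at hs
    have hsI : s ∈ Icc α β := ⟨hs.1, hs.2.trans ht.2⟩
    show (a s / b s) ^ (p - 1) * (R s + Q s) = cc s ^ (p - 1) * RQ s
    rw [hcc_eq s hsI, hRQ_eq s hsI]
  have hv_eq : ∀ t ∈ Icc α β, (∫ s in α..t, k t s * u s ^ p) = vv t := by
    intro t ht
    rw [hvvd]
    apply intervalIntegral.integral_congr
    intro s hs
    rw [uIcc_of_le ht.1] at hs
    have hsI : s ∈ Icc α β := ⟨hs.1, hs.2.trans ht.2⟩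
    show k t s * u s ^ p = Kc t s * uc s ^ p
    rw [hKc_eq t s hs.1 hs.2 ht.2, huc_eq s hsI]
  set mm : ℝ → ℝ := fun t => cc t + vv t with hmmd
  have hmm_cont : Continuous mm := hcc_cont.add hvv_cont
  have hbound' : ∀ t ∈ Icc α β, u t ≤ bc t * mm t := by
    intro t ht
    have h1 := hbound t ht
    rw [hv_eq t ht] at h1
    have h2 : a t + b t * vv t = bc t * mm t := by
      show a t + b t * vv t = bc t * (cc t + vv t)
      rw [hbc_eq t ht, hcc_eq t ht]
      have := (hbpos t ht).ne'
      field_simp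
    linarith
  -- FTC for the kernel
  have hKdiff : ∀ s t1 t2, α ≤ s → s ≤ t1 → t1 ≤ t2 → t2 ≤ β →
      Kc t2 s - Kc t1 s = ∫ r in t1..t2, K'c r s := by
    intro s t1 t2 hs hst1 ht12 ht2
    have h1 : ∀ r ∈ uIcc t1 t2, HasDerivAt (fun r => k r s) (k' r s) r := by
      intro r hr; rw [uIcc_of_le ht12] at hr
      exact hkderiv r s hs (hst1.trans hr.1) (hr.2.trans ht2)
    have hcontK' : Continuous (fun r => K'c r s) :=
      hK'c_cont.comp (continuous_id.prodMk continuous_const :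
        Continuous fun r : ℝ => ((r, s) : ℝ × ℝ))
    have heqon : EqOn (fun r => k' r s) (fun r => K'c r s) (uIcc t1 t2) := by
      intro r hr; rw [uIcc_of_le ht12] at hr
      exact (hK'c_eq r s hs (hst1.trans hr.1) (hr.2.trans ht2)).symm
    have h2 : IntervalIntegrable (fun r => k' r s) volume t1 t2 := by
      apply ContinuousOn.intervalIntegrable
      exact hcontK'.continuousOn.congr heqon
    have h3 := intervalIntegral.integral_eq_sub_of_hasDerivAt h1 h2
    rw [hKc_eq t2 s hs (hst1.trans ht12) ht2, hKc_eq t1 s hs hst1 (ht12.trans ht2), ← h3]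
    exact intervalIntegral.integral_congr heqon
  -- increment formula
  have hsplit : ∀ t1 t2, α ≤ t1 → t1 ≤ t2 → t2 ≤ β →
      vv t2 - vv t1 = (∫ s in t1..t2, Kc t2 s * uc s ^ p)
        + ∫ s in α..t1, (Kc t2 s - Kc t1 s) * uc s ^ p := by
    intro t1 t2 h1 h12 h2
    have e1 : vv t2 = (∫ s in α..t1, Kc t2 s * uc s ^ p) + ∫ s in t1..t2, Kc t2 s * uc s ^ p :=
      (intervalIntegral.integral_add_adjacent_intervals (hKcu_int t2 α t1) (hKcu_int t2 t1 t2)).symm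
    have e2 : (∫ s in α..t1, (Kc t2 s - Kc t1 s) * uc s ^ p)
        = (∫ s in α..t1, Kc t2 s * uc s ^ p) - ∫ s in α..t1, Kc t1 s * uc s ^ p := by
      rw [← intervalIntegral.integral_sub (hKcu_int t2 α t1) (hKcu_int t1 α t1)]
      apply intervalIntegral.integral_congr
      intro s _
      show (Kc t2 s - Kc t1 s) * uc s ^ p = Kc t2 s * uc s ^ p - Kc t1 s * uc s ^ p
      ring
    have e3 : vv t1 = ∫ s in α..t1, Kc t1 s * uc s ^ p := rfl
    rw [e1, e2, e3]
    ring
  have hvv_mono : MonotoneOn vv (Icc α β) := by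
    intro t1 h1 t2 h2 h12
    have hsp := hsplit t1 t2 h1.1 h12 h2.2
    have g1 : 0 ≤ ∫ s in t1..t2, Kc t2 s * uc s ^ p :=
      intervalIntegral.integral_nonneg h12
        (fun s _ => mul_nonneg (hKc_nn _ _) (Real.rpow_nonneg (huc_nn s) p))
    have g2 : 0 ≤ ∫ s in α..t1, (Kc t2 s - Kc t1 s) * uc s ^ p := by
      apply intervalIntegral.integral_nonneg h1.1
      intro s hs
      have hd := hKdiff s t1 t2 hs.1 hs.2 h12 h2.2
      have hnn : 0 ≤ ∫ r in t1..t2, K'c r s :=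
        intervalIntegral.integral_nonneg h12 (fun r _ => hK'c_nn r s)
      exact mul_nonneg (by linarith) (Real.rpow_nonneg (huc_nn s) p)
    linarith
  have hvv_nn : ∀ t ∈ Icc α β, 0 ≤ vv t := by
    intro t ht
    have := hvv_mono (left_mem_Icc.2 hαβ) ht ht.1
    linarith [hvv0.ge, hvv0.le, this]
  have hmm_mono : MonotoneOn mm (Icc α β) := by
    intro t1 h1 t2 h2 h12
    have := hvv_mono h1 h2 h12
    have := hcc_mono h12
    show cc t1 + vv t1 ≤ cc t2 + vv t2
    linarith
  have hmm_nn : ∀ t ∈ Icc α β, 0 ≤ mm t := fun t ht => add_nonneg (hcc_nn t) (hvv_nn t ht)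
  -- KEY inequality: increment of vv controlled by mm and GG
  have KEY3 : ∀ t1 t2, α ≤ t1 → t1 ≤ t2 → t2 ≤ β →
      vv t2 - vv t1 ≤ mm t2 ^ p * ∫ s in t1..t2, RQ s := by
    intro t1 t2 h1 h12 h2
    have ht2I : t2 ∈ Icc α β := ⟨h1.trans h12, h2⟩
    have hm2nn : 0 ≤ mm t2 := hmm_nn t2 ht2I
    have upoint : ∀ s ∈ Icc α t2, uc s ^ p ≤ bc s ^ p * mm t2 ^ p := by
      intro s hs
      have hsI : s ∈ Icc α β := ⟨hs.1, hs.2.trans h2⟩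
      have h3 : u s ≤ bc s * mm s := hbound' s hsI
      have h4 : mm s ≤ mm t2 := hmm_mono hsI ht2I hs.2
      have h5 : uc s ≤ bc s * mm t2 := by
        rw [huc_eq s hsI]
        have := hbc_pos s
        nlinarith
      calc uc s ^ p ≤ (bc s * mm t2) ^ p := Real.rpow_le_rpow (huc_nn s) h5 hp0.le
        _ = bc s ^ p * mm t2 ^ p := Real.mul_rpow (hbc_pos s).le hm2nn
    have hKcb_int : ∀ t x y : ℝ, IntervalIntegrable (fun s => Kc t s * bc s ^ p) volume x y :=
      fun t x y => ((hKc_cont.comp (continuous_const.prodMk continuous_id :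
        Continuous fun s : ℝ => ((t, s) : ℝ × ℝ))).mul hbcp_cont).intervalIntegrable x y
    have hdiffnn : ∀ s, α ≤ s → s ≤ t1 → 0 ≤ Kc t2 s - Kc t1 s := by
      intro s hsa hst
      have hd := hKdiff s t1 t2 hsa hst h12 h2
      have hnn : 0 ≤ ∫ r in t1..t2, K'c r s :=
        intervalIntegral.integral_nonneg h12 (fun r _ => hK'c_nn r s)
      linarith
    have hW1 : (∫ s in t1..t2, Kc t2 s * uc s ^ p)
        ≤ mm t2 ^ p * ∫ s in t1..t2, Kc t2 s * bc s ^ p := by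
      rw [← intervalIntegral.integral_const_mul]
      apply intervalIntegral.integral_mono_on h12 (hKcu_int t2 t1 t2) (by
        exact (continuous_const.mul ((hKc_cont.comp (continuous_const.prodMk continuous_id :
          Continuous fun s : ℝ => ((t2, s) : ℝ × ℝ))).mul hbcp_cont)).intervalIntegrable t1 t2)
      intro s hs
      have hup := upoint s ⟨h1.trans hs.1, hs.2⟩
      have hknn' := hKc_nn t2 s
      calc Kc t2 s * uc s ^ p ≤ Kc t2 s * (bc s ^ p * mm t2 ^ p) := by nlinarith
        _ = mm t2 ^ p * (Kc t2 s * bc s ^ p) := by ring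
    have hW2 : (∫ s in α..t1, (Kc t2 s - Kc t1 s) * uc s ^ p)
        ≤ mm t2 ^ p * ∫ s in α..t1, (Kc t2 s - Kc t1 s) * bc s ^ p := by
      rw [← intervalIntegral.integral_const_mul]
      have hcontd : Continuous (fun s => (Kc t2 s - Kc t1 s)) :=
        (hKc_cont.comp (continuous_const.prodMk continuous_id :
          Continuous fun s : ℝ => ((t2, s) : ℝ × ℝ))).sub
        (hKc_cont.comp (continuous_const.prodMk continuous_id :
          Continuous fun s : ℝ => ((t1, s) : ℝ × ℝ)))
      apply intervalIntegral.integral_mono_on h1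
        ((hcontd.mul hucp_cont).intervalIntegrable α t1)
        ((continuous_const.mul (hcontd.mul hbcp_cont)).intervalIntegrable α t1)
      intro s hs
      have hup := upoint s ⟨hs.1, hs.2.trans h12⟩
      have hdn := hdiffnn s hs.1 hs.2
      calc (Kc t2 s - Kc t1 s) * uc s ^ p ≤ (Kc t2 s - Kc t1 s) * (bc s ^ p * mm t2 ^ p) := by
            nlinarith
        _ = mm t2 ^ p * ((Kc t2 s - Kc t1 s) * bc s ^ p) := by ring
    -- the exact identity W = ∫ RQ
    have hterm2 : (∫ r in t1..t2, (∫ s in α..t1, K'c r s * bc s ^ p))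
        = ∫ s in α..t1, (Kc t2 s - Kc t1 s) * bc s ^ p := by
      rw [aux_fubini_rect _ hK'b_cont t1 t2 α t1 h12 h1]
      apply intervalIntegral.integral_congr
      intro s hs; rw [uIcc_of_le h1] at hs
      show (∫ r in t1..t2, K'c r s * bc s ^ p) = (Kc t2 s - Kc t1 s) * bc s ^ p
      rw [intervalIntegral.integral_mul_const, hKdiff s t1 t2 hs.1 hs.2 h12 h2]
    have hterm3 : (∫ r in t1..t2, (∫ s in t1..r, K'c r s * bc s ^ p))
        = ∫ s in t1..t2, (Kc t2 s - Kc s s) * bc s ^ p := by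
      rw [aux_fubini_tri _ hK'b_cont t1 t2 h12]
      apply intervalIntegral.integral_congr
      intro s hs; rw [uIcc_of_le h12] at hs
      show (∫ r in s..t2, K'c r s * bc s ^ p) = (Kc t2 s - Kc s s) * bc s ^ p
      rw [intervalIntegral.integral_mul_const, hKdiff s s t2 (h1.trans hs.1) le_rfl hs.2 h2]
    have hcontT2 : Continuous (fun r => ∫ s in α..t1, K'c r s * bc s ^ p) := by
      have := continuous_parametric_intervalIntegral_of_continuous' (μ := volume)
        (f := fun t s => K'c t s * bc s ^ p) hK'b_cont α t1
      simpa using this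
    have hcontT3 : Continuous (fun r => ∫ s in t1..r, K'c r s * bc s ^ p) := by
      have := continuous_parametric_intervalIntegral_of_continuous (μ := volume)
        (f := fun t s => K'c t s * bc s ^ p) (a₀ := t1) hK'b_cont continuous_id
      simpa using this
    have hdiag_cont : Continuous (fun r : ℝ => Kc r r * bc r ^ p) :=
      (hKc_cont.comp (continuous_id.prodMk continuous_id)).mul hbcp_cont
    have hRQsplit : (∫ r in t1..t2, RQ r) = (∫ r in t1..t2, Kc r r * bc r ^ p)
        + ((∫ r in t1..t2, (∫ s in α..t1, K'c r s * bc s ^ p))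
          + (∫ r in t1..t2, (∫ s in t1..r, K'c r s * bc s ^ p))) := by
      rw [← intervalIntegral.integral_add (hcontT2.intervalIntegrable t1 t2)
        (hcontT3.intervalIntegrable t1 t2)]
      rw [← intervalIntegral.integral_add (hdiag_cont.intervalIntegrable t1 t2)
        (by exact (hcontT2.add hcontT3).intervalIntegrable t1 t2 : IntervalIntegrable
          (fun r => (∫ s in α..t1, K'c r s * bc s ^ p) + ∫ s in t1..r, K'c r s * bc s ^ p) volume t1 t2)]
      apply intervalIntegral.integral_congr
      intro r hr; rw [uIcc_of_le h12] at hr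
      show RQ r = Kc r r * bc r ^ p
        + ((∫ s in α..t1, K'c r s * bc s ^ p) + ∫ s in t1..r, K'c r s * bc s ^ p)
      rw [intervalIntegral.integral_add_adjacent_intervals (hK'b_int1 r α t1) (hK'b_int1 r t1 r)]
    have hW1id : (∫ s in t1..t2, Kc t2 s * bc s ^ p)
        = (∫ r in t1..t2, Kc r r * bc r ^ p) + ∫ s in t1..t2, (Kc t2 s - Kc s s) * bc s ^ p := by
      have hcont2 : Continuous (fun s => (Kc t2 s - Kc s s) * bc s ^ p) :=
        ((hKc_cont.comp (continuous_const.prodMk continuous_id :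
          Continuous fun s : ℝ => ((t2, s) : ℝ × ℝ))).sub
          (hKc_cont.comp (continuous_id.prodMk continuous_id))).mul hbcp_cont
      rw [← intervalIntegral.integral_add (hdiag_cont.intervalIntegrable t1 t2)
        (hcont2.intervalIntegrable t1 t2)]
      apply intervalIntegral.integral_congr
      intro s _
      show Kc t2 s * bc s ^ p = Kc s s * bc s ^ p + (Kc t2 s - Kc s s) * bc s ^ p
      ring
    have hWid : (∫ s in t1..t2, Kc t2 s * bc s ^ p)
        + (∫ s in α..t1, (Kc t2 s - Kc t1 s) * bc s ^ p) = ∫ s in t1..t2, RQ s := by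
      rw [hRQsplit, hterm2, hterm3, hW1id]
      ring
    have hsp := hsplit t1 t2 h1 h12 h2
    calc vv t2 - vv t1 = _ := hsp
      _ ≤ mm t2 ^ p * (∫ s in t1..t2, Kc t2 s * bc s ^ p)
          + mm t2 ^ p * (∫ s in α..t1, (Kc t2 s - Kc t1 s) * bc s ^ p) := add_le_add hW1 hW2
      _ = mm t2 ^ p * ((∫ s in t1..t2, Kc t2 s * bc s ^ p)
          + (∫ s in α..t1, (Kc t2 s - Kc t1 s) * bc s ^ p)) := by ring
      _ = mm t2 ^ p * ∫ s in t1..t2, RQ s := by rw [hWid]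
  -- now fix the target point
  intro T hT
  obtain ⟨hαT, hTβp⟩ := hT
  have hSne : α ∈ {t | t ∈ Icc α β ∧
      (p - 1) * ∫ s in α..t, (a s / b s) ^ (p - 1) * (R s + Q s) < 1} := by
    refine ⟨left_mem_Icc.2 hαβ, ?_⟩
    rw [intervalIntegral.integral_same]
    norm_num
  have hβpβ : βp ≤ β := by
    rw [hβp]
    apply csSup_le ⟨α, hSne⟩
    intro x hx
    exact hx.1.2
  have hTβ : T ≤ β := le_trans hTβp.le hβpβ
  have hTI : T ∈ Icc α β := ⟨hαT, hTβ⟩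
  have hETlt : EE T < 1 := by
    obtain ⟨s0, hs0S, hTs0⟩ := exists_lt_of_lt_csSup ⟨α, hSne⟩ (hβp ▸ hTβp)
    have hs0I : s0 ∈ Icc α β := hs0S.1
    have h1 : EE s0 < 1 := by rw [← hE_eq s0 hs0I]; exact hs0S.2
    have hadj := intervalIntegral.integral_add_adjacent_intervals (hccRQ_int α T) (hccRQ_int T s0)
    have hnn : 0 ≤ ∫ s in T..s0, cc s ^ (p-1) * RQ s :=
      intervalIntegral.integral_nonneg hTs0.le
        (fun s hs => mul_nonneg (Real.rpow_nonneg (hcc_nn s) _) (hRQ_nn s (hαT.trans hs.1)))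
    have h2 : EE T ≤ EE s0 := by
      show (p-1) * (∫ s in α..T, cc s ^ (p-1) * RQ s)
        ≤ (p-1) * ∫ s in α..s0, cc s ^ (p-1) * RQ s
      nlinarith [hadj, hnn, hp1]
    linarith
  set Φ : ℝ → ℝ := fun t => (cc t / mm t) ^ (p-1) + EE t with hΦd
  have twopoint : ∀ t1 t2, α ≤ t1 → t1 ≤ t2 → t2 ≤ β → 0 < cc t1 →
      Φ t1 - Φ t2 ≤ (p-1) * cc t1 ^ (p-1) * ((∫ s in t1..t2, RQ s) / mm t1 ^ p)
        * (mm t2 ^ p - mm t1 ^ p) := by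
    intro t1 t2 h1 h12 h2 hγ
    have ht1I : t1 ∈ Icc α β := ⟨h1, h12.trans h2⟩
    have ht2I : t2 ∈ Icc α β := ⟨h1.trans h12, h2⟩
    have hv1 : 0 ≤ vv t1 := hvv_nn t1 ht1I
    have hv12 : vv t1 ≤ vv t2 := hvv_mono ht1I ht2I h12
    have hm1 : 0 < mm t1 := by show 0 < cc t1 + vv t1; linarith
    have hγ2 : cc t1 ≤ cc t2 := hcc_mono h12
    have hm2 : 0 < mm t2 := by
      show 0 < cc t2 + vv t2
      nlinarith [hvv_nn t2 ht2I]
    have hΔG : 0 ≤ ∫ s in t1..t2, RQ s :=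
      intervalIntegral.integral_nonneg h12 (fun s hs => hRQ_nn s (h1.trans hs.1))
    have step1 : (cc t1 / (cc t1 + vv t2)) ^ (p-1) ≤ (cc t2 / mm t2) ^ (p-1) := by
      apply Real.rpow_le_rpow (div_nonneg hγ.le (by linarith)) ?_ hp1
      rw [div_le_div_iff₀ (by linarith) hm2]
      show cc t1 * (cc t2 + vv t2) ≤ cc t2 * (cc t1 + vv t2)
      nlinarith [hvv_nn t2 ht2I]
    have step2 := aux_convex p (cc t1) (vv t1) (vv t2) hp hγ hv1 hv12
    have step3 : vv t2 - vv t1 ≤ mm t2 ^ p * ∫ s in t1..t2, RQ s := KEY3 t1 t2 h1 h12 h2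
    have step4 : (p-1) * cc t1 ^ (p-1) * (∫ s in t1..t2, RQ s) ≤ EE t2 - EE t1 := by
      have hadj := intervalIntegral.integral_add_adjacent_intervals
        (hccRQ_int α t1) (hccRQ_int t1 t2)
      have hmono : (∫ s in t1..t2, (cc t1 ^ (p-1)) * RQ s)
          ≤ ∫ s in t1..t2, cc s ^ (p-1) * RQ s := by
        apply intervalIntegral.integral_mono_on h12
          ((continuous_const.mul hRQ_cont).intervalIntegrable t1 t2) (hccRQ_int t1 t2)
        intro s hs
        exact mul_le_mul_of_nonneg_right
          (Real.rpow_le_rpow (hcc_nn t1) (hcc_mono hs.1) hp1) (hRQ_nn s (h1.trans hs.1))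
      rw [intervalIntegral.integral_const_mul] at hmono
      show (p-1) * cc t1 ^ (p-1) * (∫ s in t1..t2, RQ s)
        ≤ (p-1) * (∫ s in α..t2, cc s ^ (p-1) * RQ s)
          - (p-1) * ∫ s in α..t1, cc s ^ (p-1) * RQ s
      nlinarith [hadj, hmono, hp1]
    have hmain : Φ t1 - Φ t2 ≤ (p-1) * cc t1 ^ (p-1) / mm t1 ^ p * (vv t2 - vv t1)
        - (p-1) * cc t1 ^ (p-1) * ∫ s in t1..t2, RQ s := by
      have e1 : Φ t1 = (cc t1 / mm t1) ^ (p-1) + EE t1 := rfl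
      have e2 : Φ t2 = (cc t2 / mm t2) ^ (p-1) + EE t2 := rfl
      have hd : (cc t1 / mm t1) ^ (p-1) - (cc t2 / mm t2) ^ (p-1)
          ≤ (p-1) * cc t1 ^ (p-1) / mm t1 ^ p * (vv t2 - vv t1) := by
        have hmm1 : mm t1 = cc t1 + vv t1 := rfl
        rw [hmm1]
        linarith [step1, step2]
      rw [e1, e2]
      linarith [step4, hd]
    refine hmain.trans ?_
    have hcoeff : 0 ≤ (p-1) * cc t1 ^ (p-1) / mm t1 ^ p :=
      div_nonneg (mul_nonneg hp1 (Real.rpow_nonneg hγ.le _)) (Real.rpow_nonneg hm1.le _)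
    have h5 : (p-1) * cc t1 ^ (p-1) / mm t1 ^ p * (vv t2 - vv t1)
        ≤ (p-1) * cc t1 ^ (p-1) / mm t1 ^ p * (mm t2 ^ p * ∫ s in t1..t2, RQ s) :=
      mul_le_mul_of_nonneg_left step3 hcoeff
    have hm1p : 0 < mm t1 ^ p := Real.rpow_pos_of_pos hm1 p
    have heq : (p-1) * cc t1 ^ (p-1) / mm t1 ^ p * (mm t2 ^ p * ∫ s in t1..t2, RQ s)
        - (p-1) * cc t1 ^ (p-1) * ∫ s in t1..t2, RQ s
        = (p-1) * cc t1 ^ (p-1) * ((∫ s in t1..t2, RQ s) / mm t1 ^ p)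
          * (mm t2 ^ p - mm t1 ^ p) := by
      field_simp
    linarith [h5, heq]
  have caseMain : ∀ τ, α ≤ τ → τ ≤ T → 0 < cc τ → Φ τ ≤ Φ T := by
    intro τ hατ hτT hccτ
    have hτI : τ ∈ Icc α β := ⟨hατ, hτT.trans hTβ⟩
    have hμ0 : 0 < mm τ := by
      show 0 < cc τ + vv τ
      linarith [hvv_nn τ hτI]
    obtain ⟨x0, hx0I, hx0⟩ := isCompact_Icc.exists_isMaxOn (nonempty_Icc.2 hαβ)
      hRQ_cont.continuousOn
    set LG : ℝ := max (RQ x0) 0 with hLGd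
    have hLG : ∀ r ∈ Icc α β, RQ r ≤ LG :=
      fun r hr => (isMaxOn_iff.1 hx0 r hr).trans (le_max_left _ _)
    have hLG0 : 0 ≤ LG := le_max_right _ _
    set C1 : ℝ := cc T ^ (p-1) with hC1d
    have hC10 : 0 ≤ C1 := Real.rpow_nonneg (hcc_nn T) _
    have hμ0p : 0 < mm τ ^ p := Real.rpow_pos_of_pos hμ0 p
    set K : ℝ := (p-1) * C1 * LG / mm τ ^ p + 1 with hKd
    have hK0 : 0 < K := by
      have : 0 ≤ (p-1) * C1 * LG / mm τ ^ p :=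
        div_nonneg (mul_nonneg (mul_nonneg hp1 hC10) hLG0) hμ0p.le
      rw [hKd]
      linarith
    apply aux_chain Φ τ T hτT
    intro ε' hε'
    have hUC := isCompact_Icc.uniformContinuousOn_of_continuous
      ((hmm_cont.rpow_const (fun x => Or.inr hp0.le)).continuousOn :
        ContinuousOn (fun t => mm t ^ p) (Icc α β))
    rw [Metric.uniformContinuousOn_iff] at hUC
    obtain ⟨δ, hδ0, hδ⟩ := hUC (ε' / K) (by positivity)
    refine ⟨δ/2, by positivity, ?_⟩
    intro t1 t2 h1 h2 h3 h4
    have ht1I : t1 ∈ Icc α β := ⟨hατ.trans h1, (h2.trans h3).trans hTβ⟩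
    have ht2I : t2 ∈ Icc α β := ⟨ht1I.1.trans h2, h3.trans hTβ⟩
    have hcc1 : 0 < cc t1 := lt_of_lt_of_le hccτ (hcc_mono h1)
    have h2p := twopoint t1 t2 ht1I.1 h2 ht2I.2 hcc1
    have hdist : dist t2 t1 < δ := by
      rw [Real.dist_eq, abs_of_nonneg (by linarith : (0:ℝ) ≤ t2 - t1)]
      linarith
    have hd1 : mm t2 ^ p - mm t1 ^ p ≤ ε' / K := by
      have hq := hδ t2 ht2I t1 ht1I hdist
      rw [Real.dist_eq] at hq
      have hq2 : mm t2 ^ p - mm t1 ^ p ≤ |mm t2 ^ p - mm t1 ^ p| := le_abs_self _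
      have hq3 : |mm t2 ^ p - mm t1 ^ p| < ε' / K := hq
      linarith
    have hd0 : 0 ≤ mm t2 ^ p - mm t1 ^ p := by
      have hmono := hmm_mono ht1I ht2I h2
      have := Real.rpow_le_rpow (hmm_nn t1 ht1I) hmono hp0.le
      linarith
    have hΔGb : (∫ s in t1..t2, RQ s) ≤ LG * (t2 - t1) := by
      have hmono : (∫ s in t1..t2, RQ s) ≤ ∫ _s in t1..t2, LG :=
        intervalIntegral.integral_mono_on h2 (hRQ_int t1 t2) intervalIntegrable_const
          (fun s hs => hLG s ⟨ht1I.1.trans hs.1, hs.2.trans ht2I.2⟩)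
      rw [intervalIntegral.integral_const, smul_eq_mul] at hmono
      linarith
    have hΔG0 : 0 ≤ ∫ s in t1..t2, RQ s :=
      intervalIntegral.integral_nonneg h2 (fun s hs => hRQ_nn s (ht1I.1.trans hs.1))
    refine h2p.trans ?_
    have hA : cc t1 ^ (p-1) ≤ C1 :=
      Real.rpow_le_rpow (hcc_nn t1) (hcc_mono (h2.trans h3)) hp1
    have hmm1p : mm τ ^ p ≤ mm t1 ^ p :=
      Real.rpow_le_rpow hμ0.le (hmm_mono hτI ht1I h1) hp0.le
    have hm1p : 0 < mm t1 ^ p := lt_of_lt_of_le hμ0p hmm1p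
    have hstep : (p-1) * cc t1 ^ (p-1) * ((∫ s in t1..t2, RQ s) / mm t1 ^ p)
        * (mm t2 ^ p - mm t1 ^ p)
        ≤ (p-1) * C1 * ((LG * (t2-t1)) / mm τ ^ p) * (ε'/K) := by
      have hdiv : (∫ s in t1..t2, RQ s) / mm t1 ^ p ≤ (LG * (t2-t1)) / mm τ ^ p :=
        div_le_div₀ (mul_nonneg hLG0 (by linarith)) hΔGb hμ0p hmm1p
      have hq1 : 0 ≤ (p-1) * cc t1 ^ (p-1) := mul_nonneg hp1 (Real.rpow_nonneg (hcc_nn t1) _)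
      have hq2 : 0 ≤ (∫ s in t1..t2, RQ s) / mm t1 ^ p := div_nonneg hΔG0 hm1p.le
      calc (p-1) * cc t1 ^ (p-1) * ((∫ s in t1..t2, RQ s) / mm t1 ^ p)
            * (mm t2 ^ p - mm t1 ^ p)
          ≤ (p-1) * cc t1 ^ (p-1) * ((∫ s in t1..t2, RQ s) / mm t1 ^ p) * (ε'/K) :=
            mul_le_mul_of_nonneg_left hd1 (mul_nonneg hq1 hq2)
        _ ≤ (p-1) * C1 * ((LG * (t2-t1)) / mm τ ^ p) * (ε'/K) := by
            apply mul_le_mul_of_nonneg_right _ (by positivity)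
            calc (p-1) * cc t1 ^ (p-1) * ((∫ s in t1..t2, RQ s) / mm t1 ^ p)
                ≤ (p-1) * cc t1 ^ (p-1) * ((LG * (t2-t1)) / mm τ ^ p) :=
                  mul_le_mul_of_nonneg_left hdiv hq1
              _ ≤ (p-1) * C1 * ((LG * (t2-t1)) / mm τ ^ p) := by
                  apply mul_le_mul_of_nonneg_right _
                    (div_nonneg (mul_nonneg hLG0 (by linarith)) hμ0p.le)
                  exact mul_le_mul_of_nonneg_left hA hp1
    refine hstep.trans ?_
    have heq2 : (p-1) * C1 * ((LG * (t2-t1)) / mm τ ^ p) * (ε'/K)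
        = ((p-1) * C1 * LG / mm τ ^ p) * (t2-t1) * ε' / K := by
      field_simp
      try ring
      try exact Or.inl trivial
    rw [heq2, div_le_iff₀ hK0]
    have hcoef : (p-1) * C1 * LG / mm τ ^ p ≤ K := by rw [hKd]; linarith
    have h0coef : 0 ≤ (p-1) * C1 * LG / mm τ ^ p :=
      div_nonneg (mul_nonneg (mul_nonneg hp1 hC10) hLG0) hμ0p.le
    have hfin : 0 ≤ (K - (p-1) * C1 * LG / mm τ ^ p) * ((t2-t1) * ε') :=
      mul_nonneg (by linarith) (mul_nonneg (by linarith) hε'.le)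
    nlinarith [hfin]
  -- vanishing of u on an initial segment where a vanishes
  have huzero : ∀ τ0, α ≤ τ0 → τ0 ≤ β → (∀ s ∈ Icc α τ0, a s = 0) →
      ∀ t ∈ Icc α τ0, u t = 0 := by
    intro τ0 hατ0 hτ0β ha0
    obtain ⟨xb, hxbI, hxb⟩ := isCompact_Icc.exists_isMaxOn (nonempty_Icc.2 hαβ)
      hbc_cont.continuousOn
    set B0 : ℝ := max (bc xb) 0 with hB0d
    have hB0 : ∀ x ∈ Icc α β, bc x ≤ B0 := fun x hx =>
      (isMaxOn_iff.1 hxb x hx).trans (le_max_left _ _)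
    have hB00 : 0 ≤ B0 := le_max_right _ _
    obtain ⟨xK, hxKI, hxK⟩ := (isCompact_Icc.prod isCompact_Icc).exists_isMaxOn
      ((nonempty_Icc.2 hαβ).prod (nonempty_Icc.2 hαβ)) hKc_cont.continuousOn
    set K0 : ℝ := max (Kc xK.1 xK.2) 0 with hK0d
    have hK0b : ∀ t s : ℝ, t ∈ Icc α β → s ∈ Icc α β → Kc t s ≤ K0 := fun t s ht hs =>
      (isMaxOn_iff.1 hxK (t,s) (mk_mem_prod ht hs)).trans (le_max_left _ _)
    have hK00 : 0 ≤ K0 := le_max_right _ _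
    obtain ⟨xu, hxuI, hxu⟩ := isCompact_Icc.exists_isMaxOn (nonempty_Icc.2 hαβ)
      huc_cont.continuousOn
    set U1 : ℝ := max (uc xu) 0 with hU1d
    have hU1 : ∀ x ∈ Icc α β, uc x ≤ U1 := fun x hx =>
      (isMaxOn_iff.1 hxu x hx).trans (le_max_left _ _)
    have hU10 : 0 ≤ U1 := le_max_right _ _
    set C : ℝ := B0 * (K0 * U1 ^ (p-1)) with hCd
    have hC0 : 0 ≤ C := mul_nonneg hB00 (mul_nonneg hK00 (Real.rpow_nonneg hU10 _))
    have hkey : ∀ t ∈ Icc α τ0, u t ≤ C * ∫ s in α..t, u s := by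
      intro t ht
      have htI : t ∈ Icc α β := ⟨ht.1, ht.2.trans hτ0β⟩
      have h1 := hbound t htI
      rw [hv_eq t htI, ha0 t ht] at h1
      have hint_u : IntervalIntegrable u volume α t :=
        (hu.mono (by rw [uIcc_of_le ht.1]; exact Icc_subset_Icc le_rfl htI.2)).intervalIntegrable
      have hpt : ∀ s ∈ Icc α t, Kc t s * uc s ^ p ≤ K0 * U1 ^ (p-1) * u s := by
        intro s hs
        have hsI : s ∈ Icc α β := ⟨hs.1, hs.2.trans htI.2⟩
        have hucp : uc s ^ p ≤ U1 ^ (p-1) * uc s := by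
          rcases eq_or_lt_of_le (huc_nn s) with h0 | hpos
          · rw [← h0, Real.zero_rpow hp0.ne', mul_zero]
          · have e := Real.rpow_add hpos (p-1) 1
            rw [sub_add_cancel, Real.rpow_one] at e
            rw [e]
            have h7 : uc s ^ (p-1) ≤ U1 ^ (p-1) :=
              Real.rpow_le_rpow hpos.le (hU1 s hsI) hp1
            exact mul_le_mul_of_nonneg_right h7 hpos.le
        have hKb := hK0b t s htI hsI
        have hh1 : Kc t s * (uc s ^ p) ≤ Kc t s * (U1 ^ (p-1) * uc s) :=
          mul_le_mul_of_nonneg_left hucp (hKc_nn t s)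
        have hh2 : Kc t s * (U1 ^ (p-1) * uc s) ≤ K0 * (U1 ^ (p-1) * uc s) :=
          mul_le_mul_of_nonneg_right hKb
            (mul_nonneg (Real.rpow_nonneg hU10 _) (huc_nn s))
        rw [← huc_eq s hsI]
        calc Kc t s * uc s ^ p ≤ K0 * (U1 ^ (p-1) * uc s) := le_trans hh1 hh2
          _ = K0 * U1 ^ (p-1) * uc s := by ring
      have hvt : vv t ≤ K0 * U1 ^ (p-1) * ∫ s in α..t, u s := by
        have hstep : (∫ s in α..t, Kc t s * uc s ^ p) ≤ ∫ s in α..t, K0 * U1 ^ (p-1) * u s :=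
          intervalIntegral.integral_mono_on ht.1 (hKcu_int t α t)
            ((hint_u.const_mul _)) hpt
        rw [intervalIntegral.integral_const_mul] at hstep
        exact hstep
      have hbt : b t ≤ B0 := by rw [← hbc_eq t htI]; exact hB0 t htI
      have hvt0 : 0 ≤ vv t := hvv_nn t htI
      have hbtpos := hbpos t htI
      have hint0 : 0 ≤ ∫ s in α..t, u s := intervalIntegral.integral_nonneg ht.1
        (fun s hs => hunn s ⟨hs.1, hs.2.trans htI.2⟩)
      calc u t ≤ 0 + b t * vv t := h1
        _ ≤ B0 * vv t := by nlinarith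
        _ ≤ B0 * (K0 * U1 ^ (p-1) * ∫ s in α..t, u s) := by
            apply mul_le_mul_of_nonneg_left hvt hB00
        _ = C * ∫ s in α..t, u s := by rw [hCd]; ring
    have hzero := aux_zero u α τ0 C U1 hατ0 hC0 hU10 (hu.mono (Icc_subset_Icc le_rfl hτ0β))
      (fun t ht => by
        rw [← huc_eq t ⟨ht.1, ht.2.trans hτ0β⟩]
        exact hU1 t ⟨ht.1, ht.2.trans hτ0β⟩) hkey
    intro t ht
    exact le_antisymm (hzero t ht) (hunn t ⟨ht.1, ht.2.trans hτ0β⟩)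
  by_cases haT : a T = 0
  · -- in this case u T = 0 and the right-hand side is 0
    have ha0 : ∀ s ∈ Icc α T, a s = 0 := by
      intro s hs
      have hsI : s ∈ Icc α β := ⟨hs.1, hs.2.trans hTβ⟩
      have h1 : cc s ≤ cc T := hcc_mono hs.2
      have h2 : cc T = 0 := by rw [hcc_eq T hTI, haT, zero_div]
      have h4 : cc s = 0 := le_antisymm (h2 ▸ h1) (hcc_nn s)
      rw [hcc_eq s hsI] at h4
      rcases div_eq_zero_iff.1 h4 with h | h
      · exact h
      · exact absurd h (hbpos s hsI).ne'
    have huT := huzero T hαT hTβ ha0 T ⟨hαT, le_rfl⟩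
    rw [haT, zero_mul]
    exact huT.le
  · have haTpos : 0 < a T := lt_of_le_of_ne (hann T hTI) (Ne.symm haT)
    have hccT : 0 < cc T := by
      rw [hcc_eq T hTI]
      exact div_pos haTpos (hbpos T hTI)
    have h1ΦT : 1 ≤ Φ T := by
      by_cases hZ : ∃ s ∈ Icc α T, a s = 0
      · obtain ⟨s₀, hs₀I, hs₀⟩ := hZ
        set Z : Set ℝ := {s | s ∈ Icc α T ∧ ac s = 0} with hZd
        have hZne : Z.Nonempty :=
          ⟨s₀, hs₀I, by rw [hac_eq s₀ ⟨hs₀I.1, hs₀I.2.trans hTβ⟩]; exact hs₀⟩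
        have hZbdd : BddAbove Z := ⟨T, fun x hx => hx.1.2⟩
        have hZclosed : IsClosed Z := by
          have hze : Z = Icc α T ∩ ac ⁻¹' {0} := by
            ext x
            simp [hZd, Set.mem_setOf_eq]
          rw [hze]
          exact isClosed_Icc.inter (isClosed_singleton.preimage hac_cont)
        set τ0 : ℝ := sSup Z with hτ0d
        have hτ0Z : τ0 ∈ Z := hZclosed.csSup_mem hZne hZbdd
        have hτ0I : τ0 ∈ Icc α T := hτ0Z.1
        have hτ0β : τ0 ≤ β := hτ0I.2.trans hTβ
        have hτ0Iβ : τ0 ∈ Icc α β := ⟨hτ0I.1, hτ0β⟩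
        have ha0 : ∀ s ∈ Icc α τ0, a s = 0 := by
          intro s hs
          have hsIβ : s ∈ Icc α β := ⟨hs.1, hs.2.trans hτ0β⟩
          have h1 : cc s ≤ cc τ0 := hcc_mono hs.2
          have h2 : cc τ0 = 0 := by
            rw [hcc_eq τ0 hτ0Iβ, ← hac_eq τ0 hτ0Iβ, hτ0Z.2, zero_div]
          have h4 : cc s = 0 := le_antisymm (h2 ▸ h1) (hcc_nn s)
          rw [hcc_eq s hsIβ] at h4
          rcases div_eq_zero_iff.1 h4 with h | h
          · exact h
          · exact absurd h (hbpos s hsIβ).ne'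
        have huz := huzero τ0 hτ0I.1 hτ0β ha0
        have hτ0T : τ0 < T := lt_of_le_of_ne hτ0I.2 (by
          intro he
          apply haT
          have := ha0 τ0 ⟨hτ0I.1, le_rfl⟩
          rwa [he] at this)
        have hvvτ0 : vv τ0 = 0 := by
          have hptw : ∀ s ∈ uIcc α τ0, Kc τ0 s * uc s ^ p = (fun _ : ℝ => (0:ℝ)) s := by
            intro s hs
            rw [uIcc_of_le hτ0I.1] at hs
            have hsIβ : s ∈ Icc α β := ⟨hs.1, hs.2.trans hτ0β⟩
            show Kc τ0 s * uc s ^ p = 0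
            rw [huc_eq s hsIβ, huz s hs, Real.zero_rpow hp0.ne', mul_zero]
          show (∫ s in α..τ0, Kc τ0 s * uc s ^ p) = 0
          rw [intervalIntegral.integral_congr hptw, intervalIntegral.integral_zero]
        have hεbound : ∀ ε ∈ Ioo (0:ℝ) 1, (1 - ε)^(p-1) ≤ Φ T := by
          intro ε hε
          have hf_cont : ContinuousAt (fun τ => mm τ ^ (p-1) * (GG τ - GG τ0)) τ0 := by
            apply ContinuousAt.mul
            · exact (hmm_cont.rpow_const (fun x => Or.inr hp1)).continuousAt
            · exact (hGG_cont.sub continuous_const).continuousAt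
          obtain ⟨δ, hδ0, hδ⟩ := Metric.continuousAt_iff.1 hf_cont ε hε.1
          set τ : ℝ := min (τ0 + δ/2) T with hτd
          have hττ0 : τ0 < τ := lt_min (by linarith) hτ0T
          have hτT' : τ ≤ T := min_le_right _ _
          have hτIβ : τ ∈ Icc α β := ⟨hτ0I.1.trans hττ0.le, hτT'.trans hTβ⟩
          have hccτ : 0 < cc τ := by
            have hτZ : τ ∉ Z := by
              intro hin
              have hle := le_csSup hZbdd hin
              rw [← hτ0d] at hle
              exact absurd hle (not_le.2 hττ0)
            have haτ : a τ ≠ 0 := by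
              intro h0
              exact hτZ ⟨⟨hτIβ.1, hτT'⟩, by rw [hac_eq τ hτIβ]; exact h0⟩
            rw [hcc_eq τ hτIβ]
            exact div_pos (lt_of_le_of_ne (hann τ hτIβ) (Ne.symm haτ)) (hbpos τ hτIβ)
          have hch := caseMain τ hτIβ.1 hτT' hccτ
          have hmmτ : 0 < mm τ := by
            show 0 < cc τ + vv τ
            linarith [hvv_nn τ hτIβ]
          have hηlt : mm τ ^ (p-1) * (GG τ - GG τ0) < ε := by
            have hdist : dist τ τ0 < δ := by
              rw [Real.dist_eq, abs_of_nonneg (by linarith : (0:ℝ) ≤ τ - τ0)]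
              have hm := min_le_left (τ0 + δ/2) T
              have : τ ≤ τ0 + δ/2 := hm
              linarith
            have hq := hδ hdist
            have hfτ0 : mm τ0 ^ (p-1) * (GG τ0 - GG τ0) = 0 := by ring_nf
            rw [Real.dist_eq] at hq
            have hq2 : mm τ ^ (p-1) * (GG τ - GG τ0)
                ≤ |mm τ ^ (p-1) * (GG τ - GG τ0) - mm τ0 ^ (p-1) * (GG τ0 - GG τ0)| := by
              rw [hfτ0, sub_zero]
              exact le_abs_self _
            exact lt_of_le_of_lt hq2 hq
          have hK3 := KEY3 τ0 τ hτ0I.1 hττ0.le hτIβ.2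
          rw [hvvτ0, sub_zero] at hK3
          have hGGadj : (∫ s in τ0..τ, RQ s) = GG τ - GG τ0 := by
            have hadj := intervalIntegral.integral_add_adjacent_intervals
              (hRQ_int α τ0) (hRQ_int τ0 τ)
            show (∫ s in τ0..τ, RQ s) = (∫ s in α..τ, RQ s) - ∫ s in α..τ0, RQ s
            linarith
          rw [hGGadj] at hK3
          have hmp : mm τ ^ p = mm τ ^ (p-1) * mm τ := by
            have e := Real.rpow_add hmmτ (p-1) 1
            rw [sub_add_cancel, Real.rpow_one] at e
            exact e
          have hvτ : vv τ ≤ (mm τ ^ (p-1) * (GG τ - GG τ0)) * mm τ := by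
            rw [hmp] at hK3
            calc vv τ ≤ mm τ ^ (p-1) * mm τ * (GG τ - GG τ0) := hK3
              _ = (mm τ ^ (p-1) * (GG τ - GG τ0)) * mm τ := by ring
          have hfrac : 1 - ε ≤ cc τ / mm τ := by
            rw [le_div_iff₀ hmmτ]
            have hvε : vv τ ≤ ε * mm τ := by nlinarith [hvτ, hηlt, hmmτ]
            have hmmdef : mm τ = cc τ + vv τ := rfl
            nlinarith [hvε, hmmdef]
          have hΦτ : (1-ε)^(p-1) ≤ Φ τ := by
            have hr1 : (1-ε)^(p-1) ≤ (cc τ / mm τ)^(p-1) :=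
              Real.rpow_le_rpow (by linarith [hε.2]) hfrac hp1
            have hr2 : 0 ≤ EE τ := hEE_nn τ hτIβ.1
            show (1-ε)^(p-1) ≤ (cc τ / mm τ) ^ (p-1) + EE τ
            linarith
          linarith [hch]
        have htend : Filter.Tendsto (fun ε : ℝ => (1-ε)^(p-1))
            (nhdsWithin 0 (Ioi 0)) (nhds 1) := by
          have hc : ContinuousAt (fun ε : ℝ => (1-ε)^(p-1)) 0 := by
            apply ContinuousAt.rpow_const
            · exact (continuous_const.sub continuous_id).continuousAt
            · exact Or.inr hp1
          have hcc := hc.tendsto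
          simp only [sub_zero, Real.one_rpow] at hcc
          exact hcc.mono_left nhdsWithin_le_nhds
        apply le_of_tendsto htend
        filter_upwards [Ioo_mem_nhdsGT_of_mem (left_mem_Ico.2 one_pos)] with ε hε
        exact hεbound ε hε
      · push_neg at hZ
        have hccα : 0 < cc α := by
          have hne : a α ≠ 0 := hZ α ⟨le_rfl, hαT⟩
          have hpos := lt_of_le_of_ne (hann α ⟨le_rfl, hαβ⟩) (Ne.symm hne)
          rw [hcc_eq α ⟨le_rfl, hαβ⟩]
          exact div_pos hpos (hbpos α ⟨le_rfl, hαβ⟩)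
        have hch := caseMain α le_rfl hαT hccα
        have hΦα : Φ α = 1 := by
          show (cc α / mm α) ^ (p-1) + EE α = 1
          have hmmα : mm α = cc α := by
            show cc α + vv α = cc α
            rw [hvv0]; ring
          have hEEα : EE α = 0 := by
            show (p-1) * (∫ s in α..α, cc s ^ (p-1) * RQ s) = 0
            rw [intervalIntegral.integral_same, mul_zero]
          rw [hmmα, div_self hccα.ne', Real.one_rpow, hEEα]
          ring
        linarith [hch, hΦα.le]
    -- final algebra
    have hmmT : 0 < mm T := by
      show 0 < cc T + vv T
      linarith [hvv_nn T hTI]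
    set X : ℝ := 1 - EE T with hXd
    have hXpos : 0 < X := by rw [hXd]; linarith
    have hXle : X ≤ (cc T / mm T)^(p-1) := by
      have h7 : 1 ≤ (cc T / mm T) ^ (p-1) + EE T := by
        have hΦTd : Φ T = (cc T / mm T) ^ (p-1) + EE T := rfl
        rw [← hΦTd]
        exact h1ΦT
      rw [hXd]
      linarith only [h7]
    have hq0 : 0 ≤ (1:ℝ)/(p-1) := by positivity
    have hrle : X ^ ((1:ℝ)/(p-1)) ≤ cc T / mm T := by
      have hr1 : X ^ ((1:ℝ)/(p-1)) ≤ ((cc T / mm T)^(p-1)) ^ ((1:ℝ)/(p-1)) :=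
        Real.rpow_le_rpow hXpos.le hXle hq0
      rwa [← Real.rpow_mul (div_nonneg (hcc_nn T) hmmT.le), mul_one_div,
        div_self (by linarith : p - 1 ≠ 0), Real.rpow_one] at hr1
    have hXr : 0 < X ^ ((1:ℝ)/(p-1)) := Real.rpow_pos_of_pos hXpos _
    have h2 : mm T * X ^ ((1:ℝ)/(p-1)) ≤ cc T := by
      rw [le_div_iff₀ hmmT] at hrle
      calc mm T * X ^ ((1:ℝ)/(p-1)) = X ^ ((1:ℝ)/(p-1)) * mm T := mul_comm _ _
        _ ≤ cc T := hrle
    have h3 : mm T ≤ cc T / X ^ ((1:ℝ)/(p-1)) := (le_div_iff₀ hXr).2 h2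
    have h4 : cc T / X ^ ((1:ℝ)/(p-1)) = cc T * X ^ ((1:ℝ)/(1-p)) := by
      rw [show (1:ℝ)/(1-p) = -((1:ℝ)/(p-1)) by
        rw [show (1:ℝ)-p = -(p-1) by ring, div_neg],
        Real.rpow_neg hXpos.le, div_eq_mul_inv]
    rw [h4] at h3
    have hgoal : u T ≤ a T * X ^ ((1:ℝ)/(1-p)) := by
      have hb1 := hbound' T hTI
      have hbcT := hbc_pos T
      have h5 : bc T * mm T ≤ bc T * (cc T * X ^ ((1:ℝ)/(1-p))) :=
        mul_le_mul_of_nonneg_left h3 hbcT.le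
      have hbT := (hbpos T hTI).ne'
      have h6 : bc T * (cc T * X ^ ((1:ℝ)/(1-p))) = a T * X ^ ((1:ℝ)/(1-p)) := by
        rw [hcc_eq T hTI, hbc_eq T hTI]
        field_simp
      exact hb1.trans (h5.trans (le_of_eq h6))
    rw [hXd] at hgoal
    rw [← hE_eq T hTI] at hgoal
    exact hgoal
end

section
/- Let v be nonnegative, continuous, and nondecreasing on [α, β] with v(α) = 0, let B be nonnegative continuous on [α, β], let a be nonnegative nondecreasing on [α, β], and let p > 1. Suppose v is differentiable and v'(t) ≤ B(t)·(a(t) + v(t))^p for all t ∈ [α, β]. Then a(t) + v(t) ≤ a(t)·[1 − (p−1)·∫_α^t B(s)·a(s)^{p−1} ds]^{1/(1−p)} for all t such that (p−1)·∫_α^t B(s)·a(s)^{p−1} ds < 1. -/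
open Real Set intervalIntegral MeasureTheory Filter Topology

noncomputable def moll (f : ℝ → ℝ) (δ s : ℝ) : ℝ := (∫ x in s..(s+δ), f x) / δ

lemma moll_eq (f : ℝ → ℝ) (hf : ∀ x y : ℝ, IntervalIntegrable f volume x y) (δ s : ℝ) :
    moll f δ s = ((∫ u in (0:ℝ)..(s+δ), f u) - ∫ u in (0:ℝ)..s, f u) / δ := by
  unfold moll
  rw [← integral_add_adjacent_intervals (hf 0 s) (hf s (s+δ))]
  ring_nf

lemma moll_mono {f : ℝ → ℝ} (hf : Monotone f) {δ : ℝ} (hδ : 0 < δ) :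
    Monotone (moll f δ) := by
  intro s₁ s₂ h
  unfold moll
  rw [div_le_div_iff_of_pos_right hδ]
  have key : (∫ x in s₁..(s₁+δ), f x) = ∫ x in s₂..(s₂+δ), f (x - (s₂ - s₁)) := by
    rw [intervalIntegral.integral_comp_sub_right f (s₂ - s₁)]
    ring_nf
  rw [key]
  apply intervalIntegral.integral_mono_on (by linarith)
  · exact (hf.comp (fun x y (hxy : x ≤ y) => by dsimp; linarith :
      Monotone fun x => x - (s₂ - s₁))).intervalIntegrable
  · exact hf.intervalIntegrable
  · intro x _
    exact hf (by linarith)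

lemma le_moll {f : ℝ → ℝ} (hf : Monotone f) {δ : ℝ} (hδ : 0 < δ) (s : ℝ) :
    f s ≤ moll f δ s := by
  unfold moll
  rw [le_div_iff₀ hδ]
  calc f s * δ = ∫ _ in s..(s+δ), f s := by
        rw [intervalIntegral.integral_const, smul_eq_mul]; ring
    _ ≤ ∫ x in s..(s+δ), f x := by
        apply intervalIntegral.integral_mono_on (by linarith)
          intervalIntegrable_const hf.intervalIntegrable
        intro x hx; exact hf hx.1

lemma moll_le {f : ℝ → ℝ} (hf : Monotone f) {δ : ℝ} (hδ : 0 < δ) (s : ℝ) :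
    moll f δ s ≤ f (s + δ) := by
  unfold moll
  rw [div_le_iff₀ hδ]
  calc (∫ x in s..(s+δ), f x) ≤ ∫ _ in s..(s+δ), f (s+δ) := by
        apply intervalIntegral.integral_mono_on (by linarith)
          hf.intervalIntegrable intervalIntegrable_const
        intro x hx; exact hf hx.2
    _ = f (s+δ) * δ := by rw [intervalIntegral.integral_const, smul_eq_mul]; ring

lemma moll_continuous {f : ℝ → ℝ} (hf : ∀ x y : ℝ, IntervalIntegrable f volume x y)
    (δ : ℝ) : Continuous (moll f δ) := by
  have h : Continuous fun b => ∫ u in (0:ℝ)..b, f u :=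
    intervalIntegral.continuous_primitive hf 0
  have : Continuous fun s => ((∫ u in (0:ℝ)..(s+δ), f u) - ∫ u in (0:ℝ)..s, f u) / δ :=
    ((h.comp (continuous_id.add continuous_const)).sub h).div_const δ
  exact continuous_congr (fun s => moll_eq f hf δ s) |>.mpr this

lemma moll_hasDerivAt {f : ℝ → ℝ} (hf : Continuous f) (δ s : ℝ) :
    HasDerivAt (moll f δ) ((f (s + δ) - f s) / δ) s := by
  have hint : ∀ x y : ℝ, IntervalIntegrable f volume x y := fun x y =>
    hf.intervalIntegrable x y
  have hP : ∀ x : ℝ, HasDerivAt (fun b => ∫ u in (0:ℝ)..b, f u) (f x) x := fun x =>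
    intervalIntegral.integral_hasDerivAt_right (hint 0 x)
      (hf.stronglyMeasurableAtFilter _ _) hf.continuousAt
  have h1 : HasDerivAt (fun s => ∫ u in (0:ℝ)..(s+δ), f u) (f (s + δ)) s := by
    have := (hP (s + δ)).comp s ((hasDerivAt_id s).add_const δ)
    simpa [Function.comp_def] using this
  have h2 := (h1.sub (hP s)).div_const δ
  have heq : (fun s => ((∫ u in (0:ℝ)..(s+δ), f u) - ∫ u in (0:ℝ)..s, f u) / δ)
      = moll f δ := funext fun s => (moll_eq f hint δ s).symm
  rw [← heq]; exact h2

lemma moll_const_of_ge {f : ℝ → ℝ} {c t δ : ℝ} (hδ : 0 < δ)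
    (hf : ∀ x, t ≤ x → f x = c) {s : ℝ} (hs : t ≤ s) : moll f δ s = c := by
  unfold moll
  rw [intervalIntegral.integral_congr (g := fun _ => c)
    (fun x hx => hf x (le_trans hs (by
      rcases hx with ⟨h1, h2⟩
      simp only [inf_le_iff] at h1
      rcases h1 with h | h <;> [exact h; linarith])))]
  rw [intervalIntegral.integral_const]
  rw [smul_eq_mul, add_sub_cancel_left]
  field_simp
lemma core_lemma (α t p : ℝ) (hαt : α ≤ t) (hp : 1 < p)
    (v v' B A A' : ℝ → ℝ)
    (hv : ContinuousOn v (Icc α t))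
    (hvnn : ∀ s ∈ Icc α t, 0 ≤ v s) (hvα : v α = 0)
    (hB : ContinuousOn B (Icc α t)) (hBnn : ∀ s ∈ Icc α t, 0 ≤ B s)
    (hA : ∀ s, HasDerivAt A (A' s) s) (hA' : ∀ s, 0 ≤ A' s)
    (hApos : ∀ s ∈ Icc α t, 0 < A s)
    (hderiv : ∀ s ∈ Icc α t, HasDerivAt v (v' s) s)
    (hineq : ∀ s ∈ Icc α t, v' s ≤ B s * (A s + v s) ^ p)
    (hsmall : (p - 1) * (∫ s in α..t, B s * A s ^ (p - 1)) < 1) :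
    A t + v t ≤ A t * (1 - (p - 1) * ∫ s in α..t, B s * A s ^ (p - 1)) ^ (1 / (1 - p)) := by
  have hAcont : Continuous A := by
    rw [continuous_iff_continuousAt]; exact fun s => (hA s).continuousAt
  have hgcont : ContinuousOn (fun s => B s * A s ^ (p - 1)) (Icc α t) :=
    hB.mul (hAcont.continuousOn.rpow_const (fun x hx => Or.inl (hApos x hx).ne'))
  have huIcc : uIcc α t = Icc α t := uIcc_of_le hαt
  have hYpos : ∀ s ∈ Icc α t, 0 < A s + v s := fun s hs =>
    lt_of_lt_of_le (hApos s hs) (le_add_of_nonneg_right (hvnn s hs))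
  have hΦd : ∀ s ∈ Ioo α t, HasDerivAt
      (fun s => A s ^ (p - 1) * (A s + v s) ^ (1 - p)
        + (p - 1) * ∫ u in α..s, B u * A u ^ (p - 1))
      ((A' s * (p - 1) * A s ^ (p - 1 - 1) * (A s + v s) ^ (1 - p)
        + A s ^ (p - 1) * ((A' s + v' s) * (1 - p) * (A s + v s) ^ (1 - p - 1)))
        + (p - 1) * (B s * A s ^ (p - 1))) s := by
    intro s hs
    have hsIcc : s ∈ Icc α t := Ioo_subset_Icc_self hs
    have hft : HasDerivAt (fun x => ∫ u in α..x, B u * A u ^ (p - 1))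
        (B s * A s ^ (p - 1)) s := by
      apply intervalIntegral.integral_hasDerivAt_right
      · apply ContinuousOn.intervalIntegrable
        apply hgcont.mono
        rw [uIcc_of_le hs.1.le]
        exact Icc_subset_Icc le_rfl hs.2.le
      · exact ContinuousAt.stronglyMeasurableAtFilter isOpen_Ioo
          (fun x hx => hgcont.continuousAt (Icc_mem_nhds hx.1 hx.2)) s hs
      · exact hgcont.continuousAt (Icc_mem_nhds hs.1 hs.2)
    exact (((hA s).rpow_const (Or.inl (hApos s hsIcc).ne')).mul
      (((hA s).add (hderiv s hsIcc)).rpow_const (Or.inl (hYpos s hsIcc).ne'))).add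
      (hft.const_mul (p - 1))
  -- the key monotone function
  have hmono : MonotoneOn
      (fun s => A s ^ (p - 1) * (A s + v s) ^ (1 - p)
        + (p - 1) * ∫ u in α..s, B u * A u ^ (p - 1)) (Icc α t) := by
    apply monotoneOn_of_deriv_nonneg (convex_Icc α t)
    · apply ContinuousOn.add
      · exact (hAcont.continuousOn.rpow_const (fun x hx => Or.inl (hApos x hx).ne')).mul
          ((hAcont.continuousOn.add hv).rpow_const (fun x hx => Or.inl (hYpos x hx).ne'))
      · apply ContinuousOn.mul continuousOn_const
        have := intervalIntegral.continuousOn_primitive_interval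
          (f := fun u => B u * A u ^ (p - 1)) (a := α) (b := t) (μ := volume) ?_
        · rwa [huIcc] at this
        · rw [huIcc]; exact hgcont.integrableOn_compact isCompact_Icc
    all_goals rw [interior_Icc]
    · exact fun s hs => (hΦd s hs).differentiableAt.differentiableWithinAt
    · intro s hs
      have hsIcc : s ∈ Icc α t := Ioo_subset_Icc_self hs
      rw [(hΦd s hs).deriv]
      have hX : 0 < A s := hApos s hsIcc
      have hY : 0 < A s + v s := hYpos s hsIcc
      have hXY : A s ≤ A s + v s := le_add_of_nonneg_right (hvnn s hsIcc)
      have hW : 0 ≤ A' s := hA' s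
      have hBs : 0 ≤ B s := hBnn s hsIcc
      have hv' : v' s ≤ B s * (A s + v s) ^ p := hineq s hsIcc
      have e1 : A s ^ (p - 1) = A s ^ (p - 1 - 1) * A s := by
        rw [← Real.rpow_add_one hX.ne' (p - 1 - 1)]; norm_num
      have e2 : (A s + v s) ^ (1 - p) = (A s + v s) ^ (1 - p - 1) * (A s + v s) := by
        rw [← Real.rpow_add_one hY.ne' (1 - p - 1)]; ring_nf
      have e3 : (A s + v s) ^ (1 - p - 1) * (A s + v s) ^ p = 1 := by
        rw [← Real.rpow_add hY, show 1 - p - 1 + p = 0 by ring, Real.rpow_zero]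
      have ha1 : 0 < A s ^ (p - 1 - 1) := Real.rpow_pos_of_pos hX _
      have hym : 0 < (A s + v s) ^ (1 - p - 1) := Real.rpow_pos_of_pos hY _
      have h1 : 0 ≤ (p - 1) * A' s * A s ^ (p - 1 - 1) * (A s + v s) ^ (1 - p - 1)
          * ((A s + v s) - A s) := by
        have hyx : (0:ℝ) ≤ (A s + v s) - A s := by linarith
        have hp1 : (0:ℝ) ≤ p - 1 := by linarith
        positivity
      have hymv : (A s + v s) ^ (1 - p - 1) * v' s ≤ B s := by
        calc (A s + v s) ^ (1 - p - 1) * v' s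
            ≤ (A s + v s) ^ (1 - p - 1) * (B s * (A s + v s) ^ p) :=
              mul_le_mul_of_nonneg_left hv' hym.le
          _ = B s * ((A s + v s) ^ (1 - p - 1) * (A s + v s) ^ p) := by ring
          _ = B s := by rw [e3, mul_one]
      have h3 : 0 ≤ (p - 1) * A s ^ (p - 1 - 1) * A s
          * (B s - (A s + v s) ^ (1 - p - 1) * v' s) := by
        apply mul_nonneg
        · have hp1 : (0:ℝ) ≤ p - 1 := by linarith
          positivity
        · linarith
      rw [e1, e2]
      nlinarith [h1, h3]
  -- evaluate monotonicity between α and t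
  have hΦ := hmono (left_mem_Icc.mpr hαt) (right_mem_Icc.mpr hαt) hαt
  simp only [intervalIntegral.integral_same, mul_zero, add_zero, hvα] at hΦ
  have hAα : 0 < A α := hApos α (left_mem_Icc.mpr hαt)
  have hone : A α ^ (p - 1) * A α ^ (1 - p) = 1 := by
    rw [← Real.rpow_add hAα, show p - 1 + (1 - p) = 0 by ring, Real.rpow_zero]
  rw [hone] at hΦ
  set I := ∫ s in α..t, B s * A s ^ (p - 1) with hI
  have hG : 0 < 1 - (p - 1) * I := by linarith
  have htm : t ∈ Icc α t := right_mem_Icc.mpr hαt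
  have hX : 0 < A t := hApos t htm
  have hY : 0 < A t + v t := hYpos t htm
  have hmain : 1 - (p - 1) * I ≤ A t ^ (p - 1) * (A t + v t) ^ (1 - p) := by linarith
  have hq : 0 < A t * (1 - (p - 1) * I) ^ (1 / (1 - p)) :=
    mul_pos hX (Real.rpow_pos_of_pos hG _)
  have h1p : (1:ℝ) - p < 0 := by linarith
  rw [← Real.rpow_le_rpow_iff_of_neg hq hY h1p]
  have h1pne : (1:ℝ) - p ≠ 0 := h1p.ne
  have hpow : (A t * (1 - (p - 1) * I) ^ (1 / (1 - p))) ^ (1 - p)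
      = A t ^ (1 - p) * (1 - (p - 1) * I) := by
    rw [Real.mul_rpow hX.le (Real.rpow_nonneg hG.le _), ← Real.rpow_mul hG.le,
      show 1 / (1 - p) * (1 - p) = 1 by field_simp, Real.rpow_one]
  rw [hpow]
  have hXinv : A t ^ (p - 1) * A t ^ (1 - p) = 1 := by
    rw [← Real.rpow_add hX, show p - 1 + (1 - p) = 0 by ring, Real.rpow_zero]
  calc A t ^ (1 - p) * (1 - (p - 1) * I)
      ≤ A t ^ (1 - p) * (A t ^ (p - 1) * (A t + v t) ^ (1 - p)) :=
        mul_le_mul_of_nonneg_left hmain (Real.rpow_nonneg hX.le _)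
    _ = (A t ^ (p - 1) * A t ^ (1 - p)) * (A t + v t) ^ (1 - p) := by ring
    _ = (A t + v t) ^ (1 - p) := by rw [hXinv, one_mul]

theorem key_diff_lemma
    (α β p : ℝ) (hαβ : α ≤ β) (hp : 1 < p)
    (v v' B a : ℝ → ℝ)
    (hv : ContinuousOn v (Icc α β))
    (hvnn : ∀ t ∈ Icc α β, 0 ≤ v t)
    (hvmono : MonotoneOn v (Icc α β))
    (hvα : v α = 0)
    (hB : ContinuousOn B (Icc α β)) (hBnn : ∀ t ∈ Icc α β, 0 ≤ B t)
    (hann : ∀ t ∈ Icc α β, 0 ≤ a t) (hamono : MonotoneOn a (Icc α β))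
    (hderiv : ∀ t ∈ Icc α β, HasDerivAt v (v' t) t)
    (hineq : ∀ t ∈ Icc α β, v' t ≤ B t * (a t + v t) ^ p) :
    ∀ t ∈ Icc α β,
      (p - 1) * (∫ s in α..t, B s * a s ^ (p - 1)) < 1 →
      a t + v t ≤ a t *
        (1 - (p - 1) * ∫ s in α..t, B s * a s ^ (p - 1)) ^ (1 / (1 - p)) := by
  intro t ht hsmall
  obtain ⟨hαt, htβ⟩ := ht
  have hsub : Icc α t ⊆ Icc α β := Icc_subset_Icc le_rfl htβ
  -- clamped version of a
  have hcmem : ∀ s : ℝ, max α (min s t) ∈ Icc α β := fun s =>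
    ⟨le_max_left _ _, max_le hαβ (le_trans (min_le_right _ _) htβ)⟩
  have hamono2 : Monotone (fun s => a (max α (min s t))) := fun x y h =>
    hamono (hcmem x) (hcmem y) (max_le_max le_rfl (min_le_min h le_rfl))
  have haeq2 : ∀ s ∈ Icc α t, a (max α (min s t)) = a s := fun s hs => by
    rw [min_eq_left hs.2, max_eq_right hs.1]
  have hatop2 : ∀ x : ℝ, t ≤ x → a (max α (min x t)) = a t := fun x hx => by
    rw [min_eq_right hx, max_eq_right hαt]
  have hale2 : ∀ s : ℝ, a (max α (min s t)) ≤ a t := fun s =>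
    hamono (hcmem s) ⟨hαt, htβ⟩ (max_le hαt (min_le_right s t))
  have hann2 : ∀ s : ℝ, 0 ≤ a (max α (min s t)) := fun s => hann _ (hcmem s)
  -- the mollified approximations
  set δ : ℕ → ℝ := fun n => 1/(n+1) with hδdef
  have hδ : ∀ n, 0 < δ n := fun n => by positivity
  have hδ1 : ∀ n, δ n ≤ 1 := fun n => by
    rw [hδdef]; rw [div_le_one (by positivity)]; linarith [Nat.cast_nonneg (α := ℝ) n]
  have hδ0 : Tendsto δ atTop (𝓝 0) := tendsto_one_div_add_atTop_nhds_zero_nat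
  set m1 : ℕ → ℝ → ℝ := fun n => moll (fun s => a (max α (min s t))) (δ n) with hm1def
  set m2 : ℕ → ℝ → ℝ := fun n => moll (m1 n) (δ n) with hm2def
  set AA : ℕ → ℝ → ℝ := fun n s => m2 n s + δ n with hAAdef
  set AA' : ℕ → ℝ → ℝ := fun n s => (m1 n (s + δ n) - m1 n s) / δ n with hAA'def
  have hm1mono : ∀ n, Monotone (m1 n) := fun n => moll_mono hamono2 (hδ n)
  have hm1cont : ∀ n, Continuous (m1 n) := fun n =>
    moll_continuous (fun x y => hamono2.intervalIntegrable) _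
  have hAAderiv : ∀ n s, HasDerivAt (AA n) (AA' n s) s := fun n s =>
    (moll_hasDerivAt (hm1cont n) (δ n) s).add_const (δ n)
  have hAAcont : ∀ n, Continuous (AA n) := fun n => by
    rw [continuous_iff_continuousAt]; exact fun s => (hAAderiv n s).continuousAt
  have hAA'nn : ∀ n s, 0 ≤ AA' n s := fun n s =>
    div_nonneg (sub_nonneg.mpr (hm1mono n (by linarith [hδ n] : s ≤ s + δ n))) (hδ n).le
  have hlow : ∀ n s, a (max α (min s t)) + δ n ≤ AA n s := fun n s =>
    add_le_add_left ((le_moll hamono2 (hδ n) s).trans (le_moll (hm1mono n) (hδ n) s)) _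
  have hup : ∀ n s, AA n s ≤ a (max α (min (s + δ n + δ n) t)) + δ n := fun n s => by
    have h1 : m2 n s ≤ m1 n (s + δ n) := moll_le (hm1mono n) (hδ n) s
    have h2 : m1 n (s + δ n) ≤ a (max α (min (s + δ n + δ n) t)) :=
      moll_le hamono2 (hδ n) (s + δ n)
    exact add_le_add_left (h1.trans h2) _
  have hAAt : ∀ n, AA n t = a t + δ n := fun n => by
    have h1 : ∀ x, t ≤ x → m1 n x = a t := fun x hx =>
      moll_const_of_ge (hδ n) (fun y hy => hatop2 y hy) hx
    have h2 : m2 n t = a t := moll_const_of_ge (hδ n) h1 le_rfl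
    show m2 n t + δ n = a t + δ n
    rw [h2]
  have hAApos : ∀ n s, 0 < AA n s := fun n s =>
    lt_of_lt_of_le (by linarith [hδ n, hann2 s]) (hlow n s)
  -- transfer of differential inequality
  have hineq' : ∀ n, ∀ s ∈ Icc α t, v' s ≤ B s * (AA n s + v s) ^ p := by
    intro n s hs
    refine le_trans (hineq s (hsub hs)) ?_
    apply mul_le_mul_of_nonneg_left _ (hBnn s (hsub hs))
    apply Real.rpow_le_rpow (add_nonneg (hann s (hsub hs)) (hvnn s (hsub hs))) _ (by linarith)
    have h1 : a s ≤ AA n s := by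
      have h2 := hlow n s
      rw [haeq2 s hs] at h2
      linarith [hδ n]
    linarith
  -- integral convergence
  set Iseq : ℕ → ℝ := fun n => ∫ s in α..t, B s * AA n s ^ (p - 1) with hIseqdef
  set Ilim : ℝ := ∫ s in α..t, B s * a s ^ (p - 1) with hIlimdef
  have hcontF : ∀ n, ContinuousOn (fun s => B s * AA n s ^ (p - 1)) (Icc α t) := fun n =>
    (hB.mono hsub).mul ((hAAcont n).continuousOn.rpow_const
      fun x _ => Or.inl (hAApos n x).ne')
  have htendI : Tendsto Iseq atTop (𝓝 Ilim) := by
    apply intervalIntegral.tendsto_integral_filter_of_dominated_convergence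
      (fun s => |B s| * (a t + 1) ^ (p - 1))
    · apply Eventually.of_forall; intro n
      apply ((hcontF n).aestronglyMeasurable measurableSet_Icc).mono_measure
      apply Measure.restrict_mono _ le_rfl
      rw [uIoc_of_le hαt]; exact Ioc_subset_Icc_self
    · apply Eventually.of_forall; intro n
      apply ae_of_all; intro s _
      rw [norm_mul, Real.norm_eq_abs, Real.norm_eq_abs,
        abs_of_nonneg (Real.rpow_nonneg (hAApos n s).le _)]
      apply mul_le_mul_of_nonneg_left _ (abs_nonneg _)
      apply Real.rpow_le_rpow (hAApos n s).le _ (by linarith)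
      calc AA n s ≤ a (max α (min (s + δ n + δ n) t)) + δ n := hup n s
        _ ≤ a t + 1 := add_le_add (hale2 _) (hδ1 n)
    · apply ContinuousOn.intervalIntegrable
      apply ContinuousOn.mul _ continuousOn_const
      exact (hB.mono (by rw [uIcc_of_le hαt]; exact hsub)).abs
    · have hN := (hamono2.countable_not_continuousAt).measure_zero volume
      filter_upwards [measure_eq_zero_iff_ae_notMem.mp hN] with s hs hmem
      have hconts : ContinuousAt (fun s => a (max α (min s t))) s := by simpa using hs
      have hmem' : s ∈ Icc α t := by
        rw [uIoc_of_le hαt] at hmem; exact Ioc_subset_Icc_self hmem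
      have hs2δ : Tendsto (fun n => s + δ n + δ n) atTop (𝓝 s) := by
        have := (tendsto_const_nhds (x := s) (f := atTop (α := ℕ))).add hδ0 |>.add hδ0
        simpa using this
      have htA : Tendsto (fun n => AA n s) atTop (𝓝 (a (max α (min s t)))) := by
        apply tendsto_of_tendsto_of_tendsto_of_le_of_le
          (g := fun n => a (max α (min s t)) + δ n)
          (h := fun n => a (max α (min (s + δ n + δ n) t)) + δ n)
        · simpa using (tendsto_const_nhds (x := a (max α (min s t)))
            (f := atTop (α := ℕ))).add hδ0
        · have := (hconts.tendsto.comp hs2δ).add hδ0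
          simpa using this
        · exact fun n => hlow n s
        · exact fun n => hup n s
      have hfinal : Tendsto (fun n => B s * AA n s ^ (p - 1)) atTop
          (𝓝 (B s * (a (max α (min s t))) ^ (p - 1))) :=
        tendsto_const_nhds.mul (htA.rpow_const (Or.inr (by linarith)))
      rwa [haeq2 s hmem'] at hfinal
  have hfin : Tendsto (fun n => (p - 1) * Iseq n) atTop (𝓝 ((p - 1) * Ilim)) :=
    htendI.const_mul _
  have hsm : ∀ᶠ n in atTop, (p - 1) * Iseq n < 1 := hfin.eventually_lt_const hsmall
  have hG : 0 < 1 - (p - 1) * Ilim := by linarith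
  have hRt : Tendsto (fun n => AA n t * (1 - (p - 1) * Iseq n) ^ (1/(1-p))) atTop
      (𝓝 (a t * (1 - (p - 1) * Ilim) ^ (1/(1-p)))) := by
    apply Tendsto.mul
    · have he : (fun n => AA n t) = fun n => a t + δ n := funext hAAt
      rw [he]
      simpa using (tendsto_const_nhds (x := a t) (f := atTop (α := ℕ))).add hδ0
    · exact (tendsto_const_nhds.sub hfin).rpow_const (Or.inl hG.ne')
  apply ge_of_tendsto hRt
  filter_upwards [hsm] with n hn
  calc a t + v t ≤ AA n t + v t := by
        rw [hAAt n]; linarith [hδ n]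
    _ ≤ AA n t * (1 - (p - 1) * Iseq n) ^ (1/(1-p)) :=
        core_lemma α t p hαt hp v v' B (AA n) (AA' n)
          (hv.mono hsub) (fun s hs => hvnn s (hsub hs)) hvα
          (hB.mono hsub) (fun s hs => hBnn s (hsub hs))
          (hAAderiv n) (hAA'nn n) (fun s _ => hAApos n s)
          (fun s hs => hderiv s (hsub hs)) (hineq' n) hn
end
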